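/- arXiv:2208.03818 — 18 statements merged into one kernel-verified Lean document; each statement's English description precedes it below -/
import Mathlib

section
/- A metric arc admits a Lipschitz mixer if and only if it has bounded turning. That is, for a metric space X homeomorphic to the closed interval [0,1], there exist L ≥ 0 and an L-Lipschitz map σ : X³ → X with σ(a,a,b) = σ(a,b,a) = σ(b,a,a) = a for all a, b ∈ X if and only if there exists a constant C such that any two points a, b ∈ X are contained in some compact connected set E ⊆ X with diam E ≤ C·d(a,b). -/
open Set

noncomputable def medR (x y z : ℝ) : ℝ := max (min y z) (min x (max y z))

lemma medR_comm23 (x y z : ℝ) : medR x y z = medR x z y := by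
  simp [medR, min_comm, max_comm]

lemma medR_comm12 (x y z : ℝ) : medR x y z = medR y x z := by
  unfold medR
  rcases le_total x y with h1|h1 <;> rcases le_total y z with h2|h2 <;>
    rcases le_total x z with h3|h3 <;>
    simp_all [min_def, max_def] <;> linarith

lemma medR_aab (x y : ℝ) : medR x x y = x := by
  simp [medR, min_eq_left, le_max_left, max_eq_right, min_le_left]

lemma medR_baa (x y : ℝ) : medR y x x = x := by
  simp [medR]

lemma medR_aba (x y : ℝ) : medR x y x = x := by
  rw [medR_comm23]; exact medR_aab x y

lemma clamp_aux (lo hi x x' : ℝ) (hxx : x ≤ x')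
    (hne : max lo (min x hi) ≠ max lo (min x' hi)) :
    x ≤ max lo (min x hi) ∧ max lo (min x' hi) ≤ x' ∧
      max lo (min x hi) ≤ max lo (min x' hi) := by
  have hmm : max lo (min x hi) ≤ max lo (min x' hi) :=
    max_le_max le_rfl (min_le_min hxx le_rfl)
  have hlt : max lo (min x hi) < max lo (min x' hi) := lt_of_le_of_ne hmm hne
  have hlo : lo < max lo (min x' hi) := lt_of_le_of_lt (le_max_left _ _) hlt
  have hm' : max lo (min x' hi) = min x' hi := by
    rcases le_total (min x' hi) lo with h|h
    · exact absurd (max_eq_left h) (by intro e; rw [e] at hlo; exact lt_irrefl _ hlo)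
    · exact max_eq_right h
  have h1 : max lo (min x' hi) ≤ x' := by rw [hm']; exact min_le_left _ _
  have h2 : x ≤ max lo (min x hi) := by
    rcases le_total x hi with h|h
    · rw [min_eq_left h]; exact le_max_right _ _
    · exfalso
      have : max lo (min x hi) < hi :=
        lt_of_lt_of_le hlt (by rw [hm']; exact min_le_right x' hi)
      rw [min_eq_right h] at this
      exact absurd (le_max_right lo hi) (not_le.2 this)
  exact ⟨h2, h1, hmm⟩

lemma medR_key (x x' b c : ℝ) :
    medR x b c = medR x' b c ∨
      (medR x b c ∈ uIcc x x' ∧ medR x' b c ∈ uIcc x x') := by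
  by_cases h : medR x b c = medR x' b c
  · exact Or.inl h
  right
  unfold medR at *
  rcases le_total x x' with hxx | hxx
  · obtain ⟨h2, h1, hmm⟩ := clamp_aux (min b c) (max b c) x x' hxx h
    exact ⟨Set.mem_uIcc.2 (Or.inl ⟨h2, hmm.trans h1⟩),
      Set.mem_uIcc.2 (Or.inl ⟨h2.trans hmm, h1⟩)⟩
  · obtain ⟨h2, h1, hmm⟩ := clamp_aux (min b c) (max b c) x' x hxx (Ne.symm h)
    exact ⟨Set.mem_uIcc.2 (Or.inr ⟨h2.trans hmm, h1⟩),
      Set.mem_uIcc.2 (Or.inr ⟨h2, hmm.trans h1⟩)⟩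

lemma medR_mem_Icc {x y z : ℝ} (hx : x ∈ Icc (0:ℝ) 1) (hy : y ∈ Icc (0:ℝ) 1)
    (hz : z ∈ Icc (0:ℝ) 1) : medR x y z ∈ Icc (0:ℝ) 1 := by
  obtain ⟨hx0, hx1⟩ := hx; obtain ⟨hy0, hy1⟩ := hy; obtain ⟨hz0, hz1⟩ := hz
  constructor
  · exact le_trans (le_min hy0 hz0) (le_max_left _ _)
  · exact max_le (min_le_left _ _ |>.trans hy1) ((min_le_left _ _).trans hx1)

lemma preconn_uIcc {s : Set ℝ} (h : IsPreconnected s) {a b : ℝ}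
    (ha : a ∈ s) (hb : b ∈ s) : uIcc a b ⊆ s := by
  rcases le_total a b with hab|hab
  · rw [uIcc_of_le hab]; exact h.Icc_subset ha hb
  · rw [uIcc_of_ge hab]; exact h.Icc_subset hb ha

/-- A metric arc (a metric space homeomorphic to `[0,1]`) admits a
Lipschitz mixer if and only if it has bounded turning. The Lipschitz condition is with
respect to the sum metric on `X³`. -/
theorem metric_arc_lipschitz_mixer_iff_bounded_turning
    (X : Type*) [MetricSpace X] (hX : Nonempty (X ≃ₜ Set.Icc (0 : ℝ) 1)) :
    (∃ L : ℝ, 0 ≤ L ∧ ∃ σ : X → X → X → X,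
      (∀ a b : X, σ a a b = a ∧ σ a b a = a ∧ σ b a a = a) ∧
      (∀ a b c a' b' c' : X,
        dist (σ a b c) (σ a' b' c') ≤ L * (dist a a' + dist b b' + dist c c'))) ↔
    (∃ C : ℝ, ∀ a b : X, ∃ E : Set X, a ∈ E ∧ b ∈ E ∧ IsCompact E ∧ IsConnected E ∧
      Metric.diam E ≤ C * dist a b) := by
  obtain ⟨h⟩ := hX
  set g : X → ℝ := fun x => ((h x : Set.Icc (0:ℝ) 1) : ℝ) with hg
  have hgc : Continuous g := continuous_subtype_val.comp h.continuous
  have hginj : Function.Injective g :=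
    Subtype.val_injective.comp h.injective
  have hgmem : ∀ x, g x ∈ Icc (0:ℝ) 1 := fun x => (h x).2
  have hgpre : ∀ {E : Set X}, IsPreconnected E → IsPreconnected (g '' E) :=
    fun hE => hE.image g hgc.continuousOn
  constructor
  · rintro ⟨L, hL, σ, habs, hlip⟩
    refine ⟨2 * L, fun a b => ?_⟩
    set S : Set (Set.Icc (0:ℝ) 1) := Subtype.val ⁻¹' (uIcc (g a) (g b)) with hS
    have hSval : Subtype.val '' S = uIcc (g a) (g b) := by
      rw [hS, Subtype.image_preimage_coe]
      refine inter_eq_self_of_subset_right ?_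
      intro t ht
      have : uIcc (g a) (g b) ⊆ uIcc (0:ℝ) 1 :=
        uIcc_subset_uIcc (by rw [uIcc_of_le zero_le_one]; exact hgmem a)
          (by rw [uIcc_of_le zero_le_one]; exact hgmem b)
      have := this ht
      rwa [uIcc_of_le zero_le_one] at this
    have hScomp : IsCompact S :=
      (IsClosed.preimage continuous_subtype_val
        (by rw [Set.uIcc]; exact isClosed_Icc)).isCompact
    have hSconn : IsPreconnected S := by
      rw [← Topology.IsInducing.subtypeVal.isPreconnected_image, hSval]
      exact isPreconnected_uIcc
    have haS : h a ∈ S := by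
      show ((h a : Set.Icc (0:ℝ) 1) : ℝ) ∈ uIcc (g a) (g b)
      exact left_mem_uIcc
    have hbS : h b ∈ S := by
      show ((h b : Set.Icc (0:ℝ) 1) : ℝ) ∈ uIcc (g a) (g b)
      exact right_mem_uIcc
    set E : Set X := h.symm '' S with hE
    have haE : a ∈ E := ⟨h a, haS, h.symm_apply_apply a⟩
    have hbE : b ∈ E := ⟨h b, hbS, h.symm_apply_apply b⟩
    have hEcomp : IsCompact E := hScomp.image h.symm.continuous
    have hSconn' : IsConnected S := ⟨⟨h a, haS⟩, hSconn⟩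
    have hEconn : IsConnected E :=
      hSconn'.image _ h.symm.continuous.continuousOn
    have hgE : ∀ x ∈ E, g x ∈ uIcc (g a) (g b) := by
      rintro x ⟨s, hs, rfl⟩
      have : g (h.symm s) = (s : ℝ) := by
        rw [hg]; simp [h.apply_symm_apply]
      rw [this]; exact hs
    -- every point of E is of the form σ a b t
    have hcover : ∀ x ∈ E, ∃ t ∈ E, σ a b t = x := by
      intro x hx
      have hfc : Continuous (fun t => σ a b t) := by
        refine (LipschitzWith.of_dist_le_mul (K := L.toNNReal)
          (f := fun t => σ a b t) ?_).continuous
        intro t t'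
        have := hlip a b t a b t'
        simp only [dist_self] at this
        calc dist (σ a b t) (σ a b t') ≤ L * (0 + 0 + dist t t') := this
          _ = L.toNNReal * dist t t' := by
              rw [Real.coe_toNNReal L hL]; ring
      set F : Set X := (fun t => σ a b t) '' E with hF
      have haF : a ∈ F := ⟨a, haE, (habs a b).2.1⟩
      have hbF : b ∈ F := ⟨b, hbE, (habs b a).2.2⟩
      have hFpre : IsPreconnected (g '' F) :=
        hgpre ((hEconn.image _ hfc.continuousOn).isPreconnected)
      have hsub : uIcc (g a) (g b) ⊆ g '' F :=
        preconn_uIcc hFpre ⟨a, haF, rfl⟩ ⟨b, hbF, rfl⟩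
      obtain ⟨y, hyF, hy⟩ := hsub (hgE x hx)
      obtain ⟨t, htE, ht⟩ := hyF
      exact ⟨t, htE, by simpa using ht.trans (hginj hy)⟩
    have hdla : ∀ x ∈ E, dist x a ≤ L * dist a b := by
      intro x hx
      obtain ⟨t, htE, ht⟩ := hcover x hx
      have hax : a = σ a a t := ((habs a t).1).symm
      calc dist x a = dist (σ a b t) (σ a a t) := by rw [ht, ← hax]
        _ ≤ L * (dist a a + dist b a + dist t t) := hlip a b t a a t
        _ = L * dist a b := by rw [dist_self, dist_self, dist_comm b a]; ring
    refine ⟨E, haE, hbE, hEcomp, hEconn, ?_⟩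
    refine Metric.diam_le_of_forall_dist_le (by positivity) ?_
    intro x hx y hy
    calc dist x y ≤ dist x a + dist a y := dist_triangle x a y
      _ = dist x a + dist y a := by rw [dist_comm a y]
      _ ≤ L * dist a b + L * dist a b := add_le_add (hdla x hx) (hdla y hy)
      _ = 2 * L * dist a b := by ring
  · rintro ⟨C, hC⟩
    set L : ℝ := max C 0 with hLdef
    refine ⟨L, le_max_right _ _, fun a b c =>
      h.symm ⟨medR (g a) (g b) (g c),
        medR_mem_Icc (hgmem a) (hgmem b) (hgmem c)⟩, ?_, ?_⟩
    · have hgs : ∀ a b c, g (h.symm ⟨medR (g a) (g b) (g c),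
          medR_mem_Icc (hgmem a) (hgmem b) (hgmem c)⟩) = medR (g a) (g b) (g c) := by
        intro a b c; exact congrArg Subtype.val (h.apply_symm_apply _)
      intro a b
      refine ⟨hginj ?_, hginj ?_, hginj ?_⟩ <;> beta_reduce
      · rw [hgs]; exact medR_aab _ _
      · rw [hgs]; exact medR_aba _ _
      · rw [hgs]; exact medR_baa _ _
    · have hgs : ∀ a b c, g (h.symm ⟨medR (g a) (g b) (g c),
          medR_mem_Icc (hgmem a) (hgmem b) (hgmem c)⟩) = medR (g a) (g b) (g c) := by
        intro a b c; exact congrArg Subtype.val (h.apply_symm_apply _)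
      -- key step lemma
      have key : ∀ p q w w' : X,
          (g p = g q ∨ (g p ∈ uIcc (g w) (g w') ∧ g q ∈ uIcc (g w) (g w'))) →
          dist p q ≤ L * dist w w' := by
        rintro p q w w' (heq | ⟨hp, hq⟩)
        · rw [hginj heq, dist_self]
          positivity
        · obtain ⟨E, hwE, hw'E, hEcomp, hEconn, hdiam⟩ := hC w w'
          have hsub : uIcc (g w) (g w') ⊆ g '' E :=
            preconn_uIcc (hgpre hEconn.isPreconnected) ⟨w, hwE, rfl⟩ ⟨w', hw'E, rfl⟩
          obtain ⟨p', hp'E, hp'⟩ := hsub hp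
          obtain ⟨q', hq'E, hq'⟩ := hsub hq
          rw [← hginj hp', ← hginj hq']
          calc dist p' q' ≤ Metric.diam E :=
                Metric.dist_le_diam_of_mem hEcomp.isBounded hp'E hq'E
            _ ≤ C * dist w w' := hdiam
            _ ≤ L * dist w w' :=
                mul_le_mul_of_nonneg_right (le_max_left _ _) dist_nonneg
      intro a b c a' b' c'
      beta_reduce
      set p1 := h.symm (⟨medR (g a) (g b) (g c), medR_mem_Icc (hgmem a) (hgmem b) (hgmem c)⟩ : Set.Icc (0:ℝ) 1) with hp1
      set p2 := h.symm (⟨medR (g a') (g b) (g c), medR_mem_Icc (hgmem a') (hgmem b) (hgmem c)⟩ : Set.Icc (0:ℝ) 1) with hp2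
      set p3 := h.symm (⟨medR (g a') (g b') (g c), medR_mem_Icc (hgmem a') (hgmem b') (hgmem c)⟩ : Set.Icc (0:ℝ) 1) with hp3
      set p4 := h.symm (⟨medR (g a') (g b') (g c'), medR_mem_Icc (hgmem a') (hgmem b') (hgmem c')⟩ : Set.Icc (0:ℝ) 1) with hp4
      have d1 : dist p1 p2 ≤ L * dist a a' := by
        refine key p1 p2 a a' ?_
        rw [hp1, hp2, hgs, hgs]
        exact medR_key (g a) (g a') (g b) (g c)
      have d2 : dist p2 p3 ≤ L * dist b b' := by
        refine key p2 p3 b b' ?_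
        rw [hp2, hp3, hgs, hgs, medR_comm12 (g a') (g b) (g c),
          medR_comm12 (g a') (g b') (g c)]
        exact medR_key (g b) (g b') (g a') (g c)
      have d3 : dist p3 p4 ≤ L * dist c c' := by
        refine key p3 p4 c c' ?_
        rw [hp3, hp4, hgs, hgs, medR_comm23 (g a') (g b') (g c),
          medR_comm12 (g a') (g c) (g b'), medR_comm23 (g a') (g b') (g c'),
          medR_comm12 (g a') (g c') (g b')]
        exact medR_key (g c) (g c') (g a') (g b')
      calc dist p1 p4 ≤ dist p1 p2 + dist p2 p3 + dist p3 p4 :=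
            dist_triangle4 p1 p2 p3 p4
        _ ≤ L * dist a a' + L * dist b b' + L * dist c c' := by
            exact add_le_add (add_le_add d1 d2) d3
        _ = L * (dist a a' + dist b b' + dist c c') := by ring
end

section
/- Suppose that f : ℝ → ℝ is a continuous even function (f(−x) = f(x) for all x) which is strictly increasing on (0,∞). Let Γ = {(x, f(x)) : x ∈ ℝ} ⊆ ℝ² be its graph, equipped with the Euclidean metric of ℝ². Then for every integer n ≥ 2, Γ admits a Lipschitz retraction Γ(n) → Γ (a map r from nonempty subsets of Γ with at most n elements to Γ such that r({a}) = a for every a ∈ Γ and d(r(A), r(B)) ≤ L·d_H(A,B) for some constant L) and, in particular, Γ admits a Lipschitz n-mean. -/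
/-!
Write `m(A)` for the least `|x|` over the points `(x, f x)` of `A` and `M(A)` for the largest
abscissa in `A`. Infima and suprema of a 1-Lipschitz function over finite sets are 1-Lipschitz
for the Hausdorff distance, hence so is `ξ(A) = min (m(A), M(A))`. Moreover `|ξ(A)| = m(A)`:
`ξ(A)` is `m(A)` carrying the sign of the half-plane that `A` meets. As `f` is even and
increasing on `[0, ∞)`, `f (ξ(A)) = f (m(A))` is the least ordinate in `A`, again 1-Lipschitz.
So `A ↦ (ξ(A), f (ξ(A)))` is a 2-Lipschitz retraction, and `x ↦ r (range x)` is an `n`-mean.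
-/

open Bornology Metric Set

section Hausdorff

variable {X : Type*} [PseudoMetricSpace X]

theorem exists_dist_le_hausdorffDist {S T : Set X} (hS : IsBounded S) (hT : IsCompact T)
    (hT₀ : T.Nonempty) {p : X} (hp : p ∈ S) : ∃ q ∈ T, dist p q ≤ hausdorffDist S T := by
  obtain ⟨q, hq, hpq⟩ := hT.exists_infDist_eq_dist hT₀ p
  exact ⟨q, hq, hpq ▸ infDist_le_hausdorffDist_of_mem hp
    (hausdorffEDist_ne_top_of_nonempty_of_bounded ⟨p, hp⟩ hT₀ hS hT.isBounded)⟩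

variable {g : X → ℝ} {K : NNReal} {S T : Set X}

theorem sInf_image_le_sInf_image_add_hausdorffDist (hg : LipschitzWith K g) (hS : IsCompact S)
    (hT : IsCompact T) (hS₀ : S.Nonempty) (hT₀ : T.Nonempty) :
    sInf (g '' S) ≤ sInf (g '' T) + K * hausdorffDist S T := by
  obtain ⟨q, hq, hqT⟩ := (hT.image hg.continuous).sInf_mem (hT₀.image g)
  obtain ⟨p, hp, hqp⟩ := exists_dist_le_hausdorffDist hT.isBounded hS hS₀ hq
  calc sInf (g '' S) ≤ g p := csInf_le (hS.image hg.continuous).bddBelow (mem_image_of_mem g hp)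
    _ ≤ g q + K * dist q p := by
      linarith [abs_sub_le_iff.1 (hg.dist_le_mul q p : |g q - g p| ≤ _)]
    _ ≤ sInf (g '' T) + K * hausdorffDist S T := by
      rw [hqT, hausdorffDist_comm]; gcongr

theorem abs_sInf_image_sub_sInf_image_le (hg : LipschitzWith K g) (hS : IsCompact S)
    (hT : IsCompact T) (hS₀ : S.Nonempty) (hT₀ : T.Nonempty) :
    |sInf (g '' S) - sInf (g '' T)| ≤ K * hausdorffDist S T := by
  have hST := sInf_image_le_sInf_image_add_hausdorffDist hg hS hT hS₀ hT₀
  have hTS := sInf_image_le_sInf_image_add_hausdorffDist hg hT hS hT₀ hS₀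
  rw [hausdorffDist_comm] at hTS
  exact abs_sub_le_iff.2 ⟨by linarith, by linarith⟩

theorem abs_sSup_image_sub_sSup_image_le (hg : LipschitzWith K g) (hS : IsCompact S)
    (hT : IsCompact T) (hS₀ : S.Nonempty) (hT₀ : T.Nonempty) :
    |sSup (g '' S) - sSup (g '' T)| ≤ K * hausdorffDist S T := by
  have hsup : ∀ U : Set X, sSup (g '' U) = -sInf ((-g) '' U) := fun U => by
    rw [show (-g) '' U = -(g '' U) by ext; simp [neg_eq_iff_eq_neg], Real.sInf_neg, neg_neg]
  rw [hsup, hsup, neg_sub_neg, abs_sub_comm]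
  exact abs_sInf_image_sub_sInf_image_le hg.neg hS hT hS₀ hT₀

theorem hausdorffDist_range_le_sum {ι : Type*} [Fintype ι] (x y : ι → X) :
    hausdorffDist (range x) (range y) ≤ ∑ k, dist (x k) (y k) := by
  have hle : ∀ k, dist (x k) (y k) ≤ ∑ k, dist (x k) (y k) := fun k =>
    Finset.single_le_sum (fun _ _ => dist_nonneg) (Finset.mem_univ k)
  refine hausdorffDist_le_of_infDist (Finset.sum_nonneg fun _ _ => dist_nonneg) ?_ ?_
  · rintro _ ⟨k, rfl⟩
    exact (infDist_le_dist_of_mem (mem_range_self k)).trans (hle k)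
  · rintro _ ⟨k, rfl⟩
    exact (infDist_le_dist_of_mem (mem_range_self k)).trans (dist_comm (x k) (y k) ▸ hle k)

abbrev SubsetsCardLE (X : Type*) (n : ℕ) : Type _ :=
  {A : Set X // A.Nonempty ∧ A.Finite ∧ A.ncard ≤ n}

theorem exists_lipschitz_mean_of_retraction {n : ℕ} (hn : n ≠ 0) {L : ℝ}
    (r : SubsetsCardLE X n → X)
    (hr_singleton : ∀ (a : X) (A : SubsetsCardLE X n), A.1 = {a} → r A = a)
    (hr_lip : ∀ A B : SubsetsCardLE X n, dist (r A) (r B) ≤ L * hausdorffDist A.1 B.1)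
    (hL : 0 ≤ L) :
    ∃ μ : (Fin n → X) → X,
      (∀ (x : Fin n → X) (π : Equiv.Perm (Fin n)), μ (x ∘ π) = μ x) ∧
      (∀ a : X, μ (fun _ => a) = a) ∧
      (∀ x y : Fin n → X, dist (μ x) (μ y) ≤ L * ∑ k, dist (x k) (y k)) := by
  have : Nonempty (Fin n) := ⟨⟨0, Nat.pos_of_ne_zero hn⟩⟩
  let rangeSubset (x : Fin n → X) : SubsetsCardLE X n :=
    ⟨range x, range_nonempty x, finite_range x, by
      simpa [← image_univ] using ncard_image_le (f := x) (s := univ)⟩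
  refine ⟨fun x => r (rangeSubset x), fun x π => ?_, fun a => hr_singleton a _ range_const,
    fun x y => (hr_lip _ _).trans (mul_le_mul_of_nonneg_left (hausdorffDist_range_le_sum x y) hL)⟩
  exact congrArg r (Subtype.ext (π.surjective.range_comp x))

end Hausdorff

theorem monotoneOn_Ici_of_strictMonoOn_Ioi {f : ℝ → ℝ} {a : ℝ} (hf : StrictMonoOn f (Ioi a))
    (hfa : ContinuousWithinAt f (Ioi a) a) : MonotoneOn f (Ici a) := by
  intro x hx y hy hxy
  rcases eq_or_lt_of_le (mem_Ici.1 hx) with rfl | hax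
  · rcases eq_or_lt_of_le hxy with rfl | hxy
    · rfl
    refine le_of_tendsto hfa ?_
    filter_upwards [Ioo_mem_nhdsGT hxy] with t ht
    exact (hf ht.1 hxy ht.2).le
  · exact hf.monotoneOn hax (hax.trans_le hxy) hxy

noncomputable section

def graph (f : ℝ → ℝ) : Set (EuclideanSpace ℝ (Fin 2)) := {p | p 1 = f (p 0)}

namespace graph

variable {f : ℝ → ℝ}

def abscissa (p : graph f) : ℝ := (p : EuclideanSpace ℝ (Fin 2)) 0

def ordinate (p : graph f) : ℝ := (p : EuclideanSpace ℝ (Fin 2)) 1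

theorem ordinate_eq (p : graph f) : ordinate p = f (abscissa p) := p.2

theorem lipschitzWith_coord (i : Fin 2) :
    LipschitzWith 1 fun p : graph f => (p : EuclideanSpace ℝ (Fin 2)) i :=
  LipschitzWith.of_dist_le_mul fun p q => by
    rw [NNReal.coe_one, one_mul, Subtype.dist_eq]
    exact PiLp.dist_apply_le _ _ i

theorem lipschitzWith_abscissa : LipschitzWith 1 (abscissa (f := f)) := lipschitzWith_coord 0

theorem lipschitzWith_ordinate : LipschitzWith 1 (ordinate (f := f)) := lipschitzWith_coord 1

theorem lipschitzWith_abs_abscissa : LipschitzWith 1 fun p : graph f => |abscissa p| := by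
  simpa [Function.comp_def] using lipschitzWith_one_norm.comp lipschitzWith_abscissa

def point (f : ℝ → ℝ) (t : ℝ) : graph f := ⟨!₂[t, f t], by simp [graph]⟩

theorem point_abscissa (p : graph f) : point f (abscissa p) = p := by
  apply Subtype.ext
  ext i
  fin_cases i
  · rfl
  · exact (ordinate_eq p).symm

theorem dist_point_le (s t : ℝ) : dist (point f s) (point f t) ≤ |s - t| + |f s - f t| := by
  rw [Subtype.dist_eq, EuclideanSpace.dist_eq, Fin.sum_univ_two]
  simp only [point, Real.dist_eq, PiLp.toLp_apply, Matrix.cons_val_zero, Matrix.cons_val_one]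
  refine Real.sqrt_le_iff.2 ⟨by positivity, ?_⟩
  nlinarith [abs_nonneg (s - t), abs_nonneg (f s - f t), sq_abs (s - t), sq_abs (f s - f t)]

def absMin (A : Set (graph f)) : ℝ := sInf ((fun p => |abscissa p|) '' A)

def maxAbscissa (A : Set (graph f)) : ℝ := sSup (abscissa '' A)

def retractAbscissa (A : Set (graph f)) : ℝ := min (absMin A) (maxAbscissa A)

def retraction (A : Set (graph f)) : graph f := point f (retractAbscissa A)

theorem retraction_singleton (p : graph f) : retraction {p} = p := by
  simp only [retraction, retractAbscissa, absMin, maxAbscissa, image_singleton,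
    csInf_singleton, csSup_singleton]
  rw [min_eq_right (le_abs_self _), point_abscissa]

theorem absMin_nonneg (A : Set (graph f)) : 0 ≤ absMin A :=
  Real.sInf_nonneg <| forall_mem_image.2 fun _ _ => abs_nonneg _

variable {A B : Set (graph f)}

theorem abs_retractAbscissa (hA : A.Finite) (hA₀ : A.Nonempty) :
    |retractAbscissa A| = absMin A := by
  obtain ⟨p, hp, hpA⟩ := (hA.image abscissa).isCompact.sSup_mem (hA₀.image _)
  have hle : absMin A ≤ |maxAbscissa A| :=
    csInf_le (hA.image _).bddBelow ⟨p, hp, congrArg abs hpA⟩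
  have hge : -maxAbscissa A ≤ absMin A :=
    le_csInf (hA₀.image _) fun _ ⟨q, hq, hq'⟩ => hq' ▸ (neg_le_neg
      (le_csSup (hA.image _).bddAbove (mem_image_of_mem _ hq))).trans (neg_le_abs _)
  rw [retractAbscissa]
  rcases abs_cases (maxAbscissa A) with ⟨h, _⟩ | ⟨h, _⟩ <;> rw [h] at hle
  · rw [min_eq_left hle, abs_of_nonneg (absMin_nonneg A)]
  · rw [le_antisymm hle hge, min_eq_right (by linarith), abs_of_neg ‹_›]

theorem abs_retractAbscissa_sub_le (hA : A.Finite) (hB : B.Finite) (hA₀ : A.Nonempty)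
    (hB₀ : B.Nonempty) : |retractAbscissa A - retractAbscissa B| ≤ hausdorffDist A B := by
  refine (abs_min_sub_min_le_max _ _ _ _).trans (max_le ?_ ?_)
  · simpa only [absMin, NNReal.coe_one, one_mul] using
      abs_sInf_image_sub_sInf_image_le lipschitzWith_abs_abscissa
      hA.isCompact hB.isCompact hA₀ hB₀
  · simpa only [maxAbscissa, NNReal.coe_one, one_mul] using
      abs_sSup_image_sub_sSup_image_le lipschitzWith_abscissa
      hA.isCompact hB.isCompact hA₀ hB₀

theorem apply_retractAbscissa (hf_even : ∀ x, f (-x) = f x) (hf_mono : MonotoneOn f (Ici 0))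
    (hA : A.Finite) (hA₀ : A.Nonempty) : f (retractAbscissa A) = sInf (ordinate '' A) := by
  have hf_abs : ∀ x, f |x| = f x := fun x => by
    rcases abs_choice x with h | h <;> simp only [h, hf_even]
  rw [← hf_abs, abs_retractAbscissa hA hA₀]
  obtain ⟨p, hp, hpA⟩ := (hA.image fun p => |abscissa p|).isCompact.sInf_mem (hA₀.image _)
  refine (IsLeast.csInf_eq (s := ordinate '' A) ⟨⟨p, hp, ?_⟩, ?_⟩).symm
  · rw [ordinate_eq, ← hf_abs, absMin, ← hpA]
  · rintro _ ⟨q, hq, rfl⟩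
    rw [ordinate_eq, ← hf_abs (abscissa q)]
    exact hf_mono (absMin_nonneg A) (abs_nonneg (abscissa q))
      (csInf_le (hA.image _).bddBelow (mem_image_of_mem _ hq))

theorem dist_retraction_le (hf_even : ∀ x, f (-x) = f x) (hf_mono : MonotoneOn f (Ici 0))
    (hA : A.Finite) (hB : B.Finite) (hA₀ : A.Nonempty) (hB₀ : B.Nonempty) :
    dist (retraction A) (retraction B) ≤ 2 * hausdorffDist A B := by
  have hordinate : |sInf (ordinate '' A) - sInf (ordinate '' B)| ≤ hausdorffDist A B := by
    simpa only [NNReal.coe_one, one_mul] using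
      abs_sInf_image_sub_sInf_image_le lipschitzWith_ordinate hA.isCompact hB.isCompact hA₀ hB₀
  calc dist (retraction A) (retraction B)
      ≤ |retractAbscissa A - retractAbscissa B|
        + |f (retractAbscissa A) - f (retractAbscissa B)| := dist_point_le _ _
    _ ≤ hausdorffDist A B + hausdorffDist A B := by
      rw [apply_retractAbscissa hf_even hf_mono hA hA₀,
        apply_retractAbscissa hf_even hf_mono hB hB₀]
      exact add_le_add (abs_retractAbscissa_sub_le hA hB hA₀ hB₀) hordinate
    _ = 2 * hausdorffDist A B := by ring

end graph

end

/-- If `f : ℝ → ℝ` is continuous, even, and strictly increasing on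
`(0,∞)`, then its graph `Γ ⊆ ℝ²` (with the Euclidean metric) admits, for every `n ≥ 2`,
a Lipschitz retraction `Γ(n) → Γ` (where `Γ(n)` is the space of nonempty subsets of `Γ`
with at most `n` elements, with the Hausdorff distance), and in particular a Lipschitz
`n`-mean. -/
theorem graph_of_even_function_lipschitz_retraction_and_mean
    (f : ℝ → ℝ) (hf_cont : Continuous f) (hf_even : ∀ x : ℝ, f (-x) = f x)
    (hf_mono : StrictMonoOn f (Set.Ioi (0 : ℝ)))
    (Γ : Set (EuclideanSpace ℝ (Fin 2)))
    (hΓ : Γ = {p : EuclideanSpace ℝ (Fin 2) | p 1 = f (p 0)})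
    (n : ℕ) (hn : 2 ≤ n) :
    (∃ L : ℝ, 0 ≤ L ∧
      ∃ r : {A : Set Γ // A.Nonempty ∧ A.Finite ∧ A.ncard ≤ n} → Γ,
        (∀ (a : Γ) (A : {A : Set Γ // A.Nonempty ∧ A.Finite ∧ A.ncard ≤ n}),
          A.1 = {a} → r A = a) ∧
        (∀ A B : {A : Set Γ // A.Nonempty ∧ A.Finite ∧ A.ncard ≤ n},
          dist (r A) (r B) ≤ L * Metric.hausdorffDist A.1 B.1)) ∧
    (∃ L : ℝ, 0 ≤ L ∧
      ∃ μ : (Fin n → Γ) → Γ,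
        (∀ (x : Fin n → Γ) (π : Equiv.Perm (Fin n)), μ (x ∘ π) = μ x) ∧
        (∀ a : Γ, μ (fun _ => a) = a) ∧
        (∀ x y : Fin n → Γ, dist (μ x) (μ y) ≤ L * ∑ k, dist (x k) (y k))) := by
  subst hΓ
  have hf_monoOn := monotoneOn_Ici_of_strictMonoOn_Ioi hf_mono hf_cont.continuousWithinAt
  let r (A : SubsetsCardLE (graph f) n) : graph f := graph.retraction A.1
  have hr_singleton (a : graph f) (A : SubsetsCardLE (graph f) n) (hA : A.1 = {a}) : r A = a := by
    simp only [r, hA, graph.retraction_singleton]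
  have hr_lip (A B : SubsetsCardLE (graph f) n) : dist (r A) (r B) ≤ 2 * hausdorffDist A.1 B.1 :=
    graph.dist_retraction_le hf_even hf_monoOn A.2.2.1 B.2.2.1 A.2.1 B.2.1
  exact ⟨⟨2, zero_le_two, r, hr_singleton, hr_lip⟩, 2, zero_le_two,
    exists_lipschitz_mean_of_retraction (by omega) r hr_singleton hr_lip zero_le_two⟩
end

section
/- Let X be a metric space and h : X → J a homeomorphism onto a nontrivial interval J ⊆ ℝ. Define a total order on X by a ≼ b iff h(a) ≤ h(b), and let min, max : X² → X and med : X³ → X be the minimum, maximum, and median (middle element) with respect to this order. Then the following are equivalent: (i) X has bounded turning; (ii) the maps min and max are Lipschitz on X² (with the sum metric); (iii) the map med is Lipschitz on X³ (with the sum metric). Moreover, the constants in (i), (ii), (iii) depend only on each other. -/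
/-- The minimum of `a, b` with respect to the total order pulled back by `h`. -/
noncomputable def orderMin {X : Type*} (h : X → ℝ) (a b : X) : X :=
  if h a ≤ h b then a else b

/-- The maximum of `a, b` with respect to the total order pulled back by `h`. -/
noncomputable def orderMax {X : Type*} (h : X → ℝ) (a b : X) : X :=
  if h a ≤ h b then b else a

/-- The median of `a, b, c` with respect to the total order pulled back by `h`:
`med(a,b,c) = max(min(a,b), min(b,c), min(a,c))`. -/
noncomputable def orderMed {X : Type*} (h : X → ℝ) (a b c : X) : X :=
  orderMax h (orderMax h (orderMin h a b) (orderMin h b c)) (orderMin h a c)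

section AuxBT

variable {X : Type} [MetricSpace X]

lemma h_orderMin (h : X → ℝ) (a b : X) : h (orderMin h a b) = min (h a) (h b) := by
  unfold orderMin; split_ifs with h1
  · exact (min_eq_left h1).symm
  · exact (min_eq_right (not_le.mp h1).le).symm

lemma h_orderMax (h : X → ℝ) (a b : X) : h (orderMax h a b) = max (h a) (h b) := by
  unfold orderMax; split_ifs with h1
  · exact (max_eq_right h1).symm
  · exact (max_eq_left (not_le.mp h1).le).symm

lemma h_orderMed (h : X → ℝ) (a b c : X) :
    h (orderMed h a b c) =
      max (max (min (h a) (h b)) (min (h b) (h c))) (min (h a) (h c)) := by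
  unfold orderMed
  rw [h_orderMax h, h_orderMax h, h_orderMin h, h_orderMin h, h_orderMin h]

lemma med_between {h : X → ℝ} (hinj : Function.Injective h) {a x b : X}
    (h1 : h a ≤ h x) (h2 : h x ≤ h b) : orderMed h a x b = x := by
  apply hinj
  rw [h_orderMed h, min_eq_left h1, min_eq_left h2, min_eq_left (h1.trans h2),
    max_eq_right h1, max_eq_left h1]

lemma med_aba {h : X → ℝ} (hinj : Function.Injective h) {a x : X}
    (h1 : h a ≤ h x) : orderMed h a x a = a := by
  apply hinj
  rw [h_orderMed h, min_eq_left h1, min_eq_right h1, min_self, max_self, max_self]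

lemma med_abb {h : X → ℝ} (hinj : Function.Injective h) {a b : X}
    (h1 : h a ≤ h b) : orderMed h a b b = b := by
  apply hinj
  rw [h_orderMed h, min_eq_left h1, min_self, max_eq_right h1, max_eq_left h1]

lemma between_dist {h : X → ℝ} (hinj : Function.Injective h) (hcont : Continuous h) {C : ℝ}
    (hBT : ∀ a b : X, ∃ E : Set X, a ∈ E ∧ b ∈ E ∧ IsCompact E ∧ IsConnected E ∧
      Metric.diam E ≤ C * dist a b)
    {p q r : X} (h1 : h p ≤ h q) (h2 : h q ≤ h r) :
    dist p q ≤ C * dist p r ∧ dist q r ≤ C * dist p r := by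
  obtain ⟨E, hp, hr, hcomp, hconn, hdiam⟩ := hBT p r
  have hq : q ∈ E := by
    have hsub : Set.Icc (h p) (h r) ⊆ h '' E :=
      (hconn.isPreconnected.image h hcont.continuousOn).Icc_subset ⟨p, hp, rfl⟩ ⟨r, hr, rfl⟩
    obtain ⟨x, hx, hxq⟩ := hsub ⟨h1, h2⟩
    exact hinj hxq ▸ hx
  exact ⟨(Metric.dist_le_diam_of_mem hcomp.isBounded hp hq).trans hdiam,
    (Metric.dist_le_diam_of_mem hcomp.isBounded hq hr).trans hdiam⟩

lemma key_bound {C K d1 d2 D d : ℝ} (hC : C ≤ K) (hK : 1 ≤ K) (h1 : 0 ≤ d1) (h2 : 0 ≤ d2)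
    (hd : d = d1 ∨ d = d2) (hD : D ≤ C * d) : D ≤ K * (d1 + d2) := by
  rcases hd with rfl | rfl <;> nlinarith

lemma minmax_lip {h : X → ℝ} (hinj : Function.Injective h) (hcont : Continuous h) {C : ℝ}
    (hBT : ∀ a b : X, ∃ E : Set X, a ∈ E ∧ b ∈ E ∧ IsCompact E ∧ IsConnected E ∧
      Metric.diam E ≤ C * dist a b) (a b a' b' : X) :
    dist (orderMin h a b) (orderMin h a' b') ≤ max C 1 * (dist a a' + dist b b') ∧
    dist (orderMax h a b) (orderMax h a' b') ≤ max C 1 * (dist a a' + dist b b') := by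
  have hK1 : (1:ℝ) ≤ max C 1 := le_max_right _ _
  have hKC : C ≤ max C 1 := le_max_left _ _
  have d1 : (0:ℝ) ≤ dist a a' := dist_nonneg
  have d2 : (0:ℝ) ≤ dist b b' := dist_nonneg
  have B : ∀ p q r : X, h p ≤ h q → h q ≤ h r →
      dist p q ≤ C * dist p r ∧ dist q r ≤ C * dist p r :=
    fun p q r hx hy => between_dist hinj hcont hBT hx hy
  constructor
  · unfold orderMin
    split_ifs with h1 h2 h2
    · exact key_bound hK1 hK1 d1 d2 (Or.inl rfl) (by rw [one_mul])
    · rcases le_total (h a) (h b') with hc | hc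
      · exact key_bound hKC hK1 d1 d2 (Or.inl rfl) (B a b' a' hc (not_le.mp h2).le).1
      · have hw := (B b' a b hc h1).1
        rw [dist_comm b' a, dist_comm b' b] at hw
        exact key_bound hKC hK1 d1 d2 (Or.inr rfl) hw
    · rcases le_total (h b) (h a') with hc | hc
      · exact key_bound hKC hK1 d1 d2 (Or.inr rfl) (B b a' b' hc h2).1
      · have hw := (B a' b a hc (not_le.mp h1).le).1
        rw [dist_comm a' b, dist_comm a' a] at hw
        exact key_bound hKC hK1 d1 d2 (Or.inl rfl) hw
    · exact key_bound hK1 hK1 d1 d2 (Or.inr rfl) (by rw [one_mul])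
  · unfold orderMax
    split_ifs with h1 h2 h2
    · exact key_bound hK1 hK1 d1 d2 (Or.inr rfl) (by rw [one_mul])
    · rcases le_total (h b) (h a') with hc | hc
      · exact key_bound hKC hK1 d1 d2 (Or.inl rfl) (B a b a' h1 hc).2
      · have hw := (B b' a' b (not_le.mp h2).le hc).2
        rw [dist_comm a' b, dist_comm b' b] at hw
        exact key_bound hKC hK1 d1 d2 (Or.inr rfl) hw
    · rcases le_total (h a) (h b') with hc | hc
      · exact key_bound hKC hK1 d1 d2 (Or.inr rfl) (B b a b' (not_le.mp h1).le hc).2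
      · have hw := (B a' b' a h2 hc).2
        rw [dist_comm b' a, dist_comm a' a] at hw
        exact key_bound hKC hK1 d1 d2 (Or.inl rfl) hw
    · exact key_bound hK1 hK1 d1 d2 (Or.inl rfl) (by rw [one_mul])

lemma med_lip (h : X → ℝ) {L : ℝ} (hnt : ∃ p q : X, p ≠ q)
    (hyp : ∀ a b a' b' : X,
      dist (orderMin h a b) (orderMin h a' b') ≤ L * (dist a a' + dist b b') ∧
      dist (orderMax h a b) (orderMax h a' b') ≤ L * (dist a a' + dist b b'))
    (a b c a' b' c' : X) :
    dist (orderMed h a b c) (orderMed h a' b' c') ≤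
      (2 * L ^ 3 + L ^ 2) * (dist a a' + dist b b' + dist c c') := by
  obtain ⟨p, q, hpq⟩ := hnt
  have hL : 0 ≤ L := by
    have hpp : ∀ x : X, orderMin h x x = x := by
      intro x; unfold orderMin; exact if_pos le_rfl
    have hw := (hyp p p q q).1
    rw [hpp p, hpp q] at hw
    have hd : 0 < dist p q := dist_pos.mpr hpq
    nlinarith
  have hda : (0:ℝ) ≤ dist a a' := dist_nonneg
  have hdb : (0:ℝ) ≤ dist b b' := dist_nonneg
  have hdc : (0:ℝ) ≤ dist c c' := dist_nonneg
  have t1 := (hyp a b a' b').1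
  have t2 := (hyp b c b' c').1
  have t3 := (hyp a c a' c').1
  have t4 := (hyp (orderMin h a b) (orderMin h b c) (orderMin h a' b') (orderMin h b' c')).2
  have t5 := (hyp (orderMax h (orderMin h a b) (orderMin h b c)) (orderMin h a c)
    (orderMax h (orderMin h a' b') (orderMin h b' c')) (orderMin h a' c')).2
  have s4 : dist (orderMax h (orderMin h a b) (orderMin h b c))
      (orderMax h (orderMin h a' b') (orderMin h b' c')) ≤
      L * (L * (dist a a' + dist b b') + L * (dist b b' + dist c c')) :=
    t4.trans (mul_le_mul_of_nonneg_left (add_le_add t1 t2) hL)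
  have s5 : dist (orderMed h a b c) (orderMed h a' b' c') ≤
      L * ((L * (L * (dist a a' + dist b b') + L * (dist b b' + dist c c'))) +
        L * (dist a a' + dist c c')) := by
    unfold orderMed
    exact t5.trans (mul_le_mul_of_nonneg_left (add_le_add s4 t3) hL)
  nlinarith [mul_nonneg (mul_nonneg (mul_nonneg hL hL) hL) (add_nonneg hda hdc),
    mul_nonneg (mul_nonneg hL hL) hdb]

lemma bt_of_med {J : Set ℝ} (hJ : J.OrdConnected) (e : X ≃ₜ J) {L : ℝ}
    (hyp : ∀ a b c a' b' c' : X,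
      dist (orderMed (fun x => (e x : ℝ)) a b c) (orderMed (fun x => (e x : ℝ)) a' b' c') ≤
        L * (dist a a' + dist b b' + dist c c'))
    (a b : X) (hab : ((e a : ℝ)) ≤ (e b : ℝ)) :
    ∃ E : Set X, a ∈ E ∧ b ∈ E ∧ IsCompact E ∧ IsConnected E ∧
      Metric.diam E ≤ 2 * L * dist a b := by
  set h : X → ℝ := fun x => (e x : ℝ) with hh
  have hinj : Function.Injective h := fun x y hxy => e.injective (Subtype.coe_injective hxy)
  by_cases hab' : a = b
  · subst hab'
    exact ⟨{a}, rfl, rfl, isCompact_singleton, isConnected_singleton, by simp⟩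
  have hd : 0 < dist a b := dist_pos.mpr hab'
  have hL : 1 ≤ L := by
    have hw := hyp a b b a b a
    rw [med_abb hinj hab, med_aba hinj hab] at hw
    simp only [dist_self, zero_add] at hw
    rw [dist_comm b a] at hw
    nlinarith
  have hIccJ : Set.Icc (h a) (h b) ⊆ J := hJ.out (e a).2 (e b).2
  set E : Set X := h ⁻¹' Set.Icc (h a) (h b) with hE
  have mema : a ∈ E := ⟨le_rfl, hab⟩
  have memb : b ∈ E := ⟨hab, le_rfl⟩
  let φ : Set.Icc (h a) (h b) → X := fun t => e.symm ⟨t.1, hIccJ t.2⟩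
  have hφ : Continuous φ :=
    e.symm.continuous.comp (Continuous.subtype_mk continuous_subtype_val _)
  have hrange : Set.range φ = E := by
    ext x
    constructor
    · rintro ⟨t, rfl⟩
      show h (e.symm ⟨t.1, hIccJ t.2⟩) ∈ Set.Icc (h a) (h b)
      have : h (e.symm ⟨t.1, hIccJ t.2⟩) = t.1 :=
        congrArg Subtype.val (e.apply_symm_apply _)
      rw [this]
      exact t.2
    · intro hx
      refine ⟨⟨h x, hx⟩, ?_⟩
      show e.symm ⟨h x, hIccJ hx⟩ = x
      have : (⟨h x, hIccJ hx⟩ : J) = e x := Subtype.ext rfl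
      rw [this, e.symm_apply_apply]
  haveI : CompactSpace (Set.Icc (h a) (h b)) :=
    isCompact_iff_compactSpace.mp isCompact_Icc
  haveI : ConnectedSpace (Set.Icc (h a) (h b)) :=
    Subtype.connectedSpace ⟨Set.nonempty_Icc.mpr hab, isPreconnected_Icc⟩
  have hcE : IsCompact E := hrange ▸ isCompact_range hφ
  have hconnE : IsConnected E := hrange ▸ isConnected_range hφ
  have key : ∀ x ∈ E, dist a x ≤ L * dist a b := by
    intro x hx
    have hw := hyp a x b a x a
    rw [med_between hinj hx.1 hx.2, med_aba hinj hx.1] at hw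
    simp only [dist_self, zero_add, add_zero] at hw
    calc dist a x = dist x a := dist_comm _ _
      _ ≤ L * dist b a := by linarith
      _ = L * dist a b := by rw [dist_comm]
  refine ⟨E, mema, memb, hcE, hconnE, ?_⟩
  apply Metric.diam_le_of_forall_dist_le (by nlinarith)
  intro x hx y hy
  have k1 := key x hx
  have k2 := key y hy
  calc dist x y ≤ dist x a + dist a y := dist_triangle _ _ _
    _ ≤ L * dist a b + L * dist a b := by rw [dist_comm x a]; exact add_le_add k1 k2
    _ = 2 * L * dist a b := by ring

end AuxBT

/-- Let `X` be a metric space and `e : X ≃ₜ J` a homeomorphism onto a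
nontrivial interval `J ⊆ ℝ`; order `X` by `a ≼ b ↔ h a ≤ h b` where `h = (↑) ∘ e`.
Then the following are equivalent, with constants depending only on each other
(the dependences being uniform over all such `X`):
(i) `X` has bounded turning; (ii) `min` and `max` are Lipschitz on `X²` (sum metric);
(iii) `med` is Lipschitz on `X³` (sum metric). -/
theorem metric_interval_bounded_turning_iff_min_max_med_lipschitz :
    ∃ F₁ F₂ F₃ : ℝ → ℝ,
      ∀ (X : Type) [MetricSpace X] (J : Set ℝ),
        J.OrdConnected → J.Nontrivial → ∀ e : X ≃ₜ J,
        let h : X → ℝ := fun x => (e x : ℝ)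
        -- (i) ⇒ (ii), with constant F₁ C
        (∀ C : ℝ,
          (∀ a b : X, ∃ E : Set X, a ∈ E ∧ b ∈ E ∧ IsCompact E ∧ IsConnected E ∧
            Metric.diam E ≤ C * dist a b) →
          ∀ a b a' b' : X,
            dist (orderMin h a b) (orderMin h a' b') ≤ F₁ C * (dist a a' + dist b b') ∧
            dist (orderMax h a b) (orderMax h a' b') ≤ F₁ C * (dist a a' + dist b b')) ∧
        -- (ii) ⇒ (iii), with constant F₂ L
        (∀ L : ℝ,
          (∀ a b a' b' : X,
            dist (orderMin h a b) (orderMin h a' b') ≤ L * (dist a a' + dist b b') ∧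
            dist (orderMax h a b) (orderMax h a' b') ≤ L * (dist a a' + dist b b')) →
          ∀ a b c a' b' c' : X,
            dist (orderMed h a b c) (orderMed h a' b' c') ≤
              F₂ L * (dist a a' + dist b b' + dist c c')) ∧
        -- (iii) ⇒ (i), with constant F₃ L
        (∀ L : ℝ,
          (∀ a b c a' b' c' : X,
            dist (orderMed h a b c) (orderMed h a' b' c') ≤
              L * (dist a a' + dist b b' + dist c c')) →
          ∀ a b : X, ∃ E : Set X, a ∈ E ∧ b ∈ E ∧ IsCompact E ∧ IsConnected E ∧
            Metric.diam E ≤ F₃ L * dist a b) := by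
  refine ⟨fun C => max C 1, fun L => 2 * L ^ 3 + L ^ 2, fun L => 2 * L, ?_⟩
  intro X _ J hJord hJnt e
  intro h
  have hinj : Function.Injective h := fun x y hxy => e.injective (Subtype.coe_injective hxy)
  have hcont : Continuous h := continuous_subtype_val.comp e.continuous
  have hnt : ∃ p q : X, p ≠ q := by
    obtain ⟨x, hx, y, hy, hxy⟩ := hJnt
    refine ⟨e.symm ⟨x, hx⟩, e.symm ⟨y, hy⟩, fun hcon => hxy ?_⟩
    exact congrArg Subtype.val (e.symm.injective hcon)
  refine ⟨fun C hBT a b a' b' => minmax_lip hinj hcont hBT a b a' b',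
    fun L hyp a b c a' b' c' => med_lip h hnt hyp a b c a' b' c',
    fun L hyp a b => ?_⟩
  rcases le_total (h a) (h b) with hab | hab
  · exact bt_of_med hJord e hyp a b hab
  · obtain ⟨E, hbE, haE, hc, hconn, hdm⟩ := bt_of_med hJord e hyp b a hab
    exact ⟨E, haE, hbE, hc, hconn, by rwa [dist_comm]⟩
end

section
/- If a path-connected metric space X admits an L-Lipschitz mixer, then X has bounded turning: any two points a, b ∈ X are contained in a compact connected subset of X of diameter at most 2L·d(a,b). -/
/-! Join `a` to `b` by a path `γ` and take `E` to be the image of `t ↦ σ(a, γ t, b)`.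
It is compact and connected, and it contains `σ(a, a, b) = a` and `σ(a, b, b) = b`.
Since `σ(a, x, a) = a`, the Lipschitz bound gives `d(σ(a, x, b), a) ≤ L·d(a, b)` for every `x`,
so `E` lies in the closed ball of radius `L·d(a, b)` about `a`. -/

open Metric Set

theorem lipschitzWith_middle_of_dist_le_mul_sum {α β γ δ : Type*} [PseudoMetricSpace α]
    [PseudoMetricSpace β] [PseudoMetricSpace γ] [PseudoMetricSpace δ]
    {σ : α → β → γ → δ} {L : ℝ}
    (hlip : ∀ a b c a' b' c',
      dist (σ a b c) (σ a' b' c') ≤ L * (dist a a' + dist b b' + dist c c'))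
    (a : α) (c : γ) : LipschitzWith L.toNNReal (fun b => σ a b c) :=
  LipschitzWith.of_dist_le_mul fun x y =>
    (by simpa using hlip a x c a y c : dist (σ a x c) (σ a y c) ≤ L * dist x y).trans
      (mul_le_mul_of_nonneg_right L.le_coe_toNNReal dist_nonneg)

theorem dist_middle_le_of_dist_le_mul_sum {α β : Type*} [PseudoMetricSpace α]
    [PseudoMetricSpace β] {σ : α → β → α → α} {L : ℝ}
    (hlip : ∀ a b c a' b' c',
      dist (σ a b c) (σ a' b' c') ≤ L * (dist a a' + dist b b' + dist c c'))
    {a b : α} {x : β} (hx : σ a x a = a) : dist (σ a x b) a ≤ L * dist a b := by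
  calc dist (σ a x b) a = dist (σ a x b) (σ a x a) := by rw [hx]
    _ ≤ L * (dist a a + dist x x + dist b a) := hlip ..
    _ = L * dist a b := by simp [dist_comm]

theorem Metric.diam_le_two_mul_of_subset_closedBall {α : Type*} [PseudoMetricSpace α]
    {s : Set α} {a : α} {r : ℝ} (ha : a ∈ s) (hs : s ⊆ closedBall a r) :
    diam s ≤ 2 * r :=
  (diam_mono hs isBounded_closedBall).trans
    (diam_closedBall (dist_nonneg.trans (mem_closedBall.mp (hs ha))))

theorem pathConnected_lipschitz_mixer_bounded_turning_general
    (X : Type*) [MetricSpace X] [PathConnectedSpace X]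
    (L : ℝ) (σ : X → X → X → X)
    (habs : ∀ a b : X, σ a a b = a ∧ σ a b a = a ∧ σ b a a = a)
    (hlip : ∀ a b c a' b' c' : X,
      dist (σ a b c) (σ a' b' c') ≤ L * (dist a a' + dist b b' + dist c c')) :
    ∀ a b : X, ∃ E : Set X, a ∈ E ∧ b ∈ E ∧ IsCompact E ∧ IsConnected E ∧
      Metric.diam E ≤ 2 * L * dist a b := by
  intro a b
  obtain ⟨γ⟩ := PathConnectedSpace.joined a b
  have hf : Continuous fun t => σ a (γ t) b :=
    (lipschitzWith_middle_of_dist_le_mul_sum hlip a b).continuous.comp γ.continuous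
  have ha : a ∈ range fun t => σ a (γ t) b := ⟨0, by simp [(habs a b).1]⟩
  have hb : b ∈ range fun t => σ a (γ t) b := ⟨1, by simp [(habs b a).2.2]⟩
  have hball : (range fun t => σ a (γ t) b) ⊆ closedBall a (L * dist a b) := by
    rintro _ ⟨t, rfl⟩
    exact dist_middle_le_of_dist_le_mul_sum hlip (habs a (γ t)).2.1
  refine ⟨_, ha, hb, isCompact_range hf, isConnected_range hf, ?_⟩
  simpa only [mul_assoc] using diam_le_two_mul_of_subset_closedBall ha hball

/-- If a path-connected metric space `X` admits an `L`-Lipschitz mixer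
(Lipschitz with respect to the sum metric on `X³`), then any two points `a, b ∈ X` are
contained in a compact connected subset of `X` of diameter at most `2L·d(a,b)`. -/
theorem pathConnected_lipschitz_mixer_bounded_turning
    (X : Type*) [MetricSpace X] [PathConnectedSpace X]
    (L : ℝ) (hL : 0 ≤ L) (σ : X → X → X → X)
    (habs : ∀ a b : X, σ a a b = a ∧ σ a b a = a ∧ σ b a a = a)
    (hlip : ∀ a b c a' b' c' : X,
      dist (σ a b c) (σ a' b' c') ≤ L * (dist a a' + dist b b' + dist c c')) :
    ∀ a b : X, ∃ E : Set X, a ∈ E ∧ b ∈ E ∧ IsCompact E ∧ IsConnected E ∧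
      Metric.diam E ≤ 2 * L * dist a b :=
  pathConnected_lipschitz_mixer_bounded_turning_general X L σ habs hlip
end

section
/- Every nonempty proper chain-connected metric space that admits a Lipschitz mixer is connected. -/
/-!
Suppose a clopen set `U` contains `a` but not `b`. The map `F z = σ z a b` is Lipschitz, fixes
`a` and `b`, and sends all of `X` into the ball of radius `L * dist b a` about `a`, since
`σ z a a = a`. This ball is compact, so `U` and its complement are uniformly separated inside
it. The image under `F` of a sufficiently fine chain from `a` to `b` is then a chain inside the
ball whose steps are too short to leave `U`, yet it ends at `b`.
-/

open Metric Set

theorem Fin.exists_castSucc_and_not_succ {n : ℕ} {P : Fin (n + 1) → Prop} (h0 : P 0)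
    (hlast : ¬ P (Fin.last n)) : ∃ k : Fin n, P k.castSucc ∧ ¬ P k.succ := by
  by_contra! h
  exact hlast (Fin.induction h0 h (Fin.last n))

section PseudoMetricSpace

variable {X : Type*} [PseudoMetricSpace X]

theorem IsClopen.exists_pos_forall_le_dist_of_isCompact {U K : Set X} (hU : IsClopen U)
    (hK : IsCompact K) : ∃ r > 0, ∀ x ∈ U ∩ K, ∀ y ∉ U, r ≤ dist x y := by
  obtain ⟨r, hr, hsep⟩ := exists_pos_forall_lt_edist (hK.inter_left hU.isClosed)
    hU.compl.isClosed (disjoint_compl_right.mono_left inter_subset_left)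
  refine ⟨r, hr, fun x hx y hy => ?_⟩
  have := hsep x hx y hy
  rw [edist_nndist, ENNReal.coe_lt_coe, ← NNReal.coe_lt_coe, coe_nndist] at this
  exact this.le

theorem IsClopen.exists_pos_chain_mem_of_isCompact {U K : Set X} (hU : IsClopen U)
    (hK : IsCompact K) : ∃ r > 0, ∀ (n : ℕ) (x : Fin (n + 1) → X), (∀ i, x i ∈ K) →
      (∀ k : Fin n, dist (x k.castSucc) (x k.succ) < r) → x 0 ∈ U → x (Fin.last n) ∈ U := by
  obtain ⟨r, hr, hsep⟩ := hU.exists_pos_forall_le_dist_of_isCompact hK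
  refine ⟨r, hr, fun n x hxK hstep h0 => ?_⟩
  by_contra hlast
  obtain ⟨k, hk, hk'⟩ := Fin.exists_castSucc_and_not_succ (P := (x · ∈ U)) h0 hlast
  exact (hstep k).not_ge (hsep _ ⟨hk, hxK _⟩ _ hk')

section Mixer

variable {σ : X → X → X → X} {L : ℝ}
  (hlip : ∀ a b c a' b' c' : X,
    dist (σ a b c) (σ a' b' c') ≤ L * (dist a a' + dist b b' + dist c c'))
include hlip

theorem uniformContinuous_mixer_left (b c : X) : UniformContinuous (σ · b c) := by
  refine (LipschitzWith.of_dist_le_mul (K := L.toNNReal) fun x y => ?_).uniformContinuous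
  calc dist (σ x b c) (σ y b c) ≤ L * dist x y := by simpa using hlip x b c y b c
    _ ≤ L.toNNReal * dist x y := by gcongr; exact L.le_coe_toNNReal

theorem mixer_mem_closedBall (habs : ∀ a b : X, σ b a a = a) (a b z : X) :
    σ z a b ∈ closedBall a (L * dist b a) := by
  simpa [habs] using hlip z a b z a a

end Mixer

end PseudoMetricSpace

/-- Every nonempty proper chain-connected metric space admitting a
Lipschitz mixer is connected. -/
theorem proper_chainConnected_lipschitz_mixer_connected
    (X : Type*) [MetricSpace X] [Nonempty X] [ProperSpace X]
    (hchain : ∀ a b : X, ∀ ε : ℝ, 0 < ε → ∃ n : ℕ, ∃ x : Fin (n + 1) → X,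
      x 0 = a ∧ x (Fin.last n) = b ∧ ∀ k : Fin n, dist (x k.castSucc) (x k.succ) < ε)
    (L : ℝ) (σ : X → X → X → X)
    (habs : ∀ a b : X, σ a a b = a ∧ σ a b a = a ∧ σ b a a = a)
    (hlip : ∀ a b c a' b' c' : X,
      dist (σ a b c) (σ a' b' c') ≤ L * (dist a a' + dist b b' + dist c c')) :
    ConnectedSpace X := by
  have : PreconnectedSpace X := by
    refine preconnectedSpace_iff_clopen.2 fun U hU => ?_
    by_contra! ⟨⟨a, ha⟩, hU_ne_univ⟩
    obtain ⟨b, hb⟩ := (ne_univ_iff_exists_notMem U).1 hU_ne_univ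
    obtain ⟨r, hr, hchainU⟩ :=
      hU.exists_pos_chain_mem_of_isCompact (isCompact_closedBall a (L * dist b a))
    obtain ⟨δ, hδ, hF⟩ :=
      Metric.uniformContinuous_iff.1 (uniformContinuous_mixer_left hlip a b) r hr
    obtain ⟨n, x, hx0, hxn, hx⟩ := hchain a b δ hδ
    have hFb := hchainU n (fun i => σ (x i) a b)
      (fun i => mixer_mem_closedBall hlip (fun a b => (habs a b).2.2) a b (x i))
      (fun k => hF (hx k)) (by simpa [hx0, habs] using ha)
    exact hb (by simpa [hxn, habs] using hFb)
  exact { toNonempty := ‹_› }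
end

section
/- If f : X → Y is a quasihomogeneous homeomorphism of metric spaces onto Y and X admits a Lipschitz mixer, then Y admits a Lipschitz mixer. Quantitatively, if σ is an L-Lipschitz mixer on X and η is the control function of f, then τ(f(a), f(b), f(c)) := f(σ(a,b,c)) is a mixer on Y that is Lipschitz with constant η(3L) in each variable. -/
/-- If `f : X ≃ₜ Y` is a quasihomogeneous homeomorphism of metric
spaces (with control homeomorphism `η : [0,∞) → [0,∞)`) and `σ` is an `L`-Lipschitz
mixer on `X`, then `τ(f a, f b, f c) := f (σ a b c)` is a mixer on `Y` that is
Lipschitz with constant `η(3L)` in each variable. -/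
theorem quasihomogeneous_image_lipschitz_mixer
    (X Y : Type*) [MetricSpace X] [MetricSpace Y]
    (f : X ≃ₜ Y) (η : ℝ → ℝ)
    (hη_homeo : ∃ e : Set.Ici (0 : ℝ) ≃ₜ Set.Ici (0 : ℝ),
      ∀ x : Set.Ici (0 : ℝ), (e x : ℝ) = η x)
    (hqh : ∀ x₁ x₂ x₃ x₄ : X, x₃ ≠ x₄ →
      dist (f x₁) (f x₂) / dist (f x₃) (f x₄) ≤ η (dist x₁ x₂ / dist x₃ x₄))
    (L : ℝ) (hL : 0 ≤ L) (σ : X → X → X → X)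
    (habs : ∀ a b : X, σ a a b = a ∧ σ a b a = a ∧ σ b a a = a)
    (hlip : ∀ a b c a' b' c' : X,
      dist (σ a b c) (σ a' b' c') ≤ L * (dist a a' + dist b b' + dist c c')) :
    let τ : Y → Y → Y → Y := fun u v w => f (σ (f.symm u) (f.symm v) (f.symm w))
    (∀ u v : Y, τ u u v = u ∧ τ u v u = u ∧ τ v u u = u) ∧
    (∀ u v w u' : Y, dist (τ u v w) (τ u' v w) ≤ η (3 * L) * dist u u') ∧
    (∀ u v w v' : Y, dist (τ u v w) (τ u v' w) ≤ η (3 * L) * dist v v') ∧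
    (∀ u v w w' : Y, dist (τ u v w) (τ u v w') ≤ η (3 * L) * dist w w') := by
  intro τ
  -- η is monotone on [0, ∞)
  obtain ⟨e, he⟩ := hη_homeo
  haveI : Inhabited (Set.Ici (0 : ℝ)) := ⟨⟨0, Set.self_mem_Ici⟩⟩
  have hmono : ∀ s t : ℝ, 0 ≤ s → s ≤ t → η s ≤ η t := by
    have hmo : StrictMono e ∨ StrictAnti e :=
      Continuous.strictMono_of_inj e.continuous e.injective
    have hsm : StrictMono e := by
      rcases hmo with h | h
      · exact h
      · exfalso
        obtain ⟨x, hx⟩ := e.surjective ⟨(e ⟨0, Set.self_mem_Ici⟩ : ℝ) + 1, by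
          have := (e ⟨0, Set.self_mem_Ici⟩).2
          simp only [Set.mem_Ici] at this ⊢
          linarith⟩
        have hx0 : (⟨0, Set.self_mem_Ici⟩ : Set.Ici (0 : ℝ)) ≤ x := by
          exact x.2
        have : e x ≤ e ⟨0, Set.self_mem_Ici⟩ := h.antitone hx0
        rw [hx] at this
        have : (e ⟨0, Set.self_mem_Ici⟩ : ℝ) + 1 ≤ (e ⟨0, Set.self_mem_Ici⟩ : ℝ) := this
        linarith
    intro s t hs hst
    have ht : (0:ℝ) ≤ t := hs.trans hst
    have := hsm.monotone (a := ⟨s, hs⟩) (b := ⟨t, ht⟩) hst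
    rw [← he ⟨s, hs⟩, ← he ⟨t, ht⟩]
    exact this
  -- key Lipschitz estimate
  have key : ∀ (g : X → X) (hg : ∀ a a', dist (g a) (g a') ≤ L * dist a a')
      (u u' : Y), dist (f (g (f.symm u))) (f (g (f.symm u'))) ≤ η (3 * L) * dist u u' := by
    intro g hg u u'
    by_cases huu : u = u'
    · subst huu; simp
    · set a := f.symm u
      set a' := f.symm u'
      have haa : a ≠ a' := fun h => huu (by
        have := congrArg f h
        simpa [a, a'] using this)
      have hda : 0 < dist a a' := dist_pos.mpr haa
      have hdu : 0 < dist u u' := dist_pos.mpr huu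
      have h1 := hqh (g a) (g a') a a' haa
      rw [f.apply_symm_apply, f.apply_symm_apply] at h1
      have hratio : dist (g a) (g a') / dist a a' ≤ 3 * L := by
        rw [div_le_iff₀ hda]
        calc dist (g a) (g a') ≤ L * dist a a' := hg a a'
          _ ≤ 3 * L * dist a a' := by nlinarith
      have h2 : η (dist (g a) (g a') / dist a a') ≤ η (3 * L) :=
        hmono _ _ (div_nonneg dist_nonneg hda.le) hratio
      have h3 : dist (f (g a)) (f (g a')) / dist u u' ≤ η (3 * L) := h1.trans h2
      calc dist (f (g a)) (f (g a'))
          = dist (f (g a)) (f (g a')) / dist u u' * dist u u' := by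
            field_simp
        _ ≤ η (3 * L) * dist u u' := by
            exact mul_le_mul_of_nonneg_right h3 hdu.le
  refine ⟨?_, ?_, ?_, ?_⟩
  · intro u v
    refine ⟨?_, ?_, ?_⟩ <;>
      simp [τ, (habs (f.symm u) (f.symm v)).1, (habs (f.symm u) (f.symm v)).2.1,
        (habs (f.symm u) (f.symm v)).2.2]
  · intro u v w u'
    exact key (fun a => σ a (f.symm v) (f.symm w))
      (fun a a' => by simpa using hlip a (f.symm v) (f.symm w) a' (f.symm v) (f.symm w)) u u'
  · intro u v w v'
    exact key (fun b => σ (f.symm u) b (f.symm w))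
      (fun b b' => by simpa using hlip (f.symm u) b (f.symm w) (f.symm u) b' (f.symm w)) v v'
  · intro u v w w'
    exact key (fun c => σ (f.symm u) (f.symm v) c)
      (fun c c' => by simpa using hlip (f.symm u) (f.symm v) c (f.symm u) (f.symm v) c') w w'
end

section
/- Suppose that X is a metric space admitting a semilocal Lipschitz mixer. Let E ⊆ X be a closed set and U ⊆ X an open set such that there exists δ > 0 with d(e, x) ≥ δ for all e ∈ E and all x ∈ X \ U, and suppose there is a Lipschitz retraction of U onto E (a Lipschitz map ρ : U → E with ρ(e) = e for all e ∈ E). Then E admits a semilocal Lipschitz mixer. -/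
/-- If `X` admits a semilocal Lipschitz mixer (a Lipschitz map on
`Δ̃_r(X³) = {(x₁,x₂,x₃) : min pairwise distance ≤ r}` with the absorption property),
`E ⊆ X` is closed, `U ⊆ X` is open with `dist(E, X \ U) ≥ δ > 0`, and there is a
Lipschitz retraction of `U` onto `E`, then `E` admits a semilocal Lipschitz mixer. -/
theorem semilocal_mixer_of_lipschitz_neighborhood_retract
    (X : Type*) [MetricSpace X]
    (r L : ℝ) (hr : 0 < r) (hL : 0 ≤ L) (σ : X → X → X → X)
    (habs : ∀ a b : X, σ a a b = a ∧ σ a b a = a ∧ σ b a a = a)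
    (hlip : ∀ a b c a' b' c' : X,
      (dist a b ≤ r ∨ dist a c ≤ r ∨ dist b c ≤ r) →
      (dist a' b' ≤ r ∨ dist a' c' ≤ r ∨ dist b' c' ≤ r) →
      dist (σ a b c) (σ a' b' c') ≤ L * (dist a a' + dist b b' + dist c c'))
    (E U : Set X) (hE : IsClosed E) (hU : IsOpen U)
    (δ : ℝ) (hδ : 0 < δ) (hsep : ∀ e ∈ E, ∀ x ∉ U, δ ≤ dist e x)
    (ρ : X → X) (hρ_maps : Set.MapsTo ρ U E) (hρ_id : ∀ e ∈ E, ρ e = e)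
    (K : ℝ) (hρ_lip : ∀ u ∈ U, ∀ v ∈ U, dist (ρ u) (ρ v) ≤ K * dist u v) :
    ∃ r' : ℝ, 0 < r' ∧ ∃ L' : ℝ, 0 ≤ L' ∧ ∃ τ : E → E → E → E,
      (∀ a b : E, τ a a b = a ∧ τ a b a = a ∧ τ b a a = a) ∧
      (∀ a b c a' b' c' : E,
        (dist a b ≤ r' ∨ dist a c ≤ r' ∨ dist b c ≤ r') →
        (dist a' b' ≤ r' ∨ dist a' c' ≤ r' ∨ dist b' c' ≤ r') →
        dist (τ a b c) (τ a' b' c') ≤ L' * (dist a a' + dist b b' + dist c c')) := by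
  set r' : ℝ := min r (δ / (2 * (L + 1))) with hr'def
  have hL1 : (0:ℝ) < L + 1 := by linarith
  have hr'pos : 0 < r' := lt_min hr (by positivity)
  have hr'r : r' ≤ r := min_le_left _ _
  have hLr' : L * r' < δ := by
    have h1 : r' ≤ δ / (2 * (L + 1)) := min_le_right _ _
    have h2 : L * r' ≤ L * (δ / (2 * (L + 1))) := by
      exact mul_le_mul_of_nonneg_left h1 hL
    have h3 : L * (δ / (2 * (L + 1))) < δ := by
      rw [← mul_div_assoc, div_lt_iff₀ (by positivity : (0:ℝ) < 2 * (L + 1))]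
      nlinarith
    linarith
  -- membership in U of σ-values
  have hmemU : ∀ a b c : E,
      (dist (a:X) b ≤ r' ∨ dist (a:X) c ≤ r' ∨ dist (b:X) c ≤ r') →
      σ (a:X) b c ∈ U := by
    intro a b c h
    have hdomE : ∀ e : X, σ (a:X) b c ∈ U ∨ True := fun _ => Or.inr trivial
    -- find e ∈ E with dist e (σ a b c) < δ
    have key : ∃ e ∈ E, dist e (σ (a:X) b c) < δ := by
      rcases h with h | h | h
      · refine ⟨a, a.2, ?_⟩
        have := hlip a a c a b c (Or.inl (by simp [dist_self]; linarith))
          (Or.inl (le_trans h hr'r))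
        have he : σ (a:X) a c = a := (habs a c).1
        rw [he] at this
        calc dist (a:X) (σ (a:X) b c)
            ≤ L * (dist (a:X) a + dist (a:X) b + dist (c:X) c) := this
          _ = L * dist (a:X) b := by simp
          _ ≤ L * r' := mul_le_mul_of_nonneg_left h hL
          _ < δ := hLr'
      · refine ⟨c, c.2, ?_⟩
        have := hlip c b c a b c (Or.inr (Or.inl (by simp; linarith)))
          (Or.inr (Or.inl (le_trans h hr'r)))
        have he : σ (c:X) b c = c := (habs c b).2.1
        rw [he] at this
        calc dist (c:X) (σ (a:X) b c)
            ≤ L * (dist (c:X) a + dist (b:X) b + dist (c:X) c) := this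
          _ = L * dist (c:X) a := by simp
          _ ≤ L * r' := mul_le_mul_of_nonneg_left (by rw [dist_comm]; exact h) hL
          _ < δ := hLr'
      · refine ⟨c, c.2, ?_⟩
        have := hlip a c c a b c (Or.inr (Or.inr (by simp; linarith)))
          (Or.inr (Or.inr (le_trans h hr'r)))
        have he : σ (a:X) c c = c := (habs c a).2.2
        rw [he] at this
        calc dist (c:X) (σ (a:X) b c)
            ≤ L * (dist (a:X) a + dist (c:X) b + dist (c:X) c) := this
          _ = L * dist (c:X) b := by simp
          _ ≤ L * r' := mul_le_mul_of_nonneg_left (by rw [dist_comm]; exact h) hL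
          _ < δ := hLr'
    obtain ⟨e, heE, hlt⟩ := key
    by_contra hnU
    exact absurd (hsep e heE _ hnU) (not_le.mpr hlt)
  refine ⟨r', hr'pos, max K 0 * L, by positivity, ?_⟩
  refine ⟨fun a b c =>
    if h : dist (a:X) b ≤ r' ∨ dist (a:X) c ≤ r' ∨ dist (b:X) c ≤ r'
    then ⟨ρ (σ (a:X) b c), hρ_maps (hmemU a b c h)⟩ else a, ?_, ?_⟩
  · intro a b
    refine ⟨?_, ?_, ?_⟩
    all_goals dsimp only
    · rw [dif_pos (Or.inl (by simp [dist_self]; linarith))]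
      ext; simp [(habs (a:X) b).1, hρ_id _ a.2]
    · rw [dif_pos (Or.inr (Or.inl (by simp [dist_self]; linarith)))]
      ext; simp [(habs (a:X) b).2.1, hρ_id _ a.2]
    · rw [dif_pos (Or.inr (Or.inr (by simp [dist_self]; linarith)))]
      ext; simp [(habs (a:X) b).2.2, hρ_id _ a.2]
  · intro a b c a' b' c' h h'
    have h1 : dist (a:X) b ≤ r' ∨ dist (a:X) c ≤ r' ∨ dist (b:X) c ≤ r' := by
      simpa [Subtype.dist_eq] using h
    have h1' : dist (a':X) b' ≤ r' ∨ dist (a':X) c' ≤ r' ∨ dist (b':X) c' ≤ r' := by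
      simpa [Subtype.dist_eq] using h'
    dsimp only
    rw [dif_pos h1, dif_pos h1']
    have hσ : dist (σ (a:X) b c) (σ (a':X) b' c')
        ≤ L * (dist (a:X) a' + dist (b:X) b' + dist (c:X) c') := by
      apply hlip
      · rcases h1 with h|h|h
        exacts [Or.inl (le_trans h hr'r), Or.inr (Or.inl (le_trans h hr'r)),
          Or.inr (Or.inr (le_trans h hr'r))]
      · rcases h1' with h|h|h
        exacts [Or.inl (le_trans h hr'r), Or.inr (Or.inl (le_trans h hr'r)),
          Or.inr (Or.inr (le_trans h hr'r))]
    have hρb : dist (ρ (σ (a:X) b c)) (ρ (σ (a':X) b' c'))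
        ≤ max K 0 * dist (σ (a:X) b c) (σ (a':X) b' c') := by
      calc dist (ρ (σ (a:X) b c)) (ρ (σ (a':X) b' c'))
          ≤ K * dist (σ (a:X) b c) (σ (a':X) b' c') :=
            hρ_lip _ (hmemU a b c h1) _ (hmemU a' b' c' h1')
        _ ≤ max K 0 * dist (σ (a:X) b c) (σ (a':X) b' c') :=
            mul_le_mul_of_nonneg_right (le_max_left _ _) dist_nonneg
    have hsum : L * (dist (a:X) a' + dist (b:X) b' + dist (c:X) c') ≥ 0 := by
      positivity
    calc dist (⟨ρ (σ (a:X) b c), hρ_maps (hmemU a b c h1)⟩ : E)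
          ⟨ρ (σ (a':X) b' c'), hρ_maps (hmemU a' b' c' h1')⟩
        = dist (ρ (σ (a:X) b c)) (ρ (σ (a':X) b' c')) := Subtype.dist_eq _ _
      _ ≤ max K 0 * dist (σ (a:X) b c) (σ (a':X) b' c') := hρb
      _ ≤ max K 0 * (L * (dist (a:X) a' + dist (b:X) b' + dist (c:X) c')) :=
          mul_le_mul_of_nonneg_left hσ (le_max_right _ _)
      _ = max K 0 * L * (dist a a' + dist b b' + dist c c') := by
          rw [Subtype.dist_eq a a', Subtype.dist_eq b b', Subtype.dist_eq c c']; ring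
end

section
/- Suppose that X is a metric space admitting a local Lipschitz mean. Let E ⊆ X be a closed set and U ⊆ X an open set such that there exists δ > 0 with d(e, x) ≥ δ for all e ∈ E and all x ∈ X \ U, and suppose there is a Lipschitz retraction of U onto E (a Lipschitz map ρ : U → E with ρ(e) = e for all e ∈ E). Then E admits a local Lipschitz mean. -/
/-- If `X` admits a local Lipschitz mean (a Lipschitz map on
`Δ_r(X²) = {(a,b) : d(a,b) ≤ r}` which is symmetric and idempotent), `E ⊆ X` is closed,
`U ⊆ X` is open with `dist(E, X \ U) ≥ δ > 0`, and there is a Lipschitz retraction of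
`U` onto `E`, then `E` admits a local Lipschitz mean. -/
theorem local_mean_of_lipschitz_neighborhood_retract
    (X : Type*) [MetricSpace X]
    (r L : ℝ) (hr : 0 < r) (hL : 0 ≤ L) (μ : X → X → X)
    (hsym : ∀ a b : X, dist a b ≤ r → μ a b = μ b a)
    (hidem : ∀ a : X, μ a a = a)
    (hlip : ∀ a b a' b' : X, dist a b ≤ r → dist a' b' ≤ r →
      dist (μ a b) (μ a' b') ≤ L * (dist a a' + dist b b'))
    (E U : Set X) (hE : IsClosed E) (hU : IsOpen U)
    (δ : ℝ) (hδ : 0 < δ) (hsep : ∀ e ∈ E, ∀ x ∉ U, δ ≤ dist e x)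
    (ρ : X → X) (hρ_maps : Set.MapsTo ρ U E) (hρ_id : ∀ e ∈ E, ρ e = e)
    (K : ℝ) (hρ_lip : ∀ u ∈ U, ∀ v ∈ U, dist (ρ u) (ρ v) ≤ K * dist u v) :
    ∃ r' : ℝ, 0 < r' ∧ ∃ L' : ℝ, 0 ≤ L' ∧ ∃ ν : E → E → E,
      (∀ a b : E, dist a b ≤ r' → ν a b = ν b a) ∧
      (∀ a : E, ν a a = a) ∧
      (∀ a b a' b' : E, dist a b ≤ r' → dist a' b' ≤ r' →
        dist (ν a b) (ν a' b') ≤ L' * (dist a a' + dist b b')) := by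
  set r' : ℝ := min r (δ / (2 * (L + 1))) with hr'def
  have hL1 : (0:ℝ) < L + 1 := by linarith
  have hr'pos : 0 < r' := lt_min hr (by positivity)
  have hr'r : r' ≤ r := min_le_left _ _
  have hr'δ : L * r' < δ := by
    have h1 : r' ≤ δ / (2 * (L + 1)) := min_le_right _ _
    have h2 : L * r' ≤ L * (δ / (2 * (L + 1))) :=
      mul_le_mul_of_nonneg_left h1 hL
    have h3 : L * (δ / (2 * (L + 1))) < δ := by
      rw [mul_div_assoc']
      rw [div_lt_iff₀ (by positivity)]
      nlinarith
    linarith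
  have hEU : E ⊆ U := by
    intro e he
    by_contra h
    have := hsep e he e h
    simp at this
    linarith
  -- key: μ a b ∈ U when a ∈ E and dist a b ≤ r'
  have hkey : ∀ a b : X, a ∈ E → dist a b ≤ r' → μ a b ∈ U := by
    intro a b ha hab
    have habr : dist a b ≤ r := le_trans hab hr'r
    have hda : dist a (μ a b) ≤ L * dist a b := by
      have := hlip a a a b (by simpa using hr.le) habr
      rw [hidem] at this
      simpa using this
    by_contra h
    have h1 := hsep a ha (μ a b) h
    have h2 : L * dist a b ≤ L * r' := mul_le_mul_of_nonneg_left hab hL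
    linarith
  refine ⟨r', hr'pos, max K 0 * L, by positivity,
    fun a b => if h : dist (a : X) b ≤ r' then ⟨ρ (μ a b), hρ_maps (hkey a b a.2 h)⟩
      else a, ?_, ?_, ?_⟩
  · intro a b hab
    have hba : dist (b : X) a ≤ r' := by rwa [dist_comm] at hab
    have hab' : dist (a : X) (b : X) ≤ r' := hab
    simp only [dif_pos hab', dif_pos hba]
    congr 1
    rw [hsym a b (le_trans hab' hr'r)]
  · intro a
    have : dist (a : X) a ≤ r' := by simp [le_of_lt hr'pos]
    simp only [dif_pos this]
    ext
    simp [hidem, hρ_id _ a.2]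
  · intro a b a' b' hab hab'
    have h1 : dist (a : X) b ≤ r' := hab
    have h2 : dist (a' : X) b' ≤ r' := hab'
    simp only [dif_pos h1, dif_pos h2]
    have hm1 : μ (a:X) b ∈ U := hkey _ _ a.2 h1
    have hm2 : μ (a':X) b' ∈ U := hkey _ _ a'.2 h2
    have hd : dist (μ (a:X) b) (μ (a':X) b') ≤ L * (dist (a:X) a' + dist (b:X) b') :=
      hlip _ _ _ _ (le_trans h1 hr'r) (le_trans h2 hr'r)
    have hρ := hρ_lip _ hm1 _ hm2
    have hKK : K * dist (μ (a:X) b) (μ (a':X) b') ≤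
        max K 0 * dist (μ (a:X) b) (μ (a':X) b') :=
      mul_le_mul_of_nonneg_right (le_max_left _ _) dist_nonneg
    have hfin : max K 0 * dist (μ (a:X) b) (μ (a':X) b') ≤
        max K 0 * (L * (dist (a:X) a' + dist (b:X) b')) :=
      mul_le_mul_of_nonneg_left hd (le_max_right _ _)
    calc dist (⟨ρ (μ (a:X) b), hρ_maps hm1⟩ : E) ⟨ρ (μ (a':X) b'), hρ_maps hm2⟩
        = dist (ρ (μ (a:X) b)) (ρ (μ (a':X) b')) := rfl
      _ ≤ max K 0 * L * (dist (a:X) a' + dist (b:X) b') := by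
          rw [mul_assoc]; linarith
      _ = max K 0 * L * (dist a a' + dist b b') := by
          rw [Subtype.dist_eq, Subtype.dist_eq]
end

section
/- Let X be a metric space and n ≥ 2 an integer. Then X admits a Lipschitz retraction X(n) → X (a map r from nonempty subsets of X with at most n elements to X such that r({a}) = a for every a ∈ X and d(r(A), r(B)) ≤ L·d_H(A,B) for some constant L) if and only if X admits a Lipschitz n-mean μ with the additional property that μ(a₁,…,aₙ) = μ(b₁,…,bₙ) whenever {a₁,…,aₙ} = {b₁,…,bₙ} as sets. -/
open Metric Set

theorem Set.ncard_range_le_card {X ι : Type*} [Fintype ι] (x : ι → X) :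
    (range x).ncard ≤ Fintype.card ι := by
  rw [← image_univ, ← Nat.card_eq_fintype_card, ← ncard_univ]
  exact ncard_image_le finite_univ

theorem Set.Finite.exists_fin_range_eq {X : Type*} {s : Set X} {n : ℕ} (hs : s.Finite)
    (hne : s.Nonempty) (hcard : s.ncard ≤ n) : ∃ f : Fin n → X, range f = s := by
  have := hs.fintype
  have := hne.to_subtype
  obtain ⟨e⟩ : Nonempty (s ↪ Fin n) :=
    Function.Embedding.nonempty_of_card_le (by rwa [Fintype.card_fin, ← Nat.card_eq_fintype_card])
  refine ⟨(↑) ∘ Function.invFun e, ?_⟩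
  rw [range_comp, (Function.invFun_surjective e.injective).range_eq, image_univ,
    Subtype.range_coe]

theorem hausdorffDist_range_le_sum_dist {X ι : Type*} [MetricSpace X] [Fintype ι]
    (x y : ι → X) : hausdorffDist (range x) (range y) ≤ ∑ k, dist (x k) (y k) := by
  have hle : ∀ k, dist (x k) (y k) ≤ ∑ k, dist (x k) (y k) := fun k =>
    Finset.single_le_sum (fun i _ => dist_nonneg) (Finset.mem_univ k)
  refine hausdorffDist_le_of_mem_dist (Finset.sum_nonneg fun i _ => dist_nonneg) ?_ ?_
  · exact forall_mem_range.2 fun k => ⟨y k, mem_range_self k, hle k⟩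
  · exact forall_mem_range.2 fun k => ⟨x k, mem_range_self k, dist_comm (y k) (x k) ▸ hle k⟩

theorem IsCompact.exists_dist_le_hausdorffDist {X : Type*} [MetricSpace X] {s t : Set X}
    (hs : Bornology.IsBounded s) (ht : IsCompact t) (htne : t.Nonempty) {x : X} (hx : x ∈ s) :
    ∃ y ∈ t, dist x y ≤ hausdorffDist s t := by
  obtain ⟨y, hy, hxy⟩ := ht.exists_infDist_eq_dist htne x
  exact ⟨y, hy, hxy ▸ infDist_le_hausdorffDist_of_mem hx
    (hausdorffEDist_ne_top_of_nonempty_of_bounded ⟨x, hx⟩ htne hs ht.isBounded)⟩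

section SetDependentMean

variable {X ι : Type*} [MetricSpace X] [Fintype ι] {μ : (ι → X) → X} {L : ℝ}

theorem dist_le_of_forall_dist_le (hL : 0 ≤ L)
    (hlip : ∀ x y : ι → X, dist (μ x) (μ y) ≤ L * ∑ k, dist (x k) (y k))
    {x y : ι → X} {d : ℝ} (h : ∀ k, dist (x k) (y k) ≤ d) :
    dist (μ x) (μ y) ≤ Fintype.card ι * d * L := by
  calc dist (μ x) (μ y) ≤ L * ∑ k, dist (x k) (y k) := hlip x y
    _ ≤ L * ∑ _k : ι, d := by gcongr with k; exact h k
    _ = Fintype.card ι * d * L := by simp [mul_comm]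

/-- With `d` the Hausdorff distance of the ranges (attained, as they are finite), `x` moves by at
most `d` per entry onto `y ∘ f`, and `y` by at most `2 d` onto a tuple with the same range as
`y ∘ f`, by replacing each entry `y j` outside it with `y (f (g j))`. -/
theorem dist_le_mul_hausdorffDist_range (hL : 0 ≤ L)
    (hlip : ∀ x y : ι → X, dist (μ x) (μ y) ≤ L * ∑ k, dist (x k) (y k))
    (hset : ∀ x y : ι → X, range x = range y → μ x = μ y) (x y : ι → X) :
    dist (μ x) (μ y) ≤ 3 * Fintype.card ι * L * hausdorffDist (range x) (range y) := by
  set d := hausdorffDist (range x) (range y)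
  have hd : 0 ≤ d := hausdorffDist_nonneg
  have hxy : ∀ k, ∃ j, dist (x k) (y j) ≤ d := fun k => by
    obtain ⟨_, ⟨j, rfl⟩, h⟩ := (finite_range y).isCompact.exists_dist_le_hausdorffDist
      (finite_range x).isBounded ⟨y k, mem_range_self k⟩ (mem_range_self k)
    exact ⟨j, h⟩
  have hyx : ∀ j, ∃ k, dist (y j) (x k) ≤ d := fun j => by
    obtain ⟨_, ⟨k, rfl⟩, h⟩ := (finite_range x).isCompact.exists_dist_le_hausdorffDist
      (finite_range y).isBounded ⟨x j, mem_range_self j⟩ (mem_range_self j)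
    exact ⟨k, h.trans_eq hausdorffDist_comm⟩
  choose f hf using hxy
  choose g hg using hyx
  classical
  let w : ι → X := fun j => if y j ∈ range (y ∘ f) then y j else y (f (g j))
  have hw : range (y ∘ f) = range w := by
    refine Subset.antisymm (forall_mem_range.2 fun k => ⟨f k, if_pos (mem_range_self k)⟩) ?_
    refine forall_mem_range.2 fun j => ?_
    by_cases hj : y j ∈ range (y ∘ f)
    · rwa [show w j = y j from if_pos hj]
    · rw [show w j = y (f (g j)) from if_neg hj]
      exact mem_range_self (g j)
  have hwy : ∀ j, dist (w j) (y j) ≤ 2 * d := fun j => by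
    by_cases hj : y j ∈ range (y ∘ f)
    · rw [show w j = y j from if_pos hj, dist_self]
      positivity
    · rw [show w j = y (f (g j)) from if_neg hj]
      calc dist (y (f (g j))) (y j) ≤ dist (x (g j)) (y (f (g j))) + dist (x (g j)) (y j) :=
            dist_triangle_left _ _ _
        _ ≤ 2 * d := by rw [dist_comm (x (g j)) (y j)]; linarith [hf (g j), hg j]
  calc dist (μ x) (μ y) ≤ dist (μ x) (μ (y ∘ f)) + dist (μ w) (μ y) := by
        rw [hset _ _ hw]; exact dist_triangle _ _ _
    _ ≤ Fintype.card ι * d * L + Fintype.card ι * (2 * d) * L :=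
        add_le_add (dist_le_of_forall_dist_le hL hlip hf) (dist_le_of_forall_dist_le hL hlip hwy)
    _ = 3 * Fintype.card ι * L * d := by ring

end SetDependentMean

/-- A metric space `X` admits a Lipschitz retraction `X(n) → X`
(where `X(n)` is the space of nonempty subsets of `X` with at most `n` elements,
with the Hausdorff distance) if and only if it admits a Lipschitz `n`-mean `μ`
(sum metric on `Xⁿ`) with the additional property that `μ` depends only on the set
of its arguments. -/
theorem lipschitz_retraction_iff_set_symmetric_lipschitz_mean
    (X : Type*) [MetricSpace X] (n : ℕ) (hn : 2 ≤ n) :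
    (∃ L : ℝ, 0 ≤ L ∧
      ∃ r : {A : Set X // A.Nonempty ∧ A.Finite ∧ A.ncard ≤ n} → X,
        (∀ (a : X) (A : {A : Set X // A.Nonempty ∧ A.Finite ∧ A.ncard ≤ n}),
          A.1 = {a} → r A = a) ∧
        (∀ A B : {A : Set X // A.Nonempty ∧ A.Finite ∧ A.ncard ≤ n},
          dist (r A) (r B) ≤ L * Metric.hausdorffDist A.1 B.1)) ↔
    (∃ L : ℝ, 0 ≤ L ∧
      ∃ μ : (Fin n → X) → X,
        (∀ (x : Fin n → X) (π : Equiv.Perm (Fin n)), μ (x ∘ π) = μ x) ∧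
        (∀ a : X, μ (fun _ => a) = a) ∧
        (∀ x y : Fin n → X, dist (μ x) (μ y) ≤ L * ∑ k, dist (x k) (y k)) ∧
        (∀ x y : Fin n → X, Set.range x = Set.range y → μ x = μ y)) := by
  have : Nonempty (Fin n) := ⟨⟨0, by omega⟩⟩
  constructor
  · rintro ⟨L, hL, r, hr_singleton, hr_lip⟩
    let R : (Fin n → X) → {A : Set X // A.Nonempty ∧ A.Finite ∧ A.ncard ≤ n} := fun x =>
      ⟨range x, range_nonempty x, finite_range x, (ncard_range_le_card x).trans_eq (Fintype.card_fin n)⟩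
    refine ⟨L, hL, r ∘ R, fun x π => ?_, fun a => hr_singleton a _ range_const,
      fun x y => ?_, fun x y hxy => congrArg r (Subtype.ext hxy)⟩
    · exact congrArg r (Subtype.ext (π.surjective.range_comp x))
    · exact (hr_lip _ _).trans (mul_le_mul_of_nonneg_left (hausdorffDist_range_le_sum_dist x y) hL)
  · rintro ⟨L, hL, μ, -, hconst, hlip, hset⟩
    choose e he using fun A : {A : Set X // A.Nonempty ∧ A.Finite ∧ A.ncard ≤ n} =>
      A.2.2.1.exists_fin_range_eq A.2.1 A.2.2.2
    refine ⟨3 * n * L, by positivity, fun A => μ (e A), fun a A hA => ?_, fun A B => ?_⟩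
    · show μ (e A) = a
      rw [hset (e A) (fun _ => a) (by rw [he, hA, range_const]), hconst]
    · simpa [he] using dist_le_mul_hausdorffDist_range hL hlip hset (e A) (e B)
end

section
/- Suppose that X is a uniformly disconnected metric space; that is, there exists a constant c > 0 such that every finite sequence x₀, …, x_m in X (m ≥ 1) satisfies max_{1≤k≤m} d(x_k, x_{k−1}) ≥ c·d(x₀, x_m). Then X admits a Lipschitz n-mean for every integer n ≥ 2. -/
/-!
The chain pseudo-ultrametric `D x y`, the infimal mesh of chains from `x` to `y`, satisfies
`D ≤ d`, and uniform disconnectedness says exactly that `c * d ≤ D`; so `X` is bi-Lipschitz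
equivalent to an ultrametric space and it suffices to build means there.

In an ultrametric space the points of a finite tuple `x` all lie in one closed ball `B x` of
radius `diam x`, centred at any of them; picking a point of `B x` gives a symmetric mean with
`μ (a, …, a) = a`. It is `1`-Lipschitz for the sup metric: if both diameters are at most
`δ = max_k d(x_k, y_k)`, the ultrametric inequality puts the two means within `δ`; otherwise the
diameters agree and exceed `δ`, so `B x = B y` and the means coincide.
-/

open Metric Set Relation
open scoped SetRel

section UltrametricMean

variable {Y : Type*} [PseudoMetricSpace Y] {ι : Type*}

-- The union over all centres makes this depend on `s` alone, which makes the mean symmetric.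
def ballHull (s : Set Y) : Set Y := ⋃ a ∈ s, closedBall a (diam s)

lemma nonempty_ballHull_range [Nonempty ι] (x : ι → Y) : (ballHull (range x)).Nonempty :=
  ⟨x (Classical.arbitrary ι), mem_biUnion (mem_range_self _) (mem_closedBall_self diam_nonneg)⟩

noncomputable def ultrametricMean [Nonempty ι] (x : ι → Y) : Y :=
  (nonempty_ballHull_range x).some

lemma ultrametricMean_eq_of_ballHull_eq [Nonempty ι] {x y : ι → Y}
    (h : ballHull (range x) = ballHull (range y)) : ultrametricMean x = ultrametricMean y := by
  simp only [ultrametricMean, h]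

lemma ultrametricMean_comp_equiv [Nonempty ι] (x : ι → Y) (π : Equiv.Perm ι) :
    ultrametricMean (x ∘ π) = ultrametricMean x :=
  ultrametricMean_eq_of_ballHull_eq (by rw [EquivLike.range_comp])

variable [IsUltrametricDist Y]

lemma ballHull_eq_closedBall {s : Set Y} (hs : Bornology.IsBounded s) {a : Y} (ha : a ∈ s) :
    ballHull s = closedBall a (diam s) := by
  refine Subset.antisymm (iUnion₂_subset fun b hb => ?_) fun _ hz => mem_biUnion ha hz
  exact (IsUltrametricDist.closedBall_eq_of_mem (dist_le_diam_of_mem hs ha hb)).subset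

lemma ballHull_range_eq_closedBall [Finite ι] (x : ι → Y) (i : ι) :
    ballHull (range x) = closedBall (x i) (diam (range x)) :=
  ballHull_eq_closedBall (finite_range x).isBounded (mem_range_self i)

lemma ultrametricMean_mem_closedBall [Finite ι] [Nonempty ι] (x : ι → Y) (i : ι) :
    ultrametricMean x ∈ closedBall (x i) (diam (range x)) :=
  ballHull_range_eq_closedBall x i ▸ (nonempty_ballHull_range x).some_mem

lemma dist_ultrametricMean_const [Finite ι] [Nonempty ι] (a : Y) :
    dist (ultrametricMean fun _ : ι => a) a = 0 := by
  have h := ultrametricMean_mem_closedBall (fun _ : ι => a) (Classical.arbitrary ι)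
  rw [range_const, diam_singleton, mem_closedBall] at h
  exact le_antisymm h dist_nonneg

lemma diam_range_le_max_dist [Fintype ι] (x y : ι → Y) :
    diam (range y) ≤ max (diam (range x)) (dist x y) := by
  refine diam_le_of_forall_dist_le (le_max_of_le_right dist_nonneg) ?_
  rintro _ ⟨j, rfl⟩ _ ⟨k, rfl⟩
  have hx : dist (x j) (x k) ≤ diam (range x) :=
    dist_le_diam_of_mem (finite_range x).isBounded (mem_range_self j) (mem_range_self k)
  have hj := dist_le_pi_dist x y j
  have hk := dist_le_pi_dist x y k
  calc dist (y j) (y k) ≤ max (dist (y j) (x j)) (max (dist (x j) (x k)) (dist (x k) (y k))) :=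
        (dist_triangle_max _ (x j) _).trans (max_le_max le_rfl (dist_triangle_max _ _ _))
    _ ≤ max (diam (range x)) (dist x y) := by rw [dist_comm (y j)]; grind

theorem dist_ultrametricMean_le [Fintype ι] [Nonempty ι] (x y : ι → Y) :
    dist (ultrametricMean x) (ultrametricMean y) ≤ dist x y := by
  let i := Classical.arbitrary ι
  have hxy := dist_le_pi_dist x y i
  have hx := mem_closedBall.1 (ultrametricMean_mem_closedBall x i)
  have hy := mem_closedBall'.1 (ultrametricMean_mem_closedBall y i)
  by_cases hsmall : max (diam (range x)) (diam (range y)) ≤ dist x y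
  · calc dist (ultrametricMean x) (ultrametricMean y)
          ≤ max (dist (ultrametricMean x) (x i))
              (max (dist (x i) (y i)) (dist (y i) (ultrametricMean y))) :=
          (dist_triangle_max _ (x i) _).trans (max_le_max le_rfl (dist_triangle_max _ _ _))
      _ ≤ dist x y := by grind
  · -- both diameters then exceed `dist x y`, so they agree and the two balls coincide
    have hxy_diam := diam_range_le_max_dist x y
    have hyx_diam := dist_comm x y ▸ diam_range_le_max_dist y x
    have hdiam : diam (range x) = diam (range y) := by grind
    have hball : ballHull (range x) = ballHull (range y) := by
      rw [ballHull_range_eq_closedBall x i, ballHull_range_eq_closedBall y i, hdiam]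
      exact IsUltrametricDist.closedBall_eq_of_mem (by rw [mem_closedBall']; grind)
    rw [ultrametricMean_eq_of_ballHull_eq hball, dist_self]
    exact dist_nonneg

end UltrametricMean

section ChainDist

variable {X : Type*} [PseudoMetricSpace X]

noncomputable def chainDist (x y : X) : ℝ :=
  sInf {r | 0 ≤ r ∧ ReflTransGen (fun a b => dist a b ≤ r) x y}

lemma chainDist_le {x y : X} {r : ℝ} (hr : 0 ≤ r)
    (h : ReflTransGen (fun a b => dist a b ≤ r) x y) : chainDist x y ≤ r :=
  csInf_le ⟨0, fun _ hs => hs.1⟩ ⟨hr, h⟩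

lemma chainDist_le_dist (x y : X) : chainDist x y ≤ dist x y :=
  chainDist_le dist_nonneg (.single le_rfl)

lemma le_chainDist {x y : X} {s : ℝ}
    (h : ∀ r, 0 ≤ r → ReflTransGen (fun a b => dist a b ≤ r) x y → s ≤ r) :
    s ≤ chainDist x y :=
  le_csInf ⟨dist x y, dist_nonneg, .single le_rfl⟩ fun r hr => h r hr.1 hr.2

lemma exists_reflTransGen_of_chainDist_lt {x y : X} {s : ℝ} (h : chainDist x y < s) :
    ∃ r < s, 0 ≤ r ∧ ReflTransGen (fun a b => dist a b ≤ r) x y := by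
  obtain ⟨r, ⟨hr, hxy⟩, hrs⟩ :=
    exists_lt_of_csInf_lt (by exact ⟨dist x y, dist_nonneg, .single le_rfl⟩) h
  exact ⟨r, hrs, hr, hxy⟩

lemma chainDist_nonneg (x y : X) : 0 ≤ chainDist x y :=
  le_chainDist fun _ hr _ => hr

lemma chainDist_self (x : X) : chainDist x x = 0 :=
  le_antisymm (chainDist_le le_rfl .refl) (chainDist_nonneg x x)

lemma chainDist_comm (x y : X) : chainDist x y = chainDist y x := by
  have key : ∀ x y : X, chainDist x y ≤ chainDist y x := fun x y =>
    le_chainDist fun r hr h =>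
      chainDist_le hr (ReflTransGen.mono (fun a b hab => (dist_comm a b).trans_le hab) _ _
        (reflTransGen_swap.2 h))
  exact le_antisymm (key x y) (key y x)

lemma chainDist_triangle_max (x y z : X) :
    chainDist x z ≤ max (chainDist x y) (chainDist y z) := by
  refine le_of_forall_gt_imp_ge_of_dense fun s hs => ?_
  obtain ⟨r, hrs, hr, hxy⟩ := exists_reflTransGen_of_chainDist_lt (max_lt_iff.1 hs).1
  obtain ⟨r', hrs', -, hyz⟩ := exists_reflTransGen_of_chainDist_lt (max_lt_iff.1 hs).2
  have hjoin : ReflTransGen (fun a b => dist a b ≤ max r r') x z :=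
    (ReflTransGen.mono (fun _ _ h => h.trans (le_max_left r r')) _ _ hxy).trans
      (ReflTransGen.mono (fun _ _ h => h.trans (le_max_right r r')) _ _ hyz)
  exact (chainDist_le (hr.trans (le_max_left r r')) hjoin).trans (max_lt hrs hrs').le

lemma exists_relSeries_of_reflTransGen {α : Type*} {r : SetRel α α} {a b : α}
    (h : ReflTransGen (· ~[r] ·) a b) : ∃ p : RelSeries r, p.head = a ∧ p.last = b := by
  induction h with
  | refl => exact ⟨RelSeries.singleton r a, rfl, rfl⟩
  | tail _ hbc ih =>
    obtain ⟨p, hp, rfl⟩ := ih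
    exact ⟨p.snoc _ hbc, by rw [RelSeries.head_snoc, hp], RelSeries.last_snoc ..⟩

lemma mul_dist_le_chainDist {c : ℝ}
    (hud : ∀ m : ℕ, 1 ≤ m → ∀ x : Fin (m + 1) → X,
      ∃ k : Fin m, c * dist (x 0) (x (Fin.last m)) ≤ dist (x k.castSucc) (x k.succ))
    (x y : X) : c * dist x y ≤ chainDist x y := by
  refine le_chainDist fun r hr h => ?_
  obtain ⟨p, rfl, rfl⟩ :=
    exists_relSeries_of_reflTransGen (r := {q : X × X | dist q.1 q.2 ≤ r}) h
  rcases Nat.eq_zero_or_pos p.length with h0 | hpos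
  · rw [RelSeries.subsingleton_of_length_eq_zero h0 p.head_mem p.last_mem, dist_self, mul_zero]
    exact hr
  · obtain ⟨k, hk⟩ := hud p.length hpos p
    exact hk.trans (p.step k)

end ChainDist

def ChainMetric (X : Type*) := X

section ChainMetric

variable {X : Type*} [PseudoMetricSpace X]

def toChainMetric : X ≃ ChainMetric X := Equiv.refl X

noncomputable instance : PseudoMetricSpace (ChainMetric X) where
  dist x y := chainDist (toChainMetric.symm x) (toChainMetric.symm y)
  dist_self _ := chainDist_self _
  dist_comm _ _ := chainDist_comm _ _
  dist_triangle _ _ _ := (chainDist_triangle_max _ _ _).trans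
    (max_le_add_of_nonneg (chainDist_nonneg _ _) (chainDist_nonneg _ _))

instance : IsUltrametricDist (ChainMetric X) := ⟨fun _ _ _ => chainDist_triangle_max _ _ _⟩

lemma dist_toChainMetric_le (x y : X) : dist (toChainMetric x) (toChainMetric y) ≤ dist x y :=
  chainDist_le_dist x y

lemma mul_dist_toChainMetric_symm_le {c : ℝ}
    (hud : ∀ m : ℕ, 1 ≤ m → ∀ x : Fin (m + 1) → X,
      ∃ k : Fin m, c * dist (x 0) (x (Fin.last m)) ≤ dist (x k.castSucc) (x k.succ))
    (a b : ChainMetric X) : c * dist (toChainMetric.symm a) (toChainMetric.symm b) ≤ dist a b :=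
  mul_dist_le_chainDist hud _ _

end ChainMetric

/-- Every uniformly disconnected metric space admits a Lipschitz
`n`-mean for every `n ≥ 2`. -/
theorem uniformly_disconnected_lipschitz_n_means
    (X : Type*) [MetricSpace X]
    (c : ℝ) (hc : 0 < c)
    (hud : ∀ m : ℕ, 1 ≤ m → ∀ x : Fin (m + 1) → X,
      ∃ k : Fin m, c * dist (x 0) (x (Fin.last m)) ≤ dist (x k.castSucc) (x k.succ)) :
    ∀ n : ℕ, 2 ≤ n → ∃ L : ℝ, 0 ≤ L ∧ ∃ μ : (Fin n → X) → X,
      (∀ (x : Fin n → X) (π : Equiv.Perm (Fin n)), μ (x ∘ π) = μ x) ∧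
      (∀ a : X, μ (fun _ => a) = a) ∧
      (∀ x y : Fin n → X, dist (μ x) (μ y) ≤ L * ∑ k, dist (x k) (y k)) := by
  intro n hn
  have : Nonempty (Fin n) := ⟨⟨0, by omega⟩⟩
  refine ⟨c⁻¹, inv_nonneg.2 hc.le,
    fun x => toChainMetric.symm (ultrametricMean (toChainMetric ∘ x)),
    fun x π => ?_, fun a => ?_, fun x y => ?_⟩
  · exact congrArg toChainMetric.symm (ultrametricMean_comp_equiv (toChainMetric ∘ x) π)
  · have h := mul_dist_toChainMetric_symm_le hud
      (ultrametricMean fun _ : Fin n => toChainMetric a) (toChainMetric a)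
    rw [dist_ultrametricMean_const, Equiv.symm_apply_apply] at h
    exact dist_le_zero.1 (nonpos_of_mul_nonpos_right h hc)
  · rw [← div_eq_inv_mul, le_div_iff₀' hc]
    calc _
        ≤ dist (ultrametricMean (toChainMetric ∘ x)) (ultrametricMean (toChainMetric ∘ y)) :=
          mul_dist_toChainMetric_symm_le hud _ _
      _ ≤ dist (toChainMetric ∘ x) (toChainMetric ∘ y) := dist_ultrametricMean_le _ _
      _ ≤ ∑ k, dist (x k) (y k) := (dist_pi_le_iff (Finset.sum_nonneg fun k _ => dist_nonneg)).2
          fun k => (dist_toChainMetric_le (x k) (y k)).trans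
            (Finset.single_le_sum (fun k _ => dist_nonneg) (Finset.mem_univ k))
end

section
/- Suppose that d is a metric on ℝ with the following properties: (a) there is L₀ such that d(−x,−y) ≤ L₀·d(x,y) and d(|x|,|y|) ≤ L₀·d(x,y) for all x, y ∈ ℝ; (b) there is C₁ such that for all real numbers 0 ≤ a, b and all c, c' lying between a and b, one has d(c, c') ≤ C₁·d(a,b); (c) there is C such that d(−z, z) ≤ C·d(x,y) whenever x ≤ −z ≤ z ≤ y. Then for every integer n ≥ 2 the map μ(x₁,…,xₙ) = (min_{1≤k≤n} |x_k|)·sign(max_{1≤k≤n} x_k), where sign x ∈ {−1,0,1}, is a Lipschitz n-mean on the metric space (ℝ, d): it is invariant under permutations of its arguments, satisfies μ(x,…,x) = x, and is Lipschitz with respect to d (with some constant depending only on L₀, C₁, C). -/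
/-!
Where `max x ≥ 0` the mean is `m(x) = min_k |x_k|`, and where `max x < 0` it is `-m(x)`.
Both `m(x)` and `m(y)` lie between `|x_k|` and `|y_k|` for an index `k` realising the smaller
of the two minima, so bounded turning of `[0, ∞)` makes `m` Lipschitz. If the signs differ,
say `max x ≥ 0 > max y`, then at an index `j` where `x` is maximal, `z = min (m x) (m y)`
satisfies `y_j ≤ -z ≤ z ≤ x_j`; hypothesis (c) bounds `d(-z, z)`, and the triangle inequality
through `z` and `-z` bounds `d(m x, -m y)`.
-/

open Finset

def BoundedTurningOnNonneg (d : ℝ → ℝ → ℝ) (C₁ : ℝ) : Prop :=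
  ∀ a b c c' : ℝ, 0 ≤ a → 0 ≤ b →
    min a b ≤ c → c ≤ max a b → min a b ≤ c' → c' ≤ max a b → d c c' ≤ C₁ * d a b

def SymmetricPairBound (d : ℝ → ℝ → ℝ) (C : ℝ) : Prop :=
  ∀ x y z : ℝ, x ≤ -z → -z ≤ z → z ≤ y → d (-z) z ≤ C * d x y

noncomputable def signedMinAbs {ι : Type*} (x : ι → ℝ) : ℝ :=
  (⨅ k, |x k|) * Real.sign (⨆ k, x k)

theorem exists_ciInf_mem_uIcc_and_ciInf_mem_uIcc {ι : Type*} [Finite ι] [Nonempty ι]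
    (u v : ι → ℝ) :
    ∃ k, ⨅ i, u i ∈ Set.uIcc (u k) (v k) ∧ ⨅ i, v i ∈ Set.uIcc (u k) (v k) := by
  obtain ⟨j, hj⟩ := exists_eq_ciInf_of_finite (f := u)
  obtain ⟨l, hl⟩ := exists_eq_ciInf_of_finite (f := v)
  have hu : ∀ i, ⨅ i, u i ≤ u i := ciInf_le (Finite.bddBelow_range u)
  have hv : ∀ i, ⨅ i, v i ≤ v i := ciInf_le (Finite.bddBelow_range v)
  simp only [Set.mem_uIcc]
  rcases le_total (u j) (v l) with h | h
  · exact ⟨j, by grind⟩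
  · exact ⟨l, by grind⟩

section signedMinAbs

variable {ι : Type*}

theorem signedMinAbs_comp_equiv (x : ι → ℝ) (σ : Equiv.Perm ι) :
    signedMinAbs (x ∘ σ) = signedMinAbs x := by
  simp only [signedMinAbs, Function.comp_apply, σ.iInf_comp (g := fun k => |x k|),
    σ.iSup_comp (g := x)]

theorem signedMinAbs_const [Nonempty ι] (a : ℝ) : signedMinAbs (fun _ : ι => a) = a := by
  rcases lt_trichotomy a 0 with h | rfl | h
  · simp [signedMinAbs, Real.sign_of_neg h, abs_of_neg h]
  · simp [signedMinAbs]
  · simp [signedMinAbs, Real.sign_of_pos h, abs_of_pos h]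

theorem signedMinAbs_of_neg {x : ι → ℝ} (h : ⨆ k, x k < 0) :
    signedMinAbs x = -⨅ k, |x k| := by
  simp [signedMinAbs, Real.sign_of_neg h]

theorem signedMinAbs_of_nonneg [Finite ι] [Nonempty ι] {x : ι → ℝ} (h : 0 ≤ ⨆ k, x k) :
    signedMinAbs x = ⨅ k, |x k| := by
  rcases h.lt_or_eq with h | h
  · simp [signedMinAbs, Real.sign_of_pos h]
  · obtain ⟨j, hj⟩ := exists_eq_ciSup_of_finite (f := x)
    have hmin : ⨅ k, |x k| = 0 :=
      le_antisymm ((ciInf_le (Finite.bddBelow_range _) j).trans_eq (by simp [hj, ← h]))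
        (le_ciInf fun _ => abs_nonneg _)
    simp [signedMinAbs, hmin]

end signedMinAbs

section Metric

variable {d : ℝ → ℝ → ℝ} {L₀ C₁ C : ℝ}

theorem BoundedTurningOnNonneg.exists_dist_ciInf_le {ι : Type*} [Finite ι] [Nonempty ι]
    (hBT : BoundedTurningOnNonneg d C₁) {u v : ι → ℝ} (hu : ∀ i, 0 ≤ u i)
    (hv : ∀ i, 0 ≤ v i) : ∃ k, d (⨅ i, u i) (⨅ i, v i) ≤ C₁ * d (u k) (v k) := by
  obtain ⟨k, ⟨h₁, h₂⟩, h₃, h₄⟩ := exists_ciInf_mem_uIcc_and_ciInf_mem_uIcc u v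
  exact ⟨k, hBT _ _ _ _ (hu k) (hv k) h₁ h₂ h₃ h₄⟩

variable {ι : Type*} [Fintype ι] [Nonempty ι]

theorem BoundedTurningOnNonneg.dist_ciInf_abs_le (hBT : BoundedTurningOnNonneg d C₁)
    (hnn : ∀ x y, 0 ≤ d x y) (habs : ∀ x y, d |x| |y| ≤ L₀ * d x y)
    (hC₁ : 0 ≤ C₁) (hL₀ : 0 ≤ L₀) (x y : ι → ℝ) :
    d (⨅ k, |x k|) (⨅ k, |y k|) ≤ C₁ * L₀ * ∑ k, d (x k) (y k) := by
  obtain ⟨k, hk⟩ := hBT.exists_dist_ciInf_le (u := fun k => |x k|) (v := fun k => |y k|)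
    (fun _ => abs_nonneg _) (fun _ => abs_nonneg _)
  calc d (⨅ k, |x k|) (⨅ k, |y k|) ≤ C₁ * (L₀ * d (x k) (y k)) :=
        hk.trans (mul_le_mul_of_nonneg_left (habs _ _) hC₁)
    _ ≤ C₁ * (L₀ * ∑ k, d (x k) (y k)) := by
        gcongr
        exact single_le_sum (fun k _ => hnn (x k) (y k)) (mem_univ k)
    _ = C₁ * L₀ * ∑ k, d (x k) (y k) := by ring

theorem BoundedTurningOnNonneg.dist_neg_le (hBT : BoundedTurningOnNonneg d C₁)
    (hsymm : ∀ x y, d x y = d y x) (htri : ∀ x y z, d x z ≤ d x y + d y z)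
    (hneg : ∀ x y, d (-x) (-y) ≤ L₀ * d x y) (hL₀ : 0 ≤ L₀) {a b : ℝ} (ha : 0 ≤ a)
    (hb : 0 ≤ b) : d a (-b) ≤ C₁ * (1 + L₀) * d a b + d (-min a b) (min a b) := by
  set z := min a b
  have hza : d a z ≤ C₁ * d a b :=
    hBT a b a z ha hb (min_le_left a b) (le_max_left a b) le_rfl min_le_max
  have hzb : d z b ≤ C₁ * d a b :=
    hBT a b z b ha hb le_rfl min_le_max (min_le_right a b) (le_max_right a b)
  calc d a (-b) ≤ d a z + d z (-z) + d (-z) (-b) := by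
        linarith [htri a (-z) (-b), htri a z (-z)]
    _ ≤ C₁ * d a b + d (-z) z + L₀ * (C₁ * d a b) := by
        rw [hsymm z]
        gcongr
        exact (hneg z b).trans (mul_le_mul_of_nonneg_left hzb hL₀)
    _ = C₁ * (1 + L₀) * d a b + d (-z) z := by ring

theorem SymmetricPairBound.dist_neg_min_le (hC : SymmetricPairBound d C)
    (hsymm : ∀ x y, d x y = d y x) (hnn : ∀ x y, 0 ≤ d x y) (hC₀ : 0 ≤ C) {x y : ι → ℝ}
    (hx : 0 ≤ ⨆ k, x k) (hy : ⨆ k, y k < 0) :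
    d (-min (⨅ k, |x k|) (⨅ k, |y k|)) (min (⨅ k, |x k|) (⨅ k, |y k|)) ≤
      C * ∑ k, d (x k) (y k) := by
  set z := min (⨅ k, |x k|) (⨅ k, |y k|)
  obtain ⟨j, hj⟩ := exists_eq_ciSup_of_finite (f := x)
  have hxj : 0 ≤ x j := hj ▸ hx
  have hyj : y j < 0 := (le_ciSup (Finite.bddAbove_range y) j).trans_lt hy
  have hz : 0 ≤ z := le_min (le_ciInf fun _ => abs_nonneg _) (le_ciInf fun _ => abs_nonneg _)
  have hzx : z ≤ x j := calc
    z ≤ |x j| := (min_le_left _ _).trans (ciInf_le (Finite.bddBelow_range _) j)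
    _ = x j := abs_of_nonneg hxj
  have hzy : z ≤ -y j := calc
    z ≤ |y j| := (min_le_right _ _).trans (ciInf_le (Finite.bddBelow_range _) j)
    _ = -y j := abs_of_neg hyj
  calc d (-z) z ≤ C * d (y j) (x j) := hC (y j) (x j) z (by linarith) (by linarith) hzx
    _ ≤ C * ∑ k, d (x k) (y k) := by
        rw [hsymm]
        gcongr
        exact single_le_sum (fun k _ => hnn (x k) (y k)) (mem_univ j)

theorem dist_ciInf_abs_neg_ciInf_abs_le (hnn : ∀ x y, 0 ≤ d x y)
    (hsymm : ∀ x y, d x y = d y x) (htri : ∀ x y z, d x z ≤ d x y + d y z)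
    (hneg : ∀ x y, d (-x) (-y) ≤ L₀ * d x y) (habs : ∀ x y, d |x| |y| ≤ L₀ * d x y)
    (hBT : BoundedTurningOnNonneg d C₁) (hC : SymmetricPairBound d C) (hC₁ : 0 ≤ C₁)
    (hL₀ : 0 ≤ L₀) (hC₀ : 0 ≤ C) {x y : ι → ℝ} (hx : 0 ≤ ⨆ k, x k) (hy : ⨆ k, y k < 0) :
    d (⨅ k, |x k|) (-⨅ k, |y k|) ≤ (C + C₁ ^ 2 * L₀ * (1 + L₀)) * ∑ k, d (x k) (y k) := by
  have hx₀ : 0 ≤ ⨅ k, |x k| := le_ciInf fun _ => abs_nonneg _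
  have hy₀ : 0 ≤ ⨅ k, |y k| := le_ciInf fun _ => abs_nonneg _
  calc d (⨅ k, |x k|) (-⨅ k, |y k|)
      ≤ C₁ * (1 + L₀) * d (⨅ k, |x k|) (⨅ k, |y k|) +
          d (-min (⨅ k, |x k|) (⨅ k, |y k|)) (min (⨅ k, |x k|) (⨅ k, |y k|)) :=
        hBT.dist_neg_le hsymm htri hneg hL₀ hx₀ hy₀
    _ ≤ C₁ * (1 + L₀) * (C₁ * L₀ * ∑ k, d (x k) (y k)) + C * ∑ k, d (x k) (y k) := by
        gcongr
        · exact hBT.dist_ciInf_abs_le hnn habs hC₁ hL₀ x y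
        · exact hC.dist_neg_min_le hsymm hnn hC₀ hx hy
    _ = (C + C₁ ^ 2 * L₀ * (1 + L₀)) * ∑ k, d (x k) (y k) := by ring

theorem dist_signedMinAbs_le (hnn : ∀ x y, 0 ≤ d x y) (hsymm : ∀ x y, d x y = d y x)
    (htri : ∀ x y z, d x z ≤ d x y + d y z) (hneg : ∀ x y, d (-x) (-y) ≤ L₀ * d x y)
    (habs : ∀ x y, d |x| |y| ≤ L₀ * d x y) (hBT : BoundedTurningOnNonneg d C₁)
    (hC : SymmetricPairBound d C) (hC₁ : 1 ≤ C₁) (hL₀ : 0 ≤ L₀) (hC₀ : 0 ≤ C)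
    (x y : ι → ℝ) :
    d (signedMinAbs x) (signedMinAbs y) ≤
      (C + C₁ ^ 2 * L₀ * (1 + L₀)) * ∑ k, d (x k) (y k) := by
  have hC₁₀ : 0 ≤ C₁ := zero_le_one.trans hC₁
  have hK₁ : C₁ * L₀ ≤ C + C₁ ^ 2 * L₀ * (1 + L₀) := by
    nlinarith [mul_nonneg (mul_nonneg hC₁₀ hL₀) (sub_nonneg.2 hC₁),
      mul_nonneg (mul_nonneg (sq_nonneg C₁) hL₀) hL₀]
  have hK₂ : L₀ * (C₁ * L₀) ≤ C + C₁ ^ 2 * L₀ * (1 + L₀) := by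
    nlinarith [mul_nonneg (mul_nonneg hC₁₀ (sq_nonneg L₀)) (sub_nonneg.2 hC₁),
      mul_nonneg (sq_nonneg C₁) hL₀]
  have hS : 0 ≤ ∑ k, d (x k) (y k) := sum_nonneg fun k _ => hnn (x k) (y k)
  have hMin := hBT.dist_ciInf_abs_le hnn habs hC₁₀ hL₀ x y
  rcases le_or_gt 0 (⨆ k, x k) with hx | hx <;> rcases le_or_gt 0 (⨆ k, y k) with hy | hy
  · rw [signedMinAbs_of_nonneg hx, signedMinAbs_of_nonneg hy]
    exact hMin.trans (mul_le_mul_of_nonneg_right hK₁ hS)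
  · rw [signedMinAbs_of_nonneg hx, signedMinAbs_of_neg hy]
    exact dist_ciInf_abs_neg_ciInf_abs_le hnn hsymm htri hneg habs hBT hC hC₁₀ hL₀ hC₀ hx hy
  · rw [signedMinAbs_of_neg hx, signedMinAbs_of_nonneg hy, hsymm,
      sum_congr rfl fun k _ => hsymm (x k) (y k)]
    exact dist_ciInf_abs_neg_ciInf_abs_le hnn hsymm htri hneg habs hBT hC hC₁₀ hL₀ hC₀ hy hx
  · rw [signedMinAbs_of_neg hx, signedMinAbs_of_neg hy]
    calc _ ≤ L₀ * (C₁ * L₀ * ∑ k, d (x k) (y k)) :=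
          (hneg _ _).trans (mul_le_mul_of_nonneg_left hMin hL₀)
      _ = L₀ * (C₁ * L₀) * ∑ k, d (x k) (y k) := by ring
      _ ≤ _ := mul_le_mul_of_nonneg_right hK₂ hS

end Metric

/-- Suppose `d` is a metric on `ℝ` such that (a) `x ↦ -x` and
`x ↦ |x|` are `L₀`-Lipschitz, (b) the half-line `[0,∞)` has bounded turning with
constant `C₁` (any two points between nonnegative `a, b` are at `d`-distance at most
`C₁·d(a,b)`), and (c) `d(-z,z) ≤ C·d(x,y)` whenever `x ≤ -z ≤ z ≤ y`. Then for every
`n ≥ 2` the map `μ(x₁,…,xₙ) = (min_k |x_k|)·sign(max_k x_k)` is a Lipschitz `n`-mean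
on `(ℝ, d)`, with a Lipschitz constant depending only on `L₀, C₁, C`. -/
theorem lipschitz_n_mean_on_real_line_with_symmetric_metric
    (L₀ C₁ C : ℝ) :
    ∃ L : ℝ, 0 ≤ L ∧
      ∀ d : ℝ → ℝ → ℝ,
        (∀ x y, 0 ≤ d x y) →
        (∀ x y, d x y = d y x) →
        (∀ x y, d x y = 0 ↔ x = y) →
        (∀ x y z, d x z ≤ d x y + d y z) →
        (∀ x y, d (-x) (-y) ≤ L₀ * d x y) →
        (∀ x y, d |x| |y| ≤ L₀ * d x y) →
        (∀ a b c c' : ℝ, 0 ≤ a → 0 ≤ b →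
          min a b ≤ c → c ≤ max a b → min a b ≤ c' → c' ≤ max a b →
          d c c' ≤ C₁ * d a b) →
        (∀ x y z : ℝ, x ≤ -z → -z ≤ z → z ≤ y → d (-z) z ≤ C * d x y) →
        ∀ n : ℕ, 2 ≤ n →
          let μ : (Fin n → ℝ) → ℝ := fun x => (⨅ k, |x k|) * Real.sign (⨆ k, x k)
          (∀ (x : Fin n → ℝ) (π : Equiv.Perm (Fin n)), μ (x ∘ π) = μ x) ∧
          (∀ a : ℝ, μ (fun _ => a) = a) ∧
          (∀ x y : Fin n → ℝ, d (μ x) (μ y) ≤ L * ∑ k, d (x k) (y k)) := by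
  -- `L` is fixed before `d`; the constants are `≥ 1` only once some `d` satisfies the hypotheses.
  refine ⟨max (C + C₁ ^ 2 * L₀ * (1 + L₀)) 0, le_max_right _ _, ?_⟩
  intro d hnn hsymm hzero htri hneg habs hBT hC n hn
  have : Nonempty (Fin n) := ⟨⟨0, by omega⟩⟩
  have hpos : 0 < d 0 1 ∧ 0 < d (-1) 1 := by
    refine ⟨(hnn 0 1).lt_of_ne ?_, (hnn (-1) 1).lt_of_ne ?_⟩ <;>
      exact fun h => absurd ((hzero _ _).1 h.symm) (by norm_num)
  have hL₀ : 1 ≤ L₀ := (le_mul_iff_one_le_left hpos.1).1 (by simpa using habs 0 1)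
  have hC₁ : 1 ≤ C₁ := (le_mul_iff_one_le_left hpos.1).1
    (hBT 0 1 0 1 le_rfl zero_le_one (by simp) (by simp) (by simp) (by simp))
  have hC_one : 1 ≤ C := (le_mul_iff_one_le_left hpos.2).1
    (hC (-1) 1 1 le_rfl (by norm_num) le_rfl)
  refine ⟨signedMinAbs_comp_equiv, signedMinAbs_const, fun x y => ?_⟩
  calc d (signedMinAbs x) (signedMinAbs y)
      ≤ (C + C₁ ^ 2 * L₀ * (1 + L₀)) * ∑ k, d (x k) (y k) :=
        dist_signedMinAbs_le hnn hsymm htri hneg habs hBT hC hC₁ (zero_le_one.trans hL₀)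
          (zero_le_one.trans hC_one) x y
    _ ≤ _ := by gcongr
                exacts [sum_nonneg fun k _ => hnn (x k) (y k), le_max_left _ _]
end

section
/- Suppose that X is a path-connected metric space admitting an L-Lipschitz mean μ. Then for any two points a, b ∈ X there is a continuous curve γ : [0,2] → X such that γ(0) = a, γ(2) = b, and d(γ(t), γ(t+1)) ≤ L·d(a,b) for all t ∈ [0,1]. -/
/-!
Along a path `p` from `a` to `b`, first run `t ↦ μ a (p t)` from `μ a a = a` to `μ a b`, then
`t ↦ μ (p t) b` from `μ a b` to `μ b b = b`. By symmetry, the points at times `t` and `t + 1`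
are `μ (p t) a` and `μ (p t) b`, which differ only in the second argument.
-/

open Set

section SeparateLipschitz

variable {X Y Z : Type*} [PseudoMetricSpace X] [PseudoMetricSpace Y] [PseudoMetricSpace Z]
  {L : ℝ} {μ : X → Y → Z}

theorem lipschitzWith_right_of_dist_le_sum
    (hlip : ∀ a b a' b', dist (μ a b) (μ a' b') ≤ L * (dist a a' + dist b b')) (a : X) :
    LipschitzWith L.toNNReal (μ a) :=
  LipschitzWith.of_dist_le' fun b b' => by simpa using hlip a b a b'

theorem lipschitzWith_left_of_dist_le_sum
    (hlip : ∀ a b a' b', dist (μ a b) (μ a' b') ≤ L * (dist a a' + dist b b')) (b : Y) :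
    LipschitzWith L.toNNReal (μ · b) :=
  LipschitzWith.of_dist_le' fun a a' => by simpa using hlip a b a' b

end SeparateLipschitz

namespace Path

variable {X Y : Type*} [TopologicalSpace X] {a b : X}

noncomputable def meanCurve (μ : X → X → Y) (p : Path a b) (t : ℝ) : Y :=
  if t ≤ 1 then μ a (p.extend t) else μ (p.extend (t - 1)) b

variable (μ : X → X → Y) (p : Path a b)

theorem meanCurve_of_mem_Icc {t : ℝ} (ht : t ∈ Icc (0 : ℝ) 1) :
    p.meanCurve μ t = μ a (p.extend t) := by
  simp [meanCurve, ht.2]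

theorem meanCurve_add_one_of_mem_Icc {t : ℝ} (ht : t ∈ Icc (0 : ℝ) 1) :
    p.meanCurve μ (t + 1) = μ (p.extend t) b := by
  rcases ht.1.eq_or_lt with rfl | ht0
  · simp [meanCurve]
  · simp [meanCurve, ht0]

theorem meanCurve_zero : p.meanCurve μ 0 = μ a a := by
  simpa using p.meanCurve_of_mem_Icc μ (left_mem_Icc.2 zero_le_one)

theorem meanCurve_two : p.meanCurve μ 2 = μ b b := by
  simpa [one_add_one_eq_two] using
    p.meanCurve_add_one_of_mem_Icc μ (right_mem_Icc.2 zero_le_one)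

theorem continuous_meanCurve [TopologicalSpace Y] (hright : Continuous (μ a)) (hleft : Continuous (μ · b)) :
    Continuous (p.meanCurve μ) :=
  Continuous.if_le (hright.comp p.continuous_extend)
    (hleft.comp (p.continuous_extend.comp (continuous_sub_right 1))) continuous_id
    continuous_const (by rintro t rfl; simp)

end Path

theorem lipschitz_mean_gives_symmetric_curve_general
    (X : Type*) [MetricSpace X] [PathConnectedSpace X]
    (L : ℝ) (μ : X → X → X)
    (hsym : ∀ a b : X, μ a b = μ b a)
    (hidem : ∀ a : X, μ a a = a)
    (hlip : ∀ a b a' b' : X, dist (μ a b) (μ a' b') ≤ L * (dist a a' + dist b b')) :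
    ∀ a b : X, ∃ γ : ℝ → X, ContinuousOn γ (Set.Icc 0 2) ∧ γ 0 = a ∧ γ 2 = b ∧
      ∀ t ∈ Set.Icc (0 : ℝ) 1, dist (γ t) (γ (t + 1)) ≤ L * dist a b := by
  intro a b
  let p := PathConnectedSpace.somePath a b
  refine ⟨p.meanCurve μ, ?_, by rw [p.meanCurve_zero, hidem], by rw [p.meanCurve_two, hidem],
    fun t ht => ?_⟩
  · exact (p.continuous_meanCurve μ (lipschitzWith_right_of_dist_le_sum hlip a).continuous
      (lipschitzWith_left_of_dist_le_sum hlip b).continuous).continuousOn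
  · rw [p.meanCurve_of_mem_Icc μ ht, p.meanCurve_add_one_of_mem_Icc μ ht, hsym a]
    simpa using hlip (p.extend t) a (p.extend t) b

/-- If a path-connected metric space `X` admits an `L`-Lipschitz mean
`μ` (sum metric on `X²`), then any two points `a, b ∈ X` are joined by a continuous
curve `γ : [0,2] → X` with `γ 0 = a`, `γ 2 = b`, and `d(γ t, γ (t+1)) ≤ L·d(a,b)` for
all `t ∈ [0,1]`. -/
theorem lipschitz_mean_gives_symmetric_curve
    (X : Type*) [MetricSpace X] [PathConnectedSpace X]
    (L : ℝ) (hL : 0 ≤ L) (μ : X → X → X)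
    (hsym : ∀ a b : X, μ a b = μ b a)
    (hidem : ∀ a : X, μ a a = a)
    (hlip : ∀ a b a' b' : X, dist (μ a b) (μ a' b') ≤ L * (dist a a' + dist b b')) :
    ∀ a b : X, ∃ γ : ℝ → X, ContinuousOn γ (Set.Icc 0 2) ∧ γ 0 = a ∧ γ 2 = b ∧
      ∀ t ∈ Set.Icc (0 : ℝ) 1, dist (γ t) (γ (t + 1)) ≤ L * dist a b :=
  lipschitz_mean_gives_symmetric_curve_general X L μ hsym hidem hlip
end

section
/- Let z₀ ∈ ℂ and let γ : [0,2] → ℂ be a continuous curve with γ(t) ≠ z₀ for all t. Suppose that sup_{0≤t≤1} |γ(t+1) − γ(t)| ≤ inf_{0≤s≤2} |γ(s) − z₀|. Then for every continuous function h : [0,2] → ℝ satisfying γ(t) − z₀ = |γ(t) − z₀|·exp(i·h(t)) for all t ∈ [0,2], there exists an integer k such that |h(2) − h(0) − 4πk| ≤ 2π/3. -/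
/-!
Put `g t = h (t + 1) - h t`. The hypothesis gives
`‖γ (t + 1) - γ t‖² ≤ ‖γ (t + 1) - z₀‖ * ‖γ t - z₀‖`, and by the law of cosines this forces
`cos (g t) ≥ 1/2`, i.e. `g t` lies within `π/3` of `2πℤ`. As `π/3 < π`, the continuous `g` cannot
pass from one multiple of `2π` to another, so `g 0` and `g 1` are both within `π/3` of the same
`2πk`, and `h 2 - h 0 = g 1 + g 0` is within `2π/3` of `4πk`.
-/

open Real Complex Set

theorem norm_ofReal_mul_exp_sub_sq (r₁ r₂ a b : ℝ) :
    ‖(r₁ : ℂ) * exp (a * I) - r₂ * exp (b * I)‖ ^ 2 =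
      r₁ ^ 2 + r₂ ^ 2 - 2 * r₁ * r₂ * Real.cos (a - b) := by
  rw [Complex.sq_norm, normSq_apply]
  simp only [sub_re, sub_im, mul_re, mul_im, ofReal_re, ofReal_im, exp_ofReal_mul_I_re,
    exp_ofReal_mul_I_im, Real.cos_sub]
  linear_combination r₁ ^ 2 * Real.sin_sq_add_cos_sq a + r₂ ^ 2 * Real.sin_sq_add_cos_sq b

theorem half_le_cos_sub_of_norm_sub_sq_le {r₁ r₂ a b : ℝ} (hr : 0 < r₁ * r₂)
    (h : ‖(r₁ : ℂ) * exp (a * I) - r₂ * exp (b * I)‖ ^ 2 ≤ r₁ * r₂) :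
    1 / 2 ≤ Real.cos (a - b) := by
  rw [norm_ofReal_mul_exp_sub_sq] at h
  nlinarith [sq_nonneg (r₁ - r₂)]

theorem exists_abs_sub_two_pi_mul_le_of_half_le_cos {θ : ℝ} (h : 1 / 2 ≤ Real.cos θ) :
    ∃ k : ℤ, |θ - 2 * π * k| ≤ π / 3 := by
  set k := round (θ / (2 * π))
  refine ⟨k, ?_⟩
  have hrepr : θ - 2 * π * k = 2 * π * (θ / (2 * π) - k) := by field_simp
  have hle_pi : |θ - 2 * π * k| ≤ π := by
    rw [hrepr, abs_mul, abs_of_pos two_pi_pos]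
    nlinarith [abs_sub_round (θ / (2 * π)), pi_pos]
  have hcos : Real.cos |θ - 2 * π * k| = Real.cos θ := by
    rw [Real.cos_abs, mul_comm, Real.cos_sub_int_mul_two_pi]
  by_contra! hlt
  have := Real.cos_lt_cos_of_nonneg_of_le_pi (by positivity) hle_pi hlt
  rw [hcos, Real.cos_pi_div_three] at this
  linarith

theorem exists_abs_sub_two_pi_mul_le_of_norm_sub_sq_le {z w : ℂ} {a b : ℝ} (hz : z ≠ 0)
    (hw : w ≠ 0) (ha : z = ‖z‖ * exp (a * I)) (hb : w = ‖w‖ * exp (b * I))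
    (h : ‖z - w‖ ^ 2 ≤ ‖z‖ * ‖w‖) : ∃ k : ℤ, |a - b - 2 * π * k| ≤ π / 3 := by
  refine exists_abs_sub_two_pi_mul_le_of_half_le_cos
    (half_le_cos_sub_of_norm_sub_sq_le (mul_pos (norm_pos_iff.mpr hz) (norm_pos_iff.mpr hw)) ?_)
  rwa [← ha, ← hb]

theorem lt_abs_mul_add_half_sub_mul {p δ : ℝ} (hδ : δ < p / 2) (m k : ℤ) :
    δ < |p * (m + 1 / 2) - p * k| := by
  have hodd : (1 : ℝ) ≤ |2 * ((m : ℝ) - k) + 1| := by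
    exact_mod_cast Int.one_le_abs (by omega : 2 * (m - k) + 1 ≠ 0)
  have : p * (m + 1 / 2) - p * k = p / 2 * (2 * (m - k) + 1) := by ring
  rw [this, abs_mul]
  nlinarith [le_abs_self (p / 2), abs_nonneg (p / 2)]

theorem mul_add_half_mem_Icc {p δ x y : ℝ} {k₀ k₁ : ℤ} (hδ : δ < p / 2)
    (hx : |x - p * k₀| ≤ δ) (hy : |y - p * k₁| ≤ δ) (hk : k₀ < k₁) :
    p * (k₀ + 1 / 2) ∈ Icc x y := by
  have hp : 0 < p := by linarith [abs_nonneg (x - p * k₀)]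
  have hk' : (k₀ : ℝ) + 1 ≤ k₁ := by exact_mod_cast hk
  have := mul_le_mul_of_nonneg_left hk' hp.le
  constructor <;> linarith [abs_le.mp hx, abs_le.mp hy]

theorem exists_abs_sub_mul_le_both_of_continuousOn {g : ℝ → ℝ} {a b p δ : ℝ} (hab : a ≤ b)
    (hδ : δ < p / 2) (hg : ContinuousOn g (Icc a b))
    (hnear : ∀ t ∈ Icc a b, ∃ k : ℤ, |g t - p * k| ≤ δ) :
    ∃ k : ℤ, |g a - p * k| ≤ δ ∧ |g b - p * k| ≤ δ := by
  obtain ⟨k₀, h₀⟩ := hnear a (left_mem_Icc.mpr hab)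
  obtain ⟨k₁, h₁⟩ := hnear b (right_mem_Icc.mpr hab)
  refine ⟨k₀, h₀, ?_⟩
  obtain rfl | hne := eq_or_ne k₀ k₁
  · exact h₁
  -- a half-integer multiple of `p` between `g a` and `g b` is a value of `g` far from `p ℤ`
  obtain ⟨m, hm⟩ : ∃ m : ℤ, p * (m + 1 / 2) ∈ uIcc (g a) (g b) := by
    rcases hne.lt_or_gt with hlt | hlt
    · exact ⟨k₀, Icc_subset_uIcc (mul_add_half_mem_Icc hδ h₀ h₁ hlt)⟩
    · exact ⟨k₁, Icc_subset_uIcc' (mul_add_half_mem_Icc hδ h₁ h₀ hlt)⟩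
  rw [← uIcc_of_le hab] at hg hnear
  obtain ⟨t, ht, hgt⟩ := intermediate_value_uIcc hg hm
  obtain ⟨k, hk⟩ := hnear t ht
  exact absurd (hgt ▸ hk) (lt_abs_mul_add_half_sub_mul hδ m k).not_ge

theorem change_of_argument_near_multiple_of_four_pi_general
    (z₀ : ℂ) (γ : ℝ → ℂ)
    (hγ_ne : ∀ t ∈ Set.Icc (0 : ℝ) 2, γ t ≠ z₀)
    (hclose : ∀ t ∈ Set.Icc (0 : ℝ) 1, ∀ s ∈ Set.Icc (0 : ℝ) 2,
      ‖γ (t + 1) - γ t‖ ≤ ‖γ s - z₀‖) :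
    ∀ h : ℝ → ℝ, ContinuousOn h (Set.Icc 0 2) →
      (∀ t ∈ Set.Icc (0 : ℝ) 2,
        γ t - z₀ = (‖γ t - z₀‖ : ℂ) * Complex.exp ((h t : ℂ) * Complex.I)) →
      ∃ k : ℤ, |h 2 - h 0 - 4 * π * k| ≤ 2 * π / 3 := by
  intro h hh hbranch
  have hsub : Icc (0 : ℝ) 1 ⊆ Icc 0 2 := Icc_subset_Icc_right one_le_two
  have hshift : MapsTo (· + 1) (Icc (0 : ℝ) 1) (Icc 0 2) :=
    fun t ht => ⟨by linarith [ht.1], by linarith [ht.2]⟩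
  have hnear : ∀ t ∈ Icc (0 : ℝ) 1, ∃ k : ℤ, |h (t + 1) - h t - 2 * π * k| ≤ π / 3 := by
    intro t ht
    refine exists_abs_sub_two_pi_mul_le_of_norm_sub_sq_le
      (sub_ne_zero.mpr (hγ_ne _ (hshift ht))) (sub_ne_zero.mpr (hγ_ne _ (hsub ht)))
      (hbranch _ (hshift ht)) (hbranch _ (hsub ht)) ?_
    rw [sub_sub_sub_cancel_right, sq]
    exact mul_le_mul (hclose t ht _ (hshift ht)) (hclose t ht _ (hsub ht))
      (norm_nonneg _) (norm_nonneg _)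
  have hcont : ContinuousOn (fun t => h (t + 1) - h t) (Icc 0 1) :=
    (hh.comp (continuous_add_const 1).continuousOn hshift).sub (hh.mono hsub)
  obtain ⟨k, h₀, h₁⟩ := exists_abs_sub_mul_le_both_of_continuousOn zero_le_one
    (by linarith [pi_pos]) hcont hnear
  norm_num at h₀ h₁
  refine ⟨k, ?_⟩
  calc |h 2 - h 0 - 4 * π * k| = |(h 2 - h 1 - 2 * π * k) + (h 1 - h 0 - 2 * π * k)| := by
        ring_nf
    _ ≤ π / 3 + π / 3 := (abs_add_le _ _).trans (add_le_add h₁ h₀)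
    _ = 2 * π / 3 := by ring

/-- Let `z₀ ∈ ℂ` and `γ : [0,2] → ℂ` a continuous curve avoiding
`z₀`. If `sup_{0≤t≤1} |γ(t+1) − γ(t)| ≤ inf_{0≤s≤2} |γ(s) − z₀|`, then for every
continuous branch `h` of the argument of `γ − z₀`, the change of argument
`h(2) − h(0)` is within `2π/3` of an integer multiple of `4π`. -/
theorem change_of_argument_near_multiple_of_four_pi
    (z₀ : ℂ) (γ : ℝ → ℂ)
    (hγ_cont : ContinuousOn γ (Set.Icc 0 2))
    (hγ_ne : ∀ t ∈ Set.Icc (0 : ℝ) 2, γ t ≠ z₀)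
    (hclose : ∀ t ∈ Set.Icc (0 : ℝ) 1, ∀ s ∈ Set.Icc (0 : ℝ) 2,
      ‖γ (t + 1) - γ t‖ ≤ ‖γ s - z₀‖) :
    ∀ h : ℝ → ℝ, ContinuousOn h (Set.Icc 0 2) →
      (∀ t ∈ Set.Icc (0 : ℝ) 2,
        γ t - z₀ = (‖γ t - z₀‖ : ℂ) * Complex.exp ((h t : ℂ) * Complex.I)) →
      ∃ k : ℤ, |h 2 - h 0 - 4 * π * k| ≤ 2 * π / 3 :=
  change_of_argument_near_multiple_of_four_pi_general z₀ γ hγ_ne hclose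
end

section
/- Suppose that E ⊆ ℂ is a path-connected set admitting an L-Lipschitz mean. If z₀ ∈ ℂ \ E and a, b ∈ E satisfy L·|a − b| ≤ dist(z₀, E) := inf_{w∈E} |z₀ − w|, then there is a continuous curve γ : [0,2] → E with γ(0) = a and γ(2) = b such that for every continuous function h : [0,2] → ℝ satisfying γ(t) − z₀ = |γ(t) − z₀|·exp(i·h(t)) for all t, there exists an integer k with |h(2) − h(0) − 4πk| ≤ 2π/3. -/
/-!
Join `a` to `b` by a path `p` in `E` and let `γ` run through `μ (p t) a` on `[0, 1]` and then
through `μ b (p t)` on `[1, 2]`. By symmetry `γ t = μ a (p t)` and `γ (t + 1) = μ b (p t)` differ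
only in one argument, so they are within `L‖a - b‖ ≤ d = dist(z₀, E)` of each other while both
lie at distance `≥ d` from `z₀`; seen from `z₀` they subtend an angle of at most `π / 3`.
Hence `h (t + 1) - h t` has cosine `≥ 1/2` on `[0, 1]`, so by connectedness it stays within
`π / 3` of a fixed `2πk`, and `h 2 - h 0` is the sum of its values at `0` and `1`.
-/

open Real

section MeanCurve

variable {X : Type*} (μ : X → X → X) (q : ℝ → X)

def meanCurve (t : ℝ) : X :=
  μ (q (min t 1)) (q (max (t - 1) 0))

variable {μ q}

theorem meanCurve_of_le_one {t : ℝ} (ht : t ≤ 1) : meanCurve μ q t = μ (q t) (q 0) := by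
  rw [meanCurve, min_eq_left ht, max_eq_right (by linarith)]

theorem meanCurve_add_one {t : ℝ} (ht : 0 ≤ t) : meanCurve μ q (t + 1) = μ (q 1) (q t) := by
  rw [meanCurve, min_eq_right (by linarith), add_sub_cancel_right, max_eq_left ht]

theorem Continuous.meanCurve [TopologicalSpace X] (hμ : Continuous (Function.uncurry μ))
    (hq : Continuous q) : Continuous (meanCurve μ q) :=
  hμ.comp ((hq.comp (continuous_id.min continuous_const)).prodMk
    (hq.comp ((continuous_id.sub continuous_const).max continuous_const)))

theorem dist_meanCurve_add_one_le [PseudoMetricSpace X] {L : ℝ} (hsym : ∀ a b, μ a b = μ b a)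
    (hlip : ∀ a b a' b', dist (μ a b) (μ a' b') ≤ L * (dist a a' + dist b b'))
    {t : ℝ} (ht₀ : 0 ≤ t) (ht₁ : t ≤ 1) :
    dist (meanCurve μ q t) (meanCurve μ q (t + 1)) ≤ L * dist (q 0) (q 1) := by
  rw [meanCurve_of_le_one ht₁, meanCurve_add_one ht₀, hsym (q t)]
  simpa using hlip (q 0) (q t) (q 1) (q t)

end MeanCurve

theorem continuous_uncurry_of_dist_le_mul_add {X Y Z : Type*} [PseudoMetricSpace X]
    [PseudoMetricSpace Y] [PseudoMetricSpace Z] {μ : X → Y → Z} {L : ℝ}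
    (hlip : ∀ a b a' b', dist (μ a b) (μ a' b') ≤ L * (dist a a' + dist b b')) :
    Continuous (Function.uncurry μ) := by
  have hL : ∀ r, 0 ≤ r → L * r ≤ L.toNNReal * r := fun r hr =>
    mul_le_mul_of_nonneg_right (by simp [Real.coe_toNNReal']) hr
  refine (LipschitzWith.uncurry (Kα := L.toNNReal) (Kβ := L.toNNReal) (fun b => ?_)
    (fun a => ?_)).continuous <;> refine LipschitzWith.of_dist_le_mul fun x y => ?_
  · simpa using (hlip x b y b).trans (hL _ (by positivity))
  · simpa using (hlip a x a y).trans (hL _ (by positivity))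

theorem norm_ofReal_sub_mul_exp_sq (r s α : ℝ) :
    ‖(r : ℂ) - s * Complex.exp (α * Complex.I)‖ ^ 2 = r ^ 2 + s ^ 2 - 2 * r * s * cos α := by
  rw [Complex.sq_norm, Complex.normSq_apply]
  simp only [Complex.sub_re, Complex.sub_im, Complex.ofReal_re, Complex.ofReal_im,
    Complex.re_ofReal_mul, Complex.im_ofReal_mul, Complex.exp_ofReal_mul_I_re,
    Complex.exp_ofReal_mul_I_im]
  nlinarith [sin_sq_add_cos_sq α]

theorem half_le_cos_sub_of_norm_sub_le {r s θ φ : ℝ} (hr : 0 < r) (hs : 0 < s)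
    (h : ‖(r : ℂ) * Complex.exp (θ * Complex.I) - s * Complex.exp (φ * Complex.I)‖ ≤ min r s) :
    1 / 2 ≤ cos (φ - θ) := by
  have hrot : ‖(r : ℂ) * Complex.exp (θ * Complex.I) - s * Complex.exp (φ * Complex.I)‖ =
      ‖(r : ℂ) - s * Complex.exp ((φ - θ : ℝ) * Complex.I)‖ := by
    rw [← mul_one ‖(r : ℂ) - _‖, ← Complex.norm_exp_ofReal_mul_I θ, ← norm_mul]
    congr 1
    push_cast
    rw [sub_mul, mul_assoc, ← Complex.exp_add]
    ring_nf
  have hsq : ‖(r : ℂ) - s * Complex.exp ((φ - θ : ℝ) * Complex.I)‖ ^ 2 ≤ r * s := by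
    rw [← hrot]
    calc _ ≤ min r s ^ 2 := pow_le_pow_left₀ (norm_nonneg _) h 2
      _ ≤ r * s := by rw [sq]; exact mul_le_mul (min_le_left _ _) (min_le_right _ _)
                        (le_min hr.le hs.le) hr.le
  rw [norm_ofReal_sub_mul_exp_sq] at hsq
  nlinarith [sq_nonneg (r - s), mul_pos hr hs]

theorem abs_le_pi_div_three_of_half_le_cos {x : ℝ} (hx : |x| ≤ π) (hcos : 1 / 2 ≤ cos x) :
    |x| ≤ π / 3 := by
  by_contra! h
  have := cos_lt_cos_of_nonneg_of_le_pi (by positivity) hx h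
  rw [cos_abs, cos_pi_div_three] at this
  linarith

theorem IsPreconnected.exists_forall_abs_sub_two_pi_mul_le {α : Type*} [TopologicalSpace α]
    {S : Set α} {f : α → ℝ} (hS : IsPreconnected S) (hf : ContinuousOn f S)
    (hcos : ∀ t ∈ S, 1 / 2 ≤ cos (f t)) {t₀ : α} (ht₀ : t₀ ∈ S) :
    ∃ k : ℤ, ∀ t ∈ S, |f t - 2 * π * k| ≤ π / 3 := by
  set k : ℤ := round (f t₀ / (2 * π))
  have hcos_shift : ∀ x, cos (x - 2 * π * k) = cos x := fun x => by
    rw [mul_comm, cos_sub_int_mul_two_pi]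
  have h₀ : |f t₀ - 2 * π * k| ≤ π := by
    have hπ : 0 < 2 * π := by positivity
    rw [show f t₀ - 2 * π * k = 2 * π * (f t₀ / (2 * π) - k) by field_simp, abs_mul,
      abs_of_pos hπ]
    nlinarith [abs_sub_round (f t₀ / (2 * π))]
  have hmiss : ∀ t ∈ S, f t - 2 * π * k ≠ π ∧ f t - 2 * π * k ≠ -π := by
    intro t ht
    have := (hcos_shift (f t)).symm ▸ hcos t ht
    constructor <;> intro heq <;> rw [heq] at this <;> norm_num at this
  -- `f '' S` is an interval avoiding `2πk ± π`, so it stays between them.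
  refine ⟨k, fun t ht => abs_le_pi_div_three_of_half_le_cos ?_ ((hcos_shift _).symm ▸ hcos t ht)⟩
  have hI := (hS.image f hf).ordConnected
  by_contra! h
  rcases lt_abs.mp h with h | h
  · obtain ⟨s, hs, hfs⟩ := hI.out (Set.mem_image_of_mem f ht₀) (Set.mem_image_of_mem f ht)
      (⟨by linarith [(abs_le.mp h₀).2], by linarith⟩ : 2 * π * k + π ∈ Set.Icc _ _)
    exact (hmiss s hs).1 (by linarith)
  · obtain ⟨s, hs, hfs⟩ := hI.out (Set.mem_image_of_mem f ht) (Set.mem_image_of_mem f ht₀)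
      (⟨by linarith, by linarith [(abs_le.mp h₀).1]⟩ : 2 * π * k - π ∈ Set.Icc _ _)
    exact (hmiss s hs).2 (by linarith)

theorem exists_abs_sub_four_pi_mul_le_of_norm_sub_le {γ : ℝ → ℂ} {z₀ : ℂ} {d : ℝ}
    (hne : ∀ t ∈ Set.Icc (0 : ℝ) 2, γ t ≠ z₀) (hfar : ∀ t ∈ Set.Icc (0 : ℝ) 2, d ≤ ‖γ t - z₀‖)
    (hchord : ∀ t ∈ Set.Icc (0 : ℝ) 1, ‖γ t - γ (t + 1)‖ ≤ d) {h : ℝ → ℝ}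
    (hh : ContinuousOn h (Set.Icc 0 2))
    (harg : ∀ t ∈ Set.Icc (0 : ℝ) 2,
      γ t - z₀ = (‖γ t - z₀‖ : ℂ) * Complex.exp ((h t : ℂ) * Complex.I)) :
    ∃ k : ℤ, |h 2 - h 0 - 4 * π * k| ≤ 2 * π / 3 := by
  have hmem : ∀ t ∈ Set.Icc (0 : ℝ) 1, t ∈ Set.Icc (0 : ℝ) 2 ∧ t + 1 ∈ Set.Icc (0 : ℝ) 2 :=
    fun t ht => ⟨⟨ht.1, by linarith [ht.2]⟩, ⟨by linarith [ht.1], by linarith [ht.2]⟩⟩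
  have hcos : ∀ t ∈ Set.Icc (0 : ℝ) 1, 1 / 2 ≤ cos (h (t + 1) - h t) := by
    intro t ht
    obtain ⟨ht₁, ht₂⟩ := hmem t ht
    refine half_le_cos_sub_of_norm_sub_le (norm_pos_iff.2 (sub_ne_zero.2 (hne t ht₁)))
      (norm_pos_iff.2 (sub_ne_zero.2 (hne _ ht₂))) ?_
    rw [← harg t ht₁, ← harg _ ht₂, sub_sub_sub_cancel_right]
    exact (hchord t ht).trans (le_min (hfar t ht₁) (hfar _ ht₂))
  have hcont : ContinuousOn (fun t => h (t + 1) - h t) (Set.Icc 0 1) :=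
    (hh.comp (continuous_add_const 1).continuousOn fun t ht => (hmem t ht).2).sub
      (hh.mono fun t ht => (hmem t ht).1)
  obtain ⟨k, hk⟩ := isPreconnected_Icc.exists_forall_abs_sub_two_pi_mul_le hcont hcos
    (Set.left_mem_Icc.2 zero_le_one)
  have h₀ := hk 0 (Set.left_mem_Icc.2 zero_le_one)
  have h₁ := hk 1 (Set.right_mem_Icc.2 zero_le_one)
  norm_num at h₀ h₁
  refine ⟨k, ?_⟩
  calc |h 2 - h 0 - 4 * π * k| = |(h 2 - h 1 - 2 * π * k) + (h 1 - h 0 - 2 * π * k)| := by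
        ring_nf
    _ ≤ π / 3 + π / 3 := (abs_add_le _ _).trans (add_le_add h₁ h₀)
    _ = 2 * π / 3 := by ring

theorem lipschitz_mean_planar_argument_obstruction_general
    (E : Set ℂ) (hE : IsPathConnected E)
    (L : ℝ) (μ : E → E → E)
    (hsym : ∀ a b : E, μ a b = μ b a)
    (hidem : ∀ a : E, μ a a = a)
    (hlip : ∀ a b a' b' : E, dist (μ a b) (μ a' b') ≤ L * (dist a a' + dist b b'))
    (z₀ : ℂ) (hz₀ : z₀ ∉ E) (a b : ℂ) (ha : a ∈ E) (hb : b ∈ E)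
    (hsmall : L * ‖a - b‖ ≤ Metric.infDist z₀ E) :
    ∃ γ : ℝ → ℂ, ContinuousOn γ (Set.Icc 0 2) ∧ Set.MapsTo γ (Set.Icc 0 2) E ∧
      γ 0 = a ∧ γ 2 = b ∧
      ∀ h : ℝ → ℝ, ContinuousOn h (Set.Icc 0 2) →
        (∀ t ∈ Set.Icc (0 : ℝ) 2,
          γ t - z₀ = (‖γ t - z₀‖ : ℂ) * Complex.exp ((h t : ℂ) * Complex.I)) →
        ∃ k : ℤ, |h 2 - h 0 - 4 * π * k| ≤ 2 * π / 3 := by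
  let p := (hE.joinedIn a ha b hb).joined_subtype.somePath
  let γ : ℝ → E := meanCurve μ p.extend
  have hγ : Continuous γ :=
    (continuous_uncurry_of_dist_le_mul_add hlip).meanCurve p.continuous_extend
  refine ⟨fun t => γ t, hγ.subtype_val.continuousOn, fun t _ => (γ t).2, ?_, ?_, ?_⟩
  · simp [γ, meanCurve_of_le_one zero_le_one, hidem]
  · simp [γ, show (2 : ℝ) = 1 + 1 by norm_num, meanCurve_add_one zero_le_one, hidem]
  intro h hh harg
  refine exists_abs_sub_four_pi_mul_le_of_norm_sub_le (d := Metric.infDist z₀ E) ?_ ?_ ?_ hh harg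
  · exact fun t _ heq => hz₀ (heq ▸ (γ t).2)
  · intro t _
    rw [← dist_eq_norm, dist_comm]
    exact Metric.infDist_le_dist_of_mem (γ t).2
  · intro t ht
    calc ‖(γ t : ℂ) - γ (t + 1)‖ = dist (γ t) (γ (t + 1)) := (dist_eq_norm _ _).symm
      _ ≤ L * dist (p.extend 0) (p.extend 1) := dist_meanCurve_add_one_le hsym hlip ht.1 ht.2
      _ = L * ‖a - b‖ := by rw [Path.extend_zero, Path.extend_one, Subtype.dist_eq, dist_eq_norm]
      _ ≤ _ := hsmall

/-- Suppose `E ⊆ ℂ` is path-connected and admits an `L`-Lipschitz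
mean. If `z₀ ∉ E` and `a, b ∈ E` satisfy `L·|a − b| ≤ dist(z₀, E)`, then there is a
curve `γ : [0,2] → E` from `a` to `b` such that for every continuous branch `h` of the
argument of `γ − z₀`, the change `h(2) − h(0)` is within `2π/3` of an integer multiple
of `4π`. -/
theorem lipschitz_mean_planar_argument_obstruction
    (E : Set ℂ) (hE : IsPathConnected E)
    (L : ℝ) (hL : 0 ≤ L) (μ : E → E → E)
    (hsym : ∀ a b : E, μ a b = μ b a)
    (hidem : ∀ a : E, μ a a = a)
    (hlip : ∀ a b a' b' : E, dist (μ a b) (μ a' b') ≤ L * (dist a a' + dist b b'))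
    (z₀ : ℂ) (hz₀ : z₀ ∉ E) (a b : ℂ) (ha : a ∈ E) (hb : b ∈ E)
    (hsmall : L * ‖a - b‖ ≤ Metric.infDist z₀ E) :
    ∃ γ : ℝ → ℂ, ContinuousOn γ (Set.Icc 0 2) ∧ Set.MapsTo γ (Set.Icc 0 2) E ∧
      γ 0 = a ∧ γ 2 = b ∧
      ∀ h : ℝ → ℝ, ContinuousOn h (Set.Icc 0 2) →
        (∀ t ∈ Set.Icc (0 : ℝ) 2,
          γ t - z₀ = (‖γ t - z₀‖ : ℂ) * Complex.exp ((h t : ℂ) * Complex.I)) →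
        ∃ k : ℤ, |h 2 - h 0 - 4 * π * k| ≤ 2 * π / 3 :=
  lipschitz_mean_planar_argument_obstruction_general E hE L μ hsym hidem hlip z₀ hz₀ a b ha hb
    hsmall
end

section
/- Fix r > 0 and T ∈ (π, 2π), and let E = {r·exp(i·t) : 0 ≤ t ≤ T} ⊆ ℂ with the metric induced from ℂ. If E admits an L-Lipschitz mean, then L > 1/(2π − T). -/
/-!
Put `a = r`, `b = r e^{iT}` and let `θ` be the angle along the arc. The continuous function
`x ↦ θ (μ b x) - θ (μ a x)` equals `θ (μ a b)` at `a` and `T - θ (μ a b)` at `b` (symmetry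
and idempotence), so on the connected arc it takes the value `T / 2`. There the two means are at
chordal distance `2 r sin (T / 4)`, while the Lipschitz bound caps it by
`L |a - b| = 2 r L sin (T / 2)`. Hence `L ≥ 1 / (2 cos (T / 4))`, and
`2 cos (T / 4) = 2 sin (π / 2 - T / 4) < π - T / 2 < 2 π - T`.
-/

open Real

section SymmetricMean

variable {X : Type*}

theorem exists_sub_eq_half_sub_of_symm_of_idem [TopologicalSpace X] [PreconnectedSpace X]
    {μ : X → X → X} (hsym : ∀ a b, μ a b = μ b a) (hidem : ∀ a, μ a a = a)
    (hcont : ∀ a, Continuous (μ a)) {θ : X → ℝ} (hθ : Continuous θ) (a b : X) :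
    ∃ x, θ (μ b x) - θ (μ a x) = (θ b - θ a) / 2 := by
  set Φ : X → ℝ := fun x => θ (μ b x) - θ (μ a x)
  have hΦ : Continuous Φ := (hθ.comp (hcont b)).sub (hθ.comp (hcont a))
  have hsum : Φ a + Φ b = θ b - θ a := by
    simp only [Φ, hidem, hsym b a]
    ring
  rcases le_total (Φ a) ((θ b - θ a) / 2) with h | h
  · exact mem_range_of_exists_le_of_exists_ge hΦ ⟨a, h⟩ ⟨b, by linarith⟩
  · exact mem_range_of_exists_le_of_exists_ge hΦ ⟨b, by linarith⟩ ⟨a, h⟩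

theorem continuous_of_dist_le_mul_add_dist [PseudoMetricSpace X] {μ : X → X → X} {L : ℝ}
    (hlip : ∀ a b a' b', dist (μ a b) (μ a' b') ≤ L * (dist a a' + dist b b')) (a : X) :
    Continuous (μ a) :=
  (LipschitzWith.of_dist_le' fun x y => by simpa using hlip a x a y).continuous

end SymmetricMean

section CircularArc

open Complex Set

def circularArc (r T : ℝ) : Set ℂ :=
  {z : ℂ | ∃ t : ℝ, 0 ≤ t ∧ t ≤ T ∧ z = r * Complex.exp (t * Complex.I)}

/-- The rotation by `-T / 2` centres the arc on the positive real axis, away from the branch cut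
of `arg`. -/
noncomputable def arcAngle (T : ℝ) (z : ℂ) : ℝ :=
  arg (z * cexp (↑(-(T / 2)) * I)) + T / 2

variable {r T : ℝ}

theorem arg_ofReal_mul_exp_mul_I {t : ℝ} (hr : 0 < r) (ht : t ∈ Ioc (-π) π) :
    arg (r * cexp (t * I)) = t := by
  rw [arg_real_mul _ hr, arg_exp_mul_I, toIocMod_eq_self, neg_add_eq_sub, two_mul,
    add_sub_cancel_right]
  exact ht

theorem arg_ofReal_mul_exp_mul_I_mul_exp {t : ℝ} (hr : 0 < r) (h₀ : 0 ≤ t) (hT : t ≤ T)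
    (hT₂ : T < 2 * π) : arg (r * cexp (t * I) * cexp (↑(-(T / 2)) * I)) = t - T / 2 := by
  rw [mul_assoc, ← Complex.exp_add, ← add_mul, ← ofReal_add, ← sub_eq_add_neg]
  exact arg_ofReal_mul_exp_mul_I hr ⟨by linarith, by linarith⟩

theorem arcAngle_ofReal_mul_exp {t : ℝ} (hr : 0 < r) (h₀ : 0 ≤ t) (hT : t ≤ T)
    (hT₂ : T < 2 * π) : arcAngle T (r * cexp (t * I)) = t := by
  rw [arcAngle, arg_ofReal_mul_exp_mul_I_mul_exp hr h₀ hT hT₂]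
  ring

theorem continuousOn_arcAngle (hr : 0 < r) (hT₂ : T < 2 * π) :
    ContinuousOn (arcAngle T) (circularArc r T) := by
  rintro _ ⟨t, h₀, hT, rfl⟩
  have hslit : r * cexp (t * I) * cexp (↑(-(T / 2)) * I) ∈ slitPlane := by
    refine mem_slitPlane_iff_arg.mpr ⟨?_, by simp [hr.ne']⟩
    rw [arg_ofReal_mul_exp_mul_I_mul_exp hr h₀ hT hT₂]
    linarith
  have harg : ContinuousAt (fun z : ℂ => arg (z * cexp (↑(-(T / 2)) * I))) (r * cexp (t * I)) :=
    (continuousAt_arg hslit).comp (f := fun z : ℂ => z * cexp (↑(-(T / 2)) * I)) (by fun_prop)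
  exact (harg.add continuousAt_const).continuousWithinAt

theorem dist_ofReal_mul_exp_mul_I (r u v : ℝ) :
    dist (r * cexp (u * I)) (r * cexp (v * I)) = 2 * |r| * |Real.sin ((u - v) / 2)| := by
  have : (r * cexp (u * I) - r * cexp (v * I) : ℂ) =
      r * cexp (v * I) * (cexp (I * ↑(u - v)) - 1) := by
    rw [mul_sub, mul_one, mul_assoc, ← Complex.exp_add]
    push_cast
    ring_nf
  rw [Complex.dist_eq, this, norm_mul, norm_mul, norm_exp_ofReal_mul_I, norm_real,
    norm_exp_I_mul_ofReal_sub_one, norm_mul, Real.norm_eq_abs, Real.norm_eq_abs]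
  norm_num
  ring

theorem dist_eq_of_mem_circularArc (hr : 0 < r) (hT₂ : T < 2 * π) {x y : ℂ}
    (hx : x ∈ circularArc r T) (hy : y ∈ circularArc r T) :
    dist x y = 2 * r * |Real.sin ((arcAngle T x - arcAngle T y) / 2)| := by
  obtain ⟨u, hu₀, huT, rfl⟩ := hx
  obtain ⟨v, hv₀, hvT, rfl⟩ := hy
  rw [arcAngle_ofReal_mul_exp hr hu₀ huT hT₂, arcAngle_ofReal_mul_exp hr hv₀ hvT hT₂,
    dist_ofReal_mul_exp_mul_I, abs_of_pos hr]

theorem isPreconnected_circularArc (r T : ℝ) : IsPreconnected (circularArc r T) := by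
  have : circularArc r T = (fun t : ℝ => (r * cexp (t * I) : ℂ)) '' Icc 0 T := by
    ext z
    simp [circularArc, eq_comm, and_assoc]
  rw [this]
  exact isPreconnected_Icc.image _ (by fun_prop)

theorem sin_quarter_le_mul_sin_half_of_lipschitz_mean {r T L : ℝ} (hr : 0 < r) (hT₀ : 0 ≤ T)
    (hT₂ : T < 2 * π) {μ : circularArc r T → circularArc r T → circularArc r T}
    (hsym : ∀ a b, μ a b = μ b a) (hidem : ∀ a, μ a a = a)
    (hlip : ∀ a b a' b', dist (μ a b) (μ a' b') ≤ L * (dist a a' + dist b b')) :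
    Real.sin (T / 4) ≤ L * Real.sin (T / 2) := by
  have : PreconnectedSpace (circularArc r T) :=
    Subtype.preconnectedSpace (isPreconnected_circularArc r T)
  let θ : circularArc r T → ℝ := fun z => arcAngle T z
  have hθ : Continuous θ := (continuousOn_arcAngle hr hT₂).domRestrict
  let a : circularArc r T := ⟨r * cexp ((0 : ℝ) * I), 0, le_rfl, hT₀, rfl⟩
  let b : circularArc r T := ⟨r * cexp (T * I), T, hT₀, le_rfl, rfl⟩
  have hθa : θ a = 0 := arcAngle_ofReal_mul_exp hr le_rfl hT₀ hT₂
  have hθb : θ b = T := arcAngle_ofReal_mul_exp hr hT₀ le_rfl hT₂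
  obtain ⟨x, hx⟩ := exists_sub_eq_half_sub_of_symm_of_idem hsym hidem
    (continuous_of_dist_le_mul_add_dist hlip) hθ a b
  have key := hlip b x a x
  rw [dist_self, add_zero, Subtype.dist_eq, Subtype.dist_eq,
    dist_eq_of_mem_circularArc hr hT₂ (μ b x).2 (μ a x).2,
    dist_eq_of_mem_circularArc hr hT₂ b.2 a.2] at key
  change 2 * r * |Real.sin ((θ (μ b x) - θ (μ a x)) / 2)| ≤
    L * (2 * r * |Real.sin ((θ b - θ a) / 2)|) at key
  have hsin₄ : 0 ≤ Real.sin (T / 4) :=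
    sin_nonneg_of_nonneg_of_le_pi (by positivity) (by linarith)
  have hsin₂ : 0 ≤ Real.sin (T / 2) :=
    sin_nonneg_of_nonneg_of_le_pi (by positivity) (by linarith)
  rw [hx, hθa, hθb, sub_zero, show T / 2 / 2 = T / 4 by ring, abs_of_nonneg hsin₄,
    abs_of_nonneg hsin₂, mul_left_comm L] at key
  exact le_of_mul_le_mul_left key (by positivity : (0 : ℝ) < 2 * r)

end CircularArc

theorem two_mul_cos_quarter_lt_two_pi_sub {T : ℝ} (hT₂ : T < 2 * π) :
    2 * Real.cos (T / 4) < 2 * π - T := by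
  have h := Real.sin_lt (show 0 < π / 2 - T / 4 by linarith)
  rw [Real.sin_pi_div_two_sub] at h
  linarith

theorem one_div_two_mul_cos_le_of_sin_le_mul_sin_two_mul {x L : ℝ} (hsin : 0 < Real.sin x)
    (hcos : 0 < Real.cos x) (h : Real.sin x ≤ L * Real.sin (2 * x)) :
    1 / (2 * Real.cos x) ≤ L := by
  rw [Real.sin_two_mul] at h
  rw [div_le_iff₀ (by positivity)]
  nlinarith

/-- Fix `r > 0` and `T ∈ (π, 2π)` and let
`E = {r·exp(i t) : 0 ≤ t ≤ T} ⊆ ℂ`. If `E` admits an `L`-Lipschitz mean, then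
`L > 1/(2π − T)`. -/
theorem long_circular_arc_lipschitz_mean_lower_bound
    (r T : ℝ) (hr : 0 < r) (hT₁ : π < T) (hT₂ : T < 2 * π)
    (E : Set ℂ)
    (hE : E = {z : ℂ | ∃ t : ℝ, 0 ≤ t ∧ t ≤ T ∧ z = r * Complex.exp (t * Complex.I)})
    (L : ℝ) (μ : E → E → E)
    (hsym : ∀ a b : E, μ a b = μ b a)
    (hidem : ∀ a : E, μ a a = a)
    (hlip : ∀ a b a' b' : E, dist (μ a b) (μ a' b') ≤ L * (dist a a' + dist b b')) :
    1 / (2 * π - T) < L := by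
  subst hE
  have hT₀ : 0 < T := by linarith [pi_pos]
  have hsin := sin_quarter_le_mul_sin_half_of_lipschitz_mean hr hT₀.le hT₂ hsym hidem hlip
  rw [show T / 2 = 2 * (T / 4) by ring] at hsin
  have hcos : 0 < Real.cos (T / 4) := Real.cos_pos_of_mem_Ioo ⟨by linarith, by linarith⟩
  calc 1 / (2 * π - T) < 1 / (2 * Real.cos (T / 4)) :=
        one_div_lt_one_div_of_lt (by positivity) (two_mul_cos_quarter_lt_two_pi_sub hT₂)
    _ ≤ L := one_div_two_mul_cos_le_of_sin_le_mul_sin_two_mul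
        (Real.sin_pos_of_pos_of_lt_pi (by positivity) (by linarith)) hcos hsin
end

section
/- If a metric space X homeomorphic to the unit circle S¹ ⊆ ℝ² admits a semilocal Lipschitz mixer, then X has bounded turning. Quantitatively, if the mixer is L-Lipschitz with domain Δ̃_r(X³), then X has bounded turning with constant C = max(diam(X)/r, 2L). -/
/-- If a metric circle `X` (a metric space homeomorphic to the unit
circle `S¹ ⊆ ℝ²`) admits an `L`-Lipschitz semilocal mixer with domain `Δ̃_r(X³)`, then
`X` has bounded turning with constant `C = max(diam(X)/r, 2L)`. -/
theorem metric_circle_semilocal_mixer_bounded_turning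
    (X : Type*) [MetricSpace X]
    (hX : Nonempty (X ≃ₜ Metric.sphere (0 : EuclideanSpace ℝ (Fin 2)) 1))
    (r L : ℝ) (hr : 0 < r) (hL : 0 ≤ L) (σ : X → X → X → X)
    (habs : ∀ a b : X, σ a a b = a ∧ σ a b a = a ∧ σ b a a = a)
    (hlip : ∀ a b c a' b' c' : X,
      (dist a b ≤ r ∨ dist a c ≤ r ∨ dist b c ≤ r) →
      (dist a' b' ≤ r ∨ dist a' c' ≤ r ∨ dist b' c' ≤ r) →
      dist (σ a b c) (σ a' b' c') ≤ L * (dist a a' + dist b b' + dist c c')) :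
    ∀ a b : X, ∃ E : Set X, a ∈ E ∧ b ∈ E ∧ IsCompact E ∧ IsConnected E ∧
      Metric.diam E ≤ max (Metric.diam (Set.univ : Set X) / r) (2 * L) * dist a b := by
  obtain ⟨e⟩ := hX
  have hconnS : IsConnected (Metric.sphere (0 : EuclideanSpace ℝ (Fin 2)) 1) := by
    apply isConnected_sphere ?_ 0 (zero_le_one)
    rw [← Module.finrank_eq_rank, finrank_euclideanSpace_fin]
    norm_num
  haveI : CompactSpace X := e.symm.compactSpace
  haveI : ConnectedSpace X := by
    haveI : ConnectedSpace (Metric.sphere (0 : EuclideanSpace ℝ (Fin 2)) 1) :=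
      isConnected_iff_connectedSpace.mp hconnS
    exact e.symm.surjective.connectedSpace e.symm.continuous
  intro a b
  by_cases h : r ≤ dist a b
  · refine ⟨Set.univ, trivial, trivial, isCompact_univ, isConnected_univ, ?_⟩
    have h1 : Metric.diam (Set.univ : Set X) ≤
        Metric.diam (Set.univ : Set X) / r * dist a b := by
      calc Metric.diam (Set.univ : Set X)
          = Metric.diam (Set.univ : Set X) / r * r := by
            field_simp
        _ ≤ Metric.diam (Set.univ : Set X) / r * dist a b :=
            mul_le_mul_of_nonneg_left h (div_nonneg Metric.diam_nonneg hr.le)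
    refine h1.trans (mul_le_mul_of_nonneg_right (le_max_left _ _) dist_nonneg)
  · push_neg at h
    set f : X → X := fun x => σ a x b with hf
    have hab : dist a b ≤ r := h.le
    have flip : LipschitzWith L.toNNReal f := by
      apply LipschitzWith.of_dist_le_mul
      intro x y
      have := hlip a x b a y b (Or.inr (Or.inl hab)) (Or.inr (Or.inl hab))
      simpa [Real.coe_toNNReal L hL, dist_comm] using this
    have hfa : f a = a := (habs a b).1
    have hfb : f b = b := (habs b a).2.2
    have hnear : ∀ x : X, dist (f x) a ≤ L * dist a b := by
      intro x
      have h2 : σ a x a = a := (habs a x).2.1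
      have := hlip a x b a x a (Or.inr (Or.inl hab))
        (Or.inr (Or.inl (by simp [hr.le])))
      rw [h2] at this
      simpa [dist_comm b a] using this
    refine ⟨Set.range f, ⟨a, hfa⟩, ⟨b, hfb⟩, isCompact_range flip.continuous,
      isConnected_range flip.continuous, ?_⟩
    have hdiam : Metric.diam (Set.range f) ≤ 2 * L * dist a b := by
      apply Metric.diam_le_of_forall_dist_le
        (by positivity)
      rintro x ⟨u, rfl⟩ y ⟨v, rfl⟩
      calc dist (f u) (f v) ≤ dist (f u) a + dist a (f v) := dist_triangle _ _ _
        _ ≤ L * dist a b + L * dist a b := by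
            refine add_le_add (hnear u) ?_
            rw [dist_comm]; exact hnear v
        _ = 2 * L * dist a b := by ring
    exact hdiam.trans (mul_le_mul_of_nonneg_right (le_max_right _ _) dist_nonneg)
end

section
/- For every C ≥ 1 there exist constants L ≥ 0 and c > 0, depending only on C, with the following property: if X is a metric space homeomorphic to the unit circle S¹ ⊆ ℝ² which has bounded turning with constant C, then, setting r = c·diam X, there exists an L-Lipschitz map μ : Δ_r(X²) → X such that μ(a,b) = μ(b,a) and μ(a,a) = a for all (a,b) ∈ Δ_r(X²). (One may take c = 1/(9C).) -/
/-!
Parametrize `X` by a map `p : ℝ → X` inducing `ℝ / ℤ ≃ X`. The bounded-turning continuum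
`S a b` joining nearby points `a, b` misses some `p u`, and lifting to the window `[u, u + 1)`
orders `a` and `b`; since lifts of a connected set that avoids `p u` fill an interval, this order
does not depend on the base point chosen off `S a b`. The mean `μ a b` is the first of the two
points. If `d(a, b)` is large compared with `δ = d(a, a') + d(b, b')`, one base point avoids the
four continua joining `a, b`, `a', b'`, `a, a'` and `b, b'`, and a reversed order would make the
last two overlap, forcing `d(a, b) ≤ (K + 1) δ` when `diam (S x y) ≤ K d(x, y)`; otherwise any
choice of endpoints is within `d(a, b) + δ`.
-/

open Set Metric Function Real

structure IsCircleCover {X : Type*} [TopologicalSpace X] (p : ℝ → X) : Prop where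
  continuous : Continuous p
  eq_iff : ∀ s t : ℝ, p s = p t ↔ ∃ n : ℤ, s = t + n
  surjective : Surjective p

noncomputable def windowLift {X : Type*} (p : ℝ → X) (u : ℝ) (x : X) : ℝ :=
  toIcoMod one_pos u (invFun p x)

section
variable {X : Type*}

theorem windowLift_mem_Ico (p : ℝ → X) (u : ℝ) (x : X) : windowLift p u x ∈ Ico u (u + 1) :=
  toIcoMod_mem_Ico _ _ _

theorem windowLift_add_int (p : ℝ → X) (u : ℝ) (n : ℤ) (x : X) :
    windowLift p (u + n) x = windowLift p u x + n := by
  simpa only [windowLift, zsmul_one] using toIcoMod_add_zsmul' one_pos u (invFun p x) n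

end

noncomputable def circleHomeomorphSphere : Circle ≃ₜ sphere (0 : EuclideanSpace ℝ (Fin 2)) 1 :=
  Complex.orthonormalBasisOneI.repr.toHomeomorph.subtype fun z => by simp [Submonoid.unitSphere]

theorem isCircleCover_circleExp : IsCircleCover fun t : ℝ => Circle.exp (2 * π * t) where
  continuous := Circle.exp.continuous.comp (continuous_const_mul _)
  eq_iff s t := by
    rw [Circle.exp_eq_exp]
    refine exists_congr fun n => ⟨fun h => ?_, fun h => by rw [h]; ring⟩
    have : 2 * π * s = 2 * π * (t + n) := by linarith
    exact mul_left_cancel₀ (by positivity) this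
  surjective z := by
    obtain ⟨θ, rfl⟩ := Circle.exp_surjective z
    exact ⟨θ / (2 * π), by simp only [mul_div_cancel₀ _ (by positivity : 2 * π ≠ 0)]⟩

namespace IsCircleCover

variable {X Y : Type*} [TopologicalSpace X] [TopologicalSpace Y] {p : ℝ → X}

theorem comp_homeomorph (hp : IsCircleCover p) (e : X ≃ₜ Y) : IsCircleCover (e ∘ p) where
  continuous := e.continuous.comp hp.continuous
  eq_iff s t := e.injective.eq_iff.trans (hp.eq_iff s t)
  surjective := e.surjective.comp hp.surjective

theorem map_add_int (hp : IsCircleCover p) (t : ℝ) (n : ℤ) : p (t + n) = p t :=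
  (hp.eq_iff _ _).2 ⟨n, rfl⟩

theorem injOn_Ico (hp : IsCircleCover p) (u : ℝ) : InjOn p (Ico u (u + 1)) := by
  intro s hs t ht hst
  obtain ⟨n, rfl⟩ := (hp.eq_iff s t).1 hst
  have : |(n : ℝ)| < 1 := abs_lt.2 ⟨by linarith [hs.1, ht.2], by linarith [hs.2, ht.1]⟩
  obtain rfl : n = 0 := Int.abs_lt_one_iff.1 (by exact_mod_cast this)
  simp

theorem map_windowLift (hp : IsCircleCover p) (u : ℝ) (x : X) : p (windowLift p u x) = x := by
  have h := toIcoMod_add_toIcoDiv_zsmul one_pos u (invFun p x)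
  rw [zsmul_one] at h
  rw [windowLift, ← hp.map_add_int _ (toIcoDiv one_pos u (invFun p x)), h,
    invFun_eq (hp.surjective x)]

theorem windowLift_eq_of_mem (hp : IsCircleCover p) {u t : ℝ} {x : X} (ht : t ∈ Ico u (u + 1))
    (hx : p t = x) : windowLift p u x = t :=
  hp.injOn_Ico u (windowLift_mem_Ico p u x) ht (by rw [hp.map_windowLift, hx])

theorem image_Icc_eq_univ (hp : IsCircleCover p) (u : ℝ) : p '' Icc u (u + 1) = univ :=
  eq_univ_of_forall fun x =>
    ⟨_, Ico_subset_Icc_self (windowLift_mem_Ico p u x), hp.map_windowLift u x⟩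

theorem image_Icc_inter_image_Icc_subset (hp : IsCircleCover p) (u t : ℝ) :
    p '' Icc u t ∩ p '' Icc t (u + 1) ⊆ {p u, p t} := by
  rintro _ ⟨⟨s, hs, rfl⟩, ⟨s', hs', hss'⟩⟩
  rcases hs'.2.eq_or_lt with rfl | hs'u
  · exact Or.inl (hss'.symm.trans (by simpa using hp.map_add_int u 1))
  · have : s = s' := hp.injOn_Ico u ⟨hs.1, by linarith [hs.2, hs'.1]⟩ ⟨by linarith [hs.1, hs.2, hs'.1], hs'u⟩ hss'.symm
    exact Or.inr (by rw [le_antisymm hs.2 (this ▸ hs'.1)]; rfl)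


variable [T2Space X] {K K₁ K₂ : Set X} {u v t₁ t₃ : ℝ}

theorem image_Icc_subset (hp : IsCircleCover p) (hK : IsPreconnected K) (hu : p u ∉ K)
    (h₁ : u ≤ t₁) (h₃ : t₃ ≤ u + 1) (ht₁ : p t₁ ∈ K) (ht₃ : p t₃ ∈ K) : p '' Icc t₁ t₃ ⊆ K := by
  rintro _ ⟨t, ⟨ht₁t, htt₃⟩, rfl⟩
  by_contra ht
  have hcover : K ⊆ p '' Icc u t ∪ p '' Icc t (u + 1) := by
    rw [← image_union, Icc_union_Icc_eq_Icc (h₁.trans ht₁t) (htt₃.trans h₃), hp.image_Icc_eq_univ]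
    exact subset_univ K
  have hK_inter : K ∩ (p '' Icc u t ∩ p '' Icc t (u + 1)) = ∅ := by
    refine eq_empty_of_forall_notMem fun x ⟨hxK, hx⟩ => ?_
    rcases hp.image_Icc_inter_image_Icc_subset u t hx with rfl | rfl <;> contradiction
  have hclosed (a b : ℝ) : IsClosed (p '' Icc a b) :=
    (isCompact_Icc.image hp.continuous).isClosed
  rcases isPreconnected_iff_subset_of_disjoint_closed.1 hK _ _ (hclosed _ _) (hclosed _ _)
    hcover hK_inter with hsub | hsub
  · exact hK_inter.subset ⟨ht₃, hsub ht₃, mem_image_of_mem p ⟨htt₃, h₃⟩⟩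
  · exact hK_inter.subset ⟨ht₁, mem_image_of_mem p ⟨h₁, ht₁t⟩, hsub ht₁⟩

theorem image_Icc_windowLift_subset (hp : IsCircleCover p) (hK : IsPreconnected K)
    (hu : p u ∉ K) {a b : X} (ha : a ∈ K) (hb : b ∈ K) :
    p '' Icc (windowLift p u a) (windowLift p u b) ⊆ K :=
  hp.image_Icc_subset hK hu (windowLift_mem_Ico p u a).1 (windowLift_mem_Ico p u b).2.le
    (by rwa [hp.map_windowLift]) (by rwa [hp.map_windowLift])

theorem exists_windowLift_eq_add (hp : IsCircleCover p) (hK : IsPreconnected K)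
    (hu : p u ∉ K) (hv : p v ∉ K) : ∃ c : ℝ, ∀ x ∈ K, windowLift p v x = windowLift p u x + c := by
  set v₀ := toIcoMod one_pos u v
  set n := toIcoDiv one_pos u v
  have hv₀ : v = v₀ + n := by simpa using (toIcoMod_add_toIcoDiv_zsmul one_pos u v).symm
  have hv₀_mem : v₀ ∈ Ico u (u + 1) := toIcoMod_mem_Ico _ _ _
  have hv₀K : p v₀ ∉ K := by rwa [← hp.map_add_int v₀ n, ← hv₀]
  simp only [hv₀, windowLift_add_int]
  by_cases hright : ∀ x ∈ K, v₀ ≤ windowLift p u x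
  · refine ⟨n, fun x hx => ?_⟩
    rw [hp.windowLift_eq_of_mem ⟨hright x hx, ?_⟩ (hp.map_windowLift u x)]
    linarith [(windowLift_mem_Ico p u x).2, hv₀_mem.1]
  · obtain ⟨y, hy, hyv₀⟩ := not_forall₂.1 hright
    rw [not_le] at hyv₀
    have hleft (x : X) (hx : x ∈ K) : windowLift p u x < v₀ := by
      by_contra! hxv₀
      exact hv₀K (hp.image_Icc_windowLift_subset hK hu hy hx
        (mem_image_of_mem p ⟨hyv₀.le, hxv₀⟩))
    refine ⟨n + 1, fun x hx => ?_⟩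
    have hmem : windowLift p u x + 1 ∈ Ico v₀ (v₀ + 1) :=
      ⟨by linarith [(windowLift_mem_Ico p u x).1, hv₀_mem.2], by linarith [hleft x hx]⟩
    rw [hp.windowLift_eq_of_mem hmem (by simpa using (hp.map_add_int _ 1).trans (hp.map_windowLift u x))]
    ring

theorem mem_or_mem_of_crossing (hp : IsCircleCover p) (hK₁ : IsPreconnected K₁)
    (hK₂ : IsPreconnected K₂) (hu₁ : p u ∉ K₁) (hu₂ : p u ∉ K₂) {a a' b b' : X}
    (ha : a ∈ K₁) (ha' : a' ∈ K₁) (hb : b ∈ K₂) (hb' : b' ∈ K₂)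
    (hab : windowLift p u a ≤ windowLift p u b) (hb'a' : windowLift p u b' ≤ windowLift p u a') :
    b ∈ K₁ ∨ a' ∈ K₂ := by
  rcases le_or_gt (windowLift p u b) (windowLift p u a') with hba' | ha'b
  · refine Or.inl (hp.image_Icc_windowLift_subset hK₁ hu₁ ha ha' ?_)
    exact ⟨_, ⟨hab, hba'⟩, hp.map_windowLift u b⟩
  · refine Or.inr (hp.image_Icc_windowLift_subset hK₂ hu₂ hb' hb ?_)
    exact ⟨_, ⟨hb'a', ha'b.le⟩, hp.map_windowLift u a'⟩

end IsCircleCover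

theorem dist_le_of_eq_or_eq {X : Type*} [PseudoMetricSpace X] {x y a b a' b' : X}
    (hx : x = a ∨ x = b) (hy : y = a' ∨ y = b') :
    dist x y ≤ dist a b + (dist a a' + dist b b') := by
  have := dist_nonneg (x := a) (y := b)
  have := dist_nonneg (x := a) (y := a')
  have := dist_nonneg (x := b) (y := b')
  rcases hx with rfl | rfl <;> rcases hy with rfl | rfl
  · linarith
  · linarith [dist_triangle x b y]
  · linarith [dist_triangle x a y, dist_comm a x]
  · linarith

theorem exists_symmetric_preconnected_family {X : Type*} [PseudoMetricSpace X] {C : ℝ}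
    (h : ∀ a b : X, ∃ E : Set X, a ∈ E ∧ b ∈ E ∧ IsPreconnected E ∧ diam E ≤ C * dist a b) :
    ∃ S : X → X → Set X, (∀ a b, S a b = S b a) ∧ (∀ a b, IsPreconnected (S a b)) ∧
      (∀ a b, a ∈ S a b ∧ b ∈ S a b) ∧ ∀ a b, diam (S a b) ≤ 2 * C * dist a b := by
  choose E haE hbE hE hdiam using h
  refine ⟨fun a b => E a b ∪ E b a, fun a b => union_comm _ _, fun a b => ?_,
    fun a b => ⟨Or.inl (haE a b), Or.inl (hbE a b)⟩, fun a b => ?_⟩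
  · exact (hE a b).union a (haE a b) (hbE b a) (hE b a)
  · have hba := hdiam b a
    rw [dist_comm] at hba
    calc diam (E a b ∪ E b a) ≤ diam (E a b) + diam (E b a) :=
          diam_union' ⟨a, haE a b, hbE b a⟩
      _ ≤ 2 * C * dist a b := by linarith [hdiam a b]

section CircleMean

variable {X : Type*} {p : ℝ → X} {S : X → X → Set X}

/-- The endpoint of `{a, b}` met first when running through the arc `S a b` in the direction
of `p`. The base point is only meaningful when `S a b ≠ univ`. -/
noncomputable def circleMean (p : ℝ → X) (S : X → X → Set X) (a b : X) : X :=
  let u := Classical.epsilon fun u => p u ∉ S a b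
  if windowLift p u a ≤ windowLift p u b then a else b

theorem circleMean_self (p : ℝ → X) (S : X → X → Set X) (a : X) : circleMean p S a a = a :=
  ite_self a

theorem circleMean_eq_or_eq (p : ℝ → X) (S : X → X → Set X) (a b : X) :
    circleMean p S a b = a ∨ circleMean p S a b = b := by
  dsimp only [circleMean]
  split_ifs <;> simp

variable [TopologicalSpace X]

theorem circleMean_comm (hp : IsCircleCover p) (hS : ∀ a b, S a b = S b a) (a b : X) :
    circleMean p S a b = circleMean p S b a := by
  rcases eq_or_ne a b with rfl | hab
  · rfl
  dsimp only [circleMean]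
  rw [hS b a]
  set u := Classical.epsilon fun u => p u ∉ S a b
  have hne : windowLift p u a ≠ windowLift p u b := fun h =>
    hab (by rw [← hp.map_windowLift u a, h, hp.map_windowLift])
  split_ifs with h₁ h₂ h₂
  · exact absurd (le_antisymm h₁ h₂) hne
  · rfl
  · rfl
  · exact absurd (le_total _ _) (by tauto)

theorem circleMean_eq_ite [T2Space X] (hp : IsCircleCover p) {a b : X}
    (hS : IsPreconnected (S a b)) (ha : a ∈ S a b) (hb : b ∈ S a b) {u : ℝ} (hu : p u ∉ S a b) :
    circleMean p S a b = if windowLift p u a ≤ windowLift p u b then a else b := by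
  have hbase := Classical.epsilon_spec (p := fun u => p u ∉ S a b) ⟨u, hu⟩
  obtain ⟨c, hc⟩ := hp.exists_windowLift_eq_add hS hbase hu
  simp only [circleMean, hc a ha, hc b hb, add_le_add_iff_right]

end CircleMean

section Lipschitz

variable {X : Type*} [MetricSpace X] {p : ℝ → X} {S : X → X → Set X} {K r : ℝ}

theorem diam_union_four_le (hS_mem : ∀ a b, a ∈ S a b ∧ b ∈ S a b)
    (hS_diam : ∀ a b, diam (S a b) ≤ K * dist a b) (a b a' b' : X) :
    diam (S a b ∪ S a a' ∪ S b b' ∪ S a' b') ≤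
      K * (dist a b + (dist a a' + dist b b') + dist a' b') := by
  have h₁ := diam_union' (s := S a b) (t := S a a') ⟨a, (hS_mem a b).1, (hS_mem a a').1⟩
  have h₂ := diam_union' (s := S a b ∪ S a a') (t := S b b')
    ⟨b, Or.inl (hS_mem a b).2, (hS_mem b b').1⟩
  have h₃ := diam_union' (s := S a b ∪ S a a' ∪ S b b') (t := S a' b')
    ⟨a', Or.inl (Or.inr (hS_mem a a').2), (hS_mem a' b').1⟩
  linarith [hS_diam a b, hS_diam a a', hS_diam b b', hS_diam a' b']

variable [BoundedSpace X]

theorem dist_le_of_crossing (hp : IsCircleCover p) (hS_conn : ∀ a b, IsPreconnected (S a b))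
    (hS_mem : ∀ a b, a ∈ S a b ∧ b ∈ S a b) (hS_diam : ∀ a b, diam (S a b) ≤ K * dist a b)
    (hK : 0 ≤ K) {a b a' b' : X} {u : ℝ} (hu₁ : p u ∉ S a a') (hu₂ : p u ∉ S b b')
    (hab : windowLift p u a ≤ windowLift p u b) (hb'a' : windowLift p u b' ≤ windowLift p u a') :
    dist a b ≤ (K + 1) * (dist a a' + dist b b') := by
  have hdist {x y z w : X} (hz : z ∈ S x y) (hw : w ∈ S x y) : dist z w ≤ K * dist x y :=
    (dist_le_diam_of_mem (Bornology.IsBounded.all _) hz hw).trans (hS_diam x y)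
  have := dist_nonneg (x := a) (y := a')
  have := dist_nonneg (x := b) (y := b')
  rcases hp.mem_or_mem_of_crossing (hS_conn a a') (hS_conn b b') hu₁ hu₂ (hS_mem a a').1
    (hS_mem a a').2 (hS_mem b b').1 (hS_mem b b').2 hab hb'a' with hb | ha'
  · nlinarith [hdist (hS_mem a a').1 hb]
  · nlinarith [hdist (hS_mem b b').1 ha', dist_triangle a a' b, dist_comm b a']

theorem dist_circleMean_le (hp : IsCircleCover p) (hS_conn : ∀ a b, IsPreconnected (S a b))
    (hS_mem : ∀ a b, a ∈ S a b ∧ b ∈ S a b) (hS_diam : ∀ a b, diam (S a b) ≤ K * dist a b)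
    (hK : 0 < K) (hr : 3 * K * r ≤ diam (univ : Set X)) {a b a' b' : X} (hab : dist a b ≤ r)
    (ha'b' : dist a' b' ≤ r) :
    dist (circleMean p S a b) (circleMean p S a' b') ≤ (K + 2) * (dist a a' + dist b b') := by
  set δ := dist a a' + dist b b'
  have hδ : 0 ≤ δ := by positivity
  have hcrude := dist_le_of_eq_or_eq (circleMean_eq_or_eq p S a b) (circleMean_eq_or_eq p S a' b')
  by_cases hsmall : dist a b ≤ (K + 1) * δ
  · linarith
  rw [not_le] at hsmall
  have hdiam : diam (S a b ∪ S a a' ∪ S b b' ∪ S a' b') < diam (univ : Set X) := by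
    have hsum : dist a b + δ + dist a' b' < 3 * r := by nlinarith
    calc _ ≤ K * (dist a b + δ + dist a' b') := diam_union_four_le hS_mem hS_diam a b a' b'
      _ < K * (3 * r) := mul_lt_mul_of_pos_left hsum hK
      _ ≤ _ := by linarith
  obtain ⟨w, hw⟩ := (ne_univ_iff_exists_notMem _).1 fun h => hdiam.ne (congrArg diam h)
  obtain ⟨u, rfl⟩ := hp.surjective w
  simp only [mem_union, not_or] at hw
  obtain ⟨⟨⟨hu, hua⟩, hub⟩, hu'⟩ := hw
  rw [circleMean_eq_ite hp (hS_conn a b) (hS_mem a b).1 (hS_mem a b).2 hu,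
    circleMean_eq_ite hp (hS_conn a' b') (hS_mem a' b').1 (hS_mem a' b').2 hu']
  split_ifs with h h' h'
  · nlinarith [dist_nonneg (x := b) (y := b')]
  · have := dist_le_of_crossing hp hS_conn hS_mem hS_diam hK.le hua hub h (not_le.1 h').le
    linarith
  · have := dist_le_of_crossing hp hS_conn hS_mem hS_diam hK.le hub hua (not_le.1 h).le h'
    linarith [dist_comm a b]
  · nlinarith [dist_nonneg (x := a) (y := a')]

end Lipschitz

/-- For every `C ≥ 1` there exist `L ≥ 0` and `c > 0` depending only
on `C` such that every metric circle `X` (metric space homeomorphic to `S¹ ⊆ ℝ²`) of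
`C`-bounded turning admits an `L`-Lipschitz local mean defined on `Δ_r(X²)` with
`r = c·diam X`: a map `μ` with `μ(a,b) = μ(b,a)` and `μ(a,a) = a` on its domain,
`L`-Lipschitz for the sum metric. -/
theorem metric_circle_bounded_turning_local_lipschitz_mean
    (C : ℝ) (hC : 1 ≤ C) :
    ∃ L : ℝ, 0 ≤ L ∧ ∃ c : ℝ, 0 < c ∧
      ∀ (X : Type) [MetricSpace X],
        Nonempty (X ≃ₜ Metric.sphere (0 : EuclideanSpace ℝ (Fin 2)) 1) →
        (∀ a b : X, ∃ E : Set X, a ∈ E ∧ b ∈ E ∧ IsCompact E ∧ IsConnected E ∧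
          Metric.diam E ≤ C * dist a b) →
        ∃ μ : X → X → X,
          (∀ a b : X, dist a b ≤ c * Metric.diam (Set.univ : Set X) → μ a b = μ b a) ∧
          (∀ a : X, μ a a = a) ∧
          (∀ a b a' b' : X,
            dist a b ≤ c * Metric.diam (Set.univ : Set X) →
            dist a' b' ≤ c * Metric.diam (Set.univ : Set X) →
            dist (μ a b) (μ a' b') ≤ L * (dist a a' + dist b b')) := by
  have hC₀ : 0 < C := by linarith
  refine ⟨2 * C + 2, by linarith, 1 / (9 * C), by positivity, fun X _ ⟨γ⟩ hturn => ?_⟩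
  have : CompactSpace X := γ.symm.compactSpace
  have hp := isCircleCover_circleExp.comp_homeomorph (circleHomeomorphSphere.trans γ.symm)
  obtain ⟨S, hS_symm, hS_conn, hS_mem, hS_diam⟩ := exists_symmetric_preconnected_family
    fun a b => let ⟨E, ha, hb, _, hE, hd⟩ := hturn a b; ⟨E, ha, hb, hE.isPreconnected, hd⟩
  have hr : 3 * (2 * C) * (1 / (9 * C) * diam (univ : Set X)) ≤ diam (univ : Set X) := by
    field_simp
    nlinarith [diam_nonneg (s := (univ : Set X))]
  exact ⟨circleMean _ S, fun a b _ => circleMean_comm hp hS_symm a b, circleMean_self _ S,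
    fun a b a' b' hab ha'b' =>
      dist_circleMean_le hp hS_conn hS_mem hS_diam (by positivity) hr hab ha'b'⟩
end

section
/- Let I ⊆ ℝ be a nonempty closed interval, possibly unbounded. Suppose that φ : I → ℝ and ψ : I → ℝ are L-Lipschitz functions with φ(x) ≤ ψ(x) for all x ∈ I, and let E = {(x,y) ∈ ℝ² : x ∈ I, φ(x) ≤ y ≤ ψ(x)}. Then there exists a Lipschitz retraction Φ of ℝ² (with the Euclidean metric) onto E, i.e., a map Φ : ℝ² → ℝ² with Φ(ℝ²) ⊆ E and Φ(p) = p for all p ∈ E; moreover Φ can be taken with Lipschitz constant at most √(L² + 1). -/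
/-!
Project the abscissa onto `I` (a 1-Lipschitz retraction of `ℝ` onto `I`), then clamp the ordinate
between `φ` and `ψ` at the projected abscissa. If the abscissae of two points and of their images
differ by `x` and `u`, and the ordinates by `y` and `v`, then `|u| ≤ |x|` and
`|v| ≤ max |y| (L |u|)`, whence `u² + v² ≤ (L² + 1)(x² + y²)`.
-/

namespace Set

variable {α : Type*} [ConditionallyCompleteLinearOrder α]

open Classical in
/-- `sInf I` and `sSup I` are junk values when `I` is unbounded, so an end of `I` is used only when
it exists. -/
noncomputable def projInterval (I : Set α) (x : α) : α :=
  (if BddBelow I then max (sInf I) else id) ((if BddAbove I then (min · (sSup I)) else id) x)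

theorem projInterval_eq_self {I : Set α} {x : α} (hx : x ∈ I) : projInterval I x = x := by
  by_cases hb : BddBelow I <;> by_cases ha : BddAbove I <;>
    simp only [projInterval, hb, ha, if_true, if_false, id]
  · rw [min_eq_left (le_csSup ha hx), max_eq_right (csInf_le hb hx)]
  · rw [max_eq_right (csInf_le hb hx)]
  · rw [min_eq_left (le_csSup ha hx)]

theorem projInterval_mem [TopologicalSpace α] [OrderTopology α] {I : Set α} (hne : I.Nonempty)
    (hI : I.OrdConnected) (hc : IsClosed I) (x : α) : projInterval I x ∈ I := by
  by_cases hb : BddBelow I <;> by_cases ha : BddAbove I <;>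
    simp only [projInterval, hb, ha, if_true, if_false, id]
  · exact hI.out (hc.csInf_mem hne hb) (hc.csSup_mem hne ha)
      ⟨le_max_left _ _, max_le (csInf_le_csSup hne hb ha) (min_le_right _ _)⟩
  · obtain ⟨b, hbI, hxb⟩ := not_bddAbove_iff.mp ha (max (sInf I) x)
    exact hI.out (hc.csInf_mem hne hb) hbI ⟨le_max_left _ _, hxb.le⟩
  · obtain ⟨a, haI, hax⟩ := not_bddBelow_iff.mp hb (min x (sSup I))
    exact hI.out haI (hc.csSup_mem hne ha) ⟨hax.le, min_le_right _ _⟩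
  · obtain ⟨a, haI, hax⟩ := not_bddBelow_iff.mp hb x
    obtain ⟨b, hbI, hxb⟩ := not_bddAbove_iff.mp ha x
    exact hI.out haI hbI ⟨hax.le, hxb.le⟩

theorem lipschitzWith_projInterval (I : Set ℝ) : LipschitzWith 1 (projInterval I) := by
  unfold projInterval
  split_ifs
  · exact (LipschitzWith.id.min_const _).const_max _
  · exact LipschitzWith.id.const_max _
  · exact LipschitzWith.id.min_const _
  · exact LipschitzWith.id

end Set

theorem abs_max_min_sub_max_min_le {α : Type*} [AddCommGroup α] [LinearOrder α]
    [IsOrderedAddMonoid α] (a y b a' y' b' : α) :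
    |max a (min y b) - max a' (min y' b')| ≤ max |a - a'| (max |y - y'| |b - b'|) :=
  (abs_max_sub_max_le_max _ _ _ _).trans (max_le_max le_rfl (abs_min_sub_min_le_max _ _ _ _))

theorem sq_add_sq_le_of_abs_le {R : Type*} [CommRing R] [LinearOrder R] [IsStrictOrderedRing R]
    {L u v x y : R} (hu : |u| ≤ |x|) (hv : |v| ≤ max |y| (L * |u|)) :
    u ^ 2 + v ^ 2 ≤ (L ^ 2 + 1) * (x ^ 2 + y ^ 2) := by
  have hu2 : u ^ 2 ≤ x ^ 2 := sq_le_sq.mpr hu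
  have hv2 : v ^ 2 ≤ y ^ 2 + L ^ 2 * u ^ 2 := by
    rcases le_max_iff.mp hv with hvy | hvu
    · nlinarith [sq_le_sq.mpr hvy, sq_nonneg (L * u)]
    · have : |v| ≤ |L * u| := by
        rw [abs_mul]; exact hvu.trans (mul_le_mul_of_nonneg_right (le_abs_self L) (abs_nonneg u))
      nlinarith [sq_le_sq.mpr this, sq_nonneg y]
  nlinarith [sq_nonneg (L * y), mul_le_mul_of_nonneg_left hu2 (sq_nonneg L)]

theorem EuclideanSpace.dist_fin_two_eq (p q : EuclideanSpace ℝ (Fin 2)) :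
    dist p q = √((p 0 - q 0) ^ 2 + (p 1 - q 1) ^ 2) := by
  rw [EuclideanSpace.dist_eq, Fin.sum_univ_two, Real.dist_eq, Real.dist_eq, sq_abs, sq_abs]

def regionBetweenGraphs (I : Set ℝ) (φ ψ : ℝ → ℝ) : Set (EuclideanSpace ℝ (Fin 2)) :=
  {q | q 0 ∈ I ∧ φ (q 0) ≤ q 1 ∧ q 1 ≤ ψ (q 0)}

noncomputable def graphRegionRetraction (π φ ψ : ℝ → ℝ) (p : EuclideanSpace ℝ (Fin 2)) :
    EuclideanSpace ℝ (Fin 2) :=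
  !₂[π (p 0), max (φ (π (p 0))) (min (p 1) (ψ (π (p 0))))]

section graphRegionRetraction

variable {I : Set ℝ} {π φ ψ : ℝ → ℝ}

theorem graphRegionRetraction_mem (hπI : ∀ x, π x ∈ I) (hφψ : ∀ x ∈ I, φ x ≤ ψ x)
    (p : EuclideanSpace ℝ (Fin 2)) :
    graphRegionRetraction π φ ψ p ∈ regionBetweenGraphs I φ ψ :=
  ⟨hπI _, le_max_left _ _, max_le (hφψ _ (hπI _)) (min_le_right _ _)⟩

theorem graphRegionRetraction_eq_self (hπ : ∀ x ∈ I, π x = x) {p : EuclideanSpace ℝ (Fin 2)}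
    (hp : p ∈ regionBetweenGraphs I φ ψ) :
    graphRegionRetraction π φ ψ p = p := by
  obtain ⟨hp0, hφp, hpψ⟩ := hp
  ext i
  fin_cases i
  · exact hπ _ hp0
  · show max (φ (π (p 0))) (min (p 1) (ψ (π (p 0)))) = p 1
    rw [hπ _ hp0, min_eq_left hpψ, max_eq_right hφp]

theorem dist_graphRegionRetraction_le {L : ℝ} (hπ : LipschitzWith 1 π) (hπI : ∀ x, π x ∈ I)
    (hφ : ∀ x ∈ I, ∀ y ∈ I, |φ x - φ y| ≤ L * |x - y|)
    (hψ : ∀ x ∈ I, ∀ y ∈ I, |ψ x - ψ y| ≤ L * |x - y|) (p q : EuclideanSpace ℝ (Fin 2)) :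
    dist (graphRegionRetraction π φ ψ p) (graphRegionRetraction π φ ψ q) ≤
      √(L ^ 2 + 1) * dist p q := by
  rw [EuclideanSpace.dist_fin_two_eq, EuclideanSpace.dist_fin_two_eq]
  set u := π (p 0) - π (q 0)
  have hu : |u| ≤ |p 0 - q 0| := by
    simpa [Real.dist_eq] using hπ.dist_le_mul (p 0) (q 0)
  have hv : |max (φ (π (p 0))) (min (p 1) (ψ (π (p 0)))) -
      max (φ (π (q 0))) (min (q 1) (ψ (π (q 0))))| ≤ max |p 1 - q 1| (L * |u|) :=
    (abs_max_min_sub_max_min_le _ _ _ _ _ _).trans <| max_le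
      ((hφ _ (hπI _) _ (hπI _)).trans (le_max_right _ _))
      (max_le_max le_rfl (hψ _ (hπI _) _ (hπI _)))
  calc _ ≤ √((L ^ 2 + 1) * ((p 0 - q 0) ^ 2 + (p 1 - q 1) ^ 2)) :=
        Real.sqrt_le_sqrt (sq_add_sq_le_of_abs_le hu hv)
    _ = _ := Real.sqrt_mul (by positivity) _

end graphRegionRetraction

theorem lipschitz_retraction_onto_region_between_graphs_general
    (I : Set ℝ) (hI_ne : I.Nonempty) (hI_interval : I.OrdConnected)
    (hI_closed : IsClosed I)
    (L : ℝ) (φ ψ : ℝ → ℝ)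
    (hφ : ∀ x ∈ I, ∀ y ∈ I, |φ x - φ y| ≤ L * |x - y|)
    (hψ : ∀ x ∈ I, ∀ y ∈ I, |ψ x - ψ y| ≤ L * |x - y|)
    (hφψ : ∀ x ∈ I, φ x ≤ ψ x)
    (E : Set (EuclideanSpace ℝ (Fin 2)))
    (hE : E = {q : EuclideanSpace ℝ (Fin 2) | q 0 ∈ I ∧ φ (q 0) ≤ q 1 ∧ q 1 ≤ ψ (q 0)}) :
    ∃ Φ : EuclideanSpace ℝ (Fin 2) → EuclideanSpace ℝ (Fin 2),
      (∀ p, Φ p ∈ E) ∧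
      (∀ p ∈ E, Φ p = p) ∧
      (∀ p q, dist (Φ p) (Φ q) ≤ Real.sqrt (L ^ 2 + 1) * dist p q) := by
  have hπI : ∀ x, I.projInterval x ∈ I := Set.projInterval_mem hI_ne hI_interval hI_closed
  subst hE
  exact ⟨graphRegionRetraction I.projInterval φ ψ,
    graphRegionRetraction_mem hπI hφψ,
    fun _ => graphRegionRetraction_eq_self fun _ => Set.projInterval_eq_self,
    dist_graphRegionRetraction_le (Set.lipschitzWith_projInterval I) hπI hφ hψ⟩

/-- Let `I ⊆ ℝ` be a nonempty closed interval (possibly unbounded),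
and let `φ, ψ : I → ℝ` be `L`-Lipschitz with `φ ≤ ψ` on `I`. Then there is a Lipschitz
retraction `Φ` of `ℝ²` (with the Euclidean metric) onto
`E = {(x,y) : x ∈ I, φ(x) ≤ y ≤ ψ(x)}`, with `Lip Φ ≤ √(L² + 1)`. -/
theorem lipschitz_retraction_onto_region_between_graphs
    (I : Set ℝ) (hI_ne : I.Nonempty) (hI_interval : I.OrdConnected)
    (hI_closed : IsClosed I)
    (L : ℝ) (hL : 0 ≤ L) (φ ψ : ℝ → ℝ)
    (hφ : ∀ x ∈ I, ∀ y ∈ I, |φ x - φ y| ≤ L * |x - y|)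
    (hψ : ∀ x ∈ I, ∀ y ∈ I, |ψ x - ψ y| ≤ L * |x - y|)
    (hφψ : ∀ x ∈ I, φ x ≤ ψ x)
    (E : Set (EuclideanSpace ℝ (Fin 2)))
    (hE : E = {q : EuclideanSpace ℝ (Fin 2) | q 0 ∈ I ∧ φ (q 0) ≤ q 1 ∧ q 1 ≤ ψ (q 0)}) :
    ∃ Φ : EuclideanSpace ℝ (Fin 2) → EuclideanSpace ℝ (Fin 2),
      (∀ p, Φ p ∈ E) ∧
      (∀ p ∈ E, Φ p = p) ∧
      (∀ p q, dist (Φ p) (Φ q) ≤ Real.sqrt (L ^ 2 + 1) * dist p q) :=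
  lipschitz_retraction_onto_region_between_graphs_general I hI_ne hI_interval hI_closed L φ ψ hφ hψ
    hφψ E hE
end
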